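/- arXiv:2002.02236 — 8 statements merged into one kernel-verified Lean document; each statement's English description precedes it below -/
import Mathlib

section
/- Let p ≡ 1 (mod 16) be a prime and let 𝒫 = {g ∈ ℤ : 0 < g < p, g is a primitive root modulo p}. Then #{g ∈ 𝒫 : sgn(τ_p(g)) = 1} = #{g ∈ 𝒫 : sgn(τ_p(g)) = −1}. -/
open Finset
open scoped Classical

/-- `sgn(τ_p(g)) = ∏_{1≤i<j≤(p-1)/4} ({a_j²}_p − {a_i²}_p)/({g^{4j}}_p − {g^{4i}}_p)`,
where `{x}_p` is the least nonnegative residue of `x` modulo `p`. -/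
noncomputable def tauSign (p g : ℕ) (a : ℕ → ℕ) : ℚ :=
  ∏ i ∈ Finset.Icc 1 ((p - 1) / 4), ∏ j ∈ Finset.Icc (i + 1) ((p - 1) / 4),
    (((a j ^ 2 % p : ℕ) : ℚ) - ((a i ^ 2 % p : ℕ) : ℚ)) /
      (((g ^ (4 * j) % p : ℕ) : ℚ) - ((g ^ (4 * i) % p : ℕ) : ℚ))

/-- The set of pairs `(i,j)` with `1 ≤ i < j ≤ m`. -/
private def PS (m : ℕ) : Finset (ℕ × ℕ) :=
  (Finset.Icc 1 m ×ˢ Finset.Icc 1 m).filter (fun y => y.1 < y.2)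

private lemma mem_PS {m : ℕ} {y : ℕ × ℕ} :
    y ∈ PS m ↔ 1 ≤ y.1 ∧ y.1 < y.2 ∧ y.2 ≤ m := by
  simp only [PS, Finset.mem_filter, Finset.mem_product, Finset.mem_Icc]
  omega

private lemma double_prod (m : ℕ) (f : ℕ → ℕ → ℚ) :
    (∏ i ∈ Finset.Icc 1 m, ∏ j ∈ Finset.Icc (i + 1) m, f i j) = ∏ y ∈ PS m, f y.1 y.2 := by
  rw [PS, Finset.prod_filter, Finset.prod_product]
  refine Finset.prod_congr rfl fun i hi => ?_
  rw [← Finset.prod_filter]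
  apply Finset.prod_congr _ (fun _ _ => rfl)
  ext j
  simp only [Finset.mem_filter, Finset.mem_Icc]
  omega

private lemma card_PS (n : ℕ) : (PS n).card * 2 = n * (n - 1) := by
  induction n with
  | zero => simp [PS]
  | succ n ih =>
    have hdecomp : PS (n + 1) = PS n ∪ (Finset.Icc 1 n).image (fun i => (i, n + 1)) := by
      ext ⟨a, b⟩
      simp only [mem_PS, Finset.mem_union, Finset.mem_image, Finset.mem_Icc, Prod.mk.injEq]
      constructor
      · rintro ⟨h1, h2, h3⟩
        by_cases hb : b = n + 1
        · exact Or.inr ⟨a, ⟨h1, by omega⟩, rfl, hb.symm⟩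
        · exact Or.inl ⟨h1, h2, by omega⟩
      · rintro (⟨h1, h2, h3⟩ | ⟨i, ⟨hi1, hi2⟩, rfl, rfl⟩) <;> omega
    have hdisj : Disjoint (PS n) ((Finset.Icc 1 n).image (fun i => (i, n + 1))) := by
      rw [Finset.disjoint_left]
      rintro ⟨a, b⟩ ha hb
      rw [mem_PS] at ha
      simp only [Finset.mem_image, Finset.mem_Icc, Prod.mk.injEq] at hb
      obtain ⟨i, hi, hia, hib⟩ := hb
      omega
    have hcard : ((Finset.Icc 1 n).image (fun i => (i, n + 1))).card = n := by
      rw [Finset.card_image_of_injective _ (fun a b h => (Prod.ext_iff.mp h).1)]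
      simp
    rw [hdecomp, Finset.card_union_of_disjoint hdisj, hcard, add_mul, ih]
    have h1 : n + 1 - 1 = n := rfl
    rw [h1]
    cases n with
    | zero => rfl
    | succ k =>
      have h2 : k + 1 - 1 = k := rfl
      rw [h2]
      ring

private def flipPair (m : ℕ) (y : ℕ × ℕ) : ℕ × ℕ :=
  if y.2 = m then (m - y.1, m) else (m - y.2, m - y.1)

private lemma flipPair_def (m a b : ℕ) :
    flipPair m (a, b) = if b = m then (m - a, m) else (m - b, m - a) := rfl

private lemma prod_flip (m : ℕ) (hmmod : m % 4 = 0) (hm4 : 4 ≤ m) (W : ℕ → ℚ)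
    (hW : W m = W 0) :
    (∏ y ∈ PS m, (W (m - y.2) - W (m - y.1))) = - ∏ y ∈ PS m, (W y.2 - W y.1) := by
  have hmem : ∀ y ∈ PS m, flipPair m y ∈ PS m := by
    rintro ⟨a, b⟩ hy
    rw [mem_PS] at hy
    rw [flipPair_def]
    by_cases h : b = m
    · rw [if_pos h, mem_PS]
      dsimp only
      omega
    · rw [if_neg h, mem_PS]
      dsimp only
      omega
  have hinv : ∀ y ∈ PS m, flipPair m (flipPair m y) = y := by
    rintro ⟨a, b⟩ hy
    rw [mem_PS] at hy
    dsimp only at hy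
    by_cases h : b = m
    · subst h
      have h1 : flipPair b (a, b) = (b - a, b) := by rw [flipPair_def, if_pos rfl]
      rw [h1, flipPair_def, if_pos rfl]
      have : b - (b - a) = a := by omega
      rw [this]
    · have h1 : flipPair m (a, b) = (m - b, m - a) := by rw [flipPair_def, if_neg h]
      rw [h1, flipPair_def, if_neg (by omega : ¬ m - a = m)]
      have e1 : m - (m - a) = a := by omega
      have e2 : m - (m - b) = b := by omega
      rw [e1, e2]
  have hodd : Odd ((PS m).filter (fun y => ¬ y.2 = m)).card := by
    have hset : (PS m).filter (fun y => ¬ y.2 = m) = PS (m - 1) := by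
      ext y
      simp only [Finset.mem_filter, mem_PS]
      omega
    rw [hset]
    obtain ⟨t, ht⟩ : ∃ t, m = 4 * t := ⟨m / 4, by omega⟩
    have ht1 : 1 ≤ t := by omega
    have hc := card_PS (m - 1)
    have h2 : (m - 1) * (m - 1 - 1) = ((4 * t - 1) * (2 * t - 1)) * 2 := by
      subst ht
      have e1 : 4 * t - 1 - 1 = 2 * (2 * t - 1) := by omega
      rw [e1]
      ring
    have hcval : (PS (m - 1)).card = (4 * t - 1) * (2 * t - 1) :=
      Nat.eq_of_mul_eq_mul_right (by norm_num) (hc.trans h2)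
    rw [Nat.odd_iff, hcval, Nat.mul_mod]
    have o1 : (4 * t - 1) % 2 = 1 := by omega
    have o2 : (2 * t - 1) % 2 = 1 := by omega
    rw [o1, o2]
  calc ∏ y ∈ PS m, (W (m - y.2) - W (m - y.1))
      = ∏ y ∈ PS m, ((if y.2 = m then (1 : ℚ) else -1) *
          (W (flipPair m y).2 - W (flipPair m y).1)) := by
        refine Finset.prod_congr rfl ?_
        rintro ⟨a, b⟩ hy
        rw [mem_PS] at hy
        dsimp only at hy ⊢
        by_cases h : b = m
        · subst h
          rw [if_pos rfl, flipPair_def, if_pos rfl, one_mul, Nat.sub_self, hW]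
        · rw [if_neg h, flipPair_def, if_neg h]
          dsimp only
          ring
    _ = (∏ y ∈ PS m, (if y.2 = m then (1 : ℚ) else -1)) *
          ∏ y ∈ PS m, (W (flipPair m y).2 - W (flipPair m y).1) := Finset.prod_mul_distrib
    _ = (-1) * ∏ y ∈ PS m, (W y.2 - W y.1) := by
        congr 1
        · rw [Finset.prod_ite, Finset.prod_const, Finset.prod_const, one_pow, one_mul]
          exact Odd.neg_one_pow hodd
        · exact Finset.prod_nbij' (flipPair m) (flipPair m) hmem hmem hinv hinv
            (fun y hy => rfl)
    _ = - ∏ y ∈ PS m, (W y.2 - W y.1) := neg_one_mul _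

private lemma tauSign_eq (p m : ℕ) (hm : (p - 1) / 4 = m) (A : ℕ → ℕ) (G : ℕ) (w : ℕ → ℚ)
    (hw : ∀ k ∈ Finset.Icc 1 m, ((G ^ (4 * k) % p : ℕ) : ℚ) = w k) :
    tauSign p G A =
      (∏ y ∈ PS m, (((A y.2 ^ 2 % p : ℕ) : ℚ) - ((A y.1 ^ 2 % p : ℕ) : ℚ))) /
        ∏ y ∈ PS m, (w y.2 - w y.1) := by
  unfold tauSign
  rw [hm, double_prod, Finset.prod_div_distrib]
  congr 1
  refine Finset.prod_congr rfl fun y hy => ?_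
  rw [mem_PS] at hy
  rw [hw y.2 (Finset.mem_Icc.2 ⟨by omega, hy.2.2⟩),
    hw y.1 (Finset.mem_Icc.2 ⟨hy.1, by omega⟩)]

private lemma tauSign_inv (p : ℕ) [hp : Fact p.Prime] (hp16 : p % 16 = 1)
    (A : ℕ → ℕ) (g : ℕ) (hg : (g : ZMod p) ^ (p - 1) = 1) :
    tauSign p ((g : ZMod p)⁻¹).val A = - tauSign p g A := by
  haveI : NeZero p := ⟨hp.out.pos.ne'⟩
  have hp17 : 17 ≤ p := by
    have := hp.out.two_le
    omega
  set m := (p - 1) / 4 with hm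
  have h4m : 4 * m = p - 1 := by omega
  have hm4 : 4 ≤ m := by omega
  have hmmod : m % 4 = 0 := by omega
  set x : ZMod p := (g : ZMod p) with hx
  have hWper : x ^ (4 * m) = 1 := by rw [h4m, hg]
  have hx0 : x ≠ 0 := fun h => by
    rw [h, zero_pow (by omega : p - 1 ≠ 0)] at hg
    exact zero_ne_one hg
  have hgcast : (((x⁻¹).val : ℕ) : ZMod p) = x⁻¹ := by
    simp [ZMod.natCast_val, ZMod.cast_id]
  have hw1 : ∀ k, (g ^ (4 * k) % p : ℕ) = (x ^ (4 * k)).val := by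
    intro k
    have hc : ((g ^ (4 * k) : ℕ) : ZMod p) = x ^ (4 * k) := by push_cast; rfl
    rw [← hc, ZMod.val_natCast]
  have hw2 : ∀ k, ((x⁻¹).val ^ (4 * k) % p : ℕ) = ((x⁻¹) ^ (4 * k)).val := by
    intro k
    have hc : (((x⁻¹).val ^ (4 * k) : ℕ) : ZMod p) = (x⁻¹) ^ (4 * k) := by
      push_cast [hgcast]
      ring
    rw [← hc, ZMod.val_natCast]
  have hinvpow : ∀ k, k ≤ m → (x⁻¹) ^ (4 * k) = x ^ (4 * (m - k)) := by
    intro k hk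
    have h1 : x ^ (4 * (m - k)) * x ^ (4 * k) = 1 := by
      rw [← pow_add]
      have : 4 * (m - k) + 4 * k = 4 * m := by omega
      rw [this, hWper]
    rw [inv_pow]
    exact (eq_inv_of_mul_eq_one_left h1).symm
  set W : ℕ → ℚ := fun k => (((x ^ (4 * k)).val : ℕ) : ℚ) with hWdef
  have hWm : W m = W 0 := by
    simp only [hWdef, hWper, Nat.mul_zero, pow_zero]
  have e1 : tauSign p g A = _ :=
    tauSign_eq p m hm.symm A g W (fun k hk => by rw [hw1 k])
  have e2 : tauSign p ((x⁻¹).val) A = _ :=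
    tauSign_eq p m hm.symm A ((x⁻¹).val) (fun k => W (m - k))
      (fun k hk => by
        rw [Finset.mem_Icc] at hk
        rw [hw2 k, hinvpow k hk.2])
  rw [e1, e2, prod_flip m hmmod hm4 W hWm, div_neg]

theorem stmt_2 (p : ℕ) [Fact p.Prime] (hp16 : p % 16 = 1)
    (A : ℕ → ℕ) (hmono : StrictMonoOn A (Set.Icc 1 ((p - 1) / 4)))
    (hA : ∀ x : ℕ, (∃ i ∈ Finset.Icc 1 ((p - 1) / 4), A i = x) ↔
      0 < x ∧ 2 * x < p ∧ ∃ y : ZMod p, y ^ 2 = (x : ZMod p)) :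
    (((Finset.Ioo 0 p).filter
        (fun g : ℕ => IsPrimitiveRoot (g : ZMod p) (p - 1) ∧ tauSign p g A = 1)).card) =
    (((Finset.Ioo 0 p).filter
        (fun g : ℕ => IsPrimitiveRoot (g : ZMod p) (p - 1) ∧ tauSign p g A = -1)).card) := by
  have hprime : p.Prime := Fact.out
  haveI : NeZero p := ⟨hprime.pos.ne'⟩
  have hp2 : 2 ≤ p := hprime.two_le
  have key : ∀ (c : ℚ) (g : ℕ),
      g ∈ (Finset.Ioo 0 p).filter
        (fun g : ℕ => IsPrimitiveRoot (g : ZMod p) (p - 1) ∧ tauSign p g A = c) →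
      ((g : ZMod p)⁻¹).val ∈ (Finset.Ioo 0 p).filter
        (fun g : ℕ => IsPrimitiveRoot (g : ZMod p) (p - 1) ∧ tauSign p g A = -c) := by
    intro c g hg
    rw [Finset.mem_filter, Finset.mem_Ioo] at hg
    obtain ⟨⟨hg0, hgp⟩, hroot, htau⟩ := hg
    have hpow : (g : ZMod p) ^ (p - 1) = 1 := hroot.pow_eq_one
    have hx0 : (g : ZMod p) ≠ 0 := fun h => by
      rw [h, zero_pow (by omega : p - 1 ≠ 0)] at hpow
      exact zero_ne_one hpow
    have hcast : ((((g : ZMod p)⁻¹).val : ℕ) : ZMod p) = (g : ZMod p)⁻¹ := by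
      simp [ZMod.natCast_val, ZMod.cast_id]
    rw [Finset.mem_filter, Finset.mem_Ioo]
    refine ⟨⟨?_, ZMod.val_lt _⟩, ?_, ?_⟩
    · have hne : (g : ZMod p)⁻¹ ≠ 0 := inv_ne_zero hx0
      exact Nat.pos_of_ne_zero (fun h => hne ((ZMod.val_eq_zero _).mp h))
    · rw [hcast]
      exact hroot.inv
    · rw [tauSign_inv p hp16 A g hpow, htau]
  have hinv2 : ∀ g ∈ Finset.Ioo 0 p,
      (((((g : ZMod p)⁻¹).val : ℕ) : ZMod p)⁻¹).val = g := by
    intro g hg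
    rw [Finset.mem_Ioo] at hg
    have hcast : ((((g : ZMod p)⁻¹).val : ℕ) : ZMod p) = (g : ZMod p)⁻¹ := by
      simp [ZMod.natCast_val, ZMod.cast_id]
    rw [hcast, inv_inv, ZMod.val_natCast, Nat.mod_eq_of_lt hg.2]
  refine Finset.card_nbij' (fun g => ((g : ZMod p)⁻¹).val) (fun g => ((g : ZMod p)⁻¹).val)
    (fun g hg => key 1 g hg) (fun g hg => by simpa using key (-1) g hg) ?_ ?_
  · intro g hg
    exact hinv2 g (Finset.filter_subset _ _ hg)
  · intro g hg
    exact hinv2 g (Finset.filter_subset _ _ hg)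
end

section
/- Let p ≡ 1 (mod 16) be a prime, let g be a primitive root modulo p with 0 < g < p, and let g⁻¹ be the primitive root with 0 < g⁻¹ < p and g·g⁻¹ ≡ 1 (mod p). Then sgn(τ_p(g)) · sgn(τ_p(g⁻¹)) = −1. -/
open Finset
open scoped Classical

def pairSet (m : ℕ) : Finset (ℕ × ℕ) :=
  (Finset.Icc 1 m ×ˢ Finset.Icc 1 m).filter fun q => q.1 < q.2

lemma mem_pairSet {m : ℕ} {q : ℕ × ℕ} :
    q ∈ pairSet m ↔ 1 ≤ q.1 ∧ q.1 < q.2 ∧ q.2 ≤ m := by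
  simp only [pairSet, Finset.mem_filter, Finset.mem_product, Finset.mem_Icc]
  omega

lemma prod_pairSet {β : Type*} [CommMonoid β] (m : ℕ) (f : ℕ → ℕ → β) :
    ∏ i ∈ Finset.Icc 1 m, ∏ j ∈ Finset.Icc (i+1) m, f i j
      = ∏ q ∈ pairSet m, f q.1 q.2 := by
  rw [Finset.prod_sigma' (Finset.Icc 1 m) (fun i => Finset.Icc (i+1) m) (fun i j => f i j)]
  refine Finset.prod_nbij (fun x => (x.1, x.2)) ?_ ?_ ?_ ?_
  · rintro ⟨i, j⟩ h
    simp only [Finset.mem_sigma, Finset.mem_Icc] at h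
    exact mem_pairSet.mpr (by simp; omega)
  · rintro ⟨i, j⟩ _ ⟨i', j'⟩ _ e
    simp only [Prod.mk.injEq] at e
    obtain ⟨rfl, rfl⟩ := e
    rfl
  · rintro ⟨i, j⟩ h
    have h' := mem_pairSet.mp h
    exact ⟨⟨i, j⟩, by simp only [Finset.mem_coe, Finset.mem_sigma, Finset.mem_Icc]; omega, rfl⟩
  · intro a _; rfl

lemma pairSet_succ (n : ℕ) :
    pairSet (n+1) = pairSet n ∪ (Finset.Icc 1 n).image fun i => (i, n+1) := by
  ext ⟨a, b⟩
  simp only [mem_pairSet, Finset.mem_union, Finset.mem_image, Finset.mem_Icc, Prod.mk.injEq]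
  constructor
  · rintro ⟨h1, h2, h3⟩
    rcases eq_or_lt_of_le h3 with h | h
    · exact Or.inr ⟨a, by omega, rfl, by omega⟩
    · exact Or.inl ⟨h1, h2, by omega⟩
  · rintro (⟨h1, h2, h3⟩ | ⟨i, hi, rfl, rfl⟩)
    · exact ⟨h1, h2, by omega⟩
    · exact ⟨by omega, by omega, le_refl _⟩

lemma card_pairSet (n : ℕ) : (pairSet n).card * 2 = n * (n - 1) := by
  induction n with
  | zero =>
      have : pairSet 0 = ∅ := by
        ext q; simp [mem_pairSet]; omega
      simp [this]
  | succ n ih =>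
      have hdisj : Disjoint (pairSet n) ((Finset.Icc 1 n).image fun i => (i, n+1)) := by
        rw [Finset.disjoint_left]
        rintro ⟨a, b⟩ hq hq'
        simp only [Finset.mem_image, Finset.mem_Icc, Prod.mk.injEq] at hq'
        obtain ⟨i, hi, rfl, rfl⟩ := hq'
        have := mem_pairSet.mp hq
        omega
      have hinj : Function.Injective (fun i : ℕ => (i, n+1)) := by
        intro a b h; simpa using h
      rw [pairSet_succ, Finset.card_union_of_disjoint hdisj,
        Finset.card_image_of_injective _ hinj, Nat.card_Icc]
      have hexp : (n+1) * (n+1-1) = n * (n-1) + 2 * n := by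
        cases n with
        | zero => rfl
        | succ k => simp only [Nat.succ_sub_one]; ring
      omega

lemma nat_eq_of_zmod_eq {p a b : ℕ} (hp : 1 < p) (ha : a < p) (hb : b < p)
    (h : (a : ZMod p) = b) : a = b := by
  haveI : NeZero p := ⟨by omega⟩
  have := congrArg ZMod.val h
  rwa [ZMod.val_natCast_of_lt ha, ZMod.val_natCast_of_lt hb] at this

lemma prod_sq_pairs {m : ℕ} {u : ℕ → ℕ} (hu : Set.InjOn u (Finset.Icc 1 m : Finset ℕ)) :
    ∏ q ∈ pairSet m, ((u q.2 : ℚ) - u q.1)^2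
      = ∏ q ∈ (((Finset.Icc 1 m).image u ×ˢ (Finset.Icc 1 m).image u).filter
          fun q => q.1 < q.2), ((q.2 : ℚ) - q.1)^2 := by
  refine Finset.prod_nbij (fun q => (min (u q.1) (u q.2), max (u q.1) (u q.2))) ?_ ?_ ?_ ?_
  · intro q hq
    have h := mem_pairSet.mp hq
    have h1 : q.1 ∈ Finset.Icc 1 m := Finset.mem_Icc.mpr ⟨h.1, by omega⟩
    have h2 : q.2 ∈ Finset.Icc 1 m := Finset.mem_Icc.mpr ⟨by omega, h.2.2⟩
    have hne : u q.1 ≠ u q.2 := fun e => by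
      have := hu (Finset.mem_coe.mpr h1) (Finset.mem_coe.mpr h2) e; omega
    simp only [Finset.mem_filter, Finset.mem_product, Finset.mem_image]
    refine ⟨⟨?_, ?_⟩, ?_⟩
    · rcases le_total (u q.1) (u q.2) with hle | hle
      · exact ⟨q.1, h1, (min_eq_left hle).symm⟩
      · exact ⟨q.2, h2, (min_eq_right hle).symm⟩
    · rcases le_total (u q.1) (u q.2) with hle | hle
      · exact ⟨q.2, h2, (max_eq_right hle).symm⟩
      · exact ⟨q.1, h1, (max_eq_left hle).symm⟩
    · omega
  · intro q hq q' hq' e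
    have h := mem_pairSet.mp (Finset.mem_coe.mp hq)
    have h' := mem_pairSet.mp (Finset.mem_coe.mp hq')
    simp only [Prod.mk.injEq] at e
    have hcase : (u q.1 = u q'.1 ∧ u q.2 = u q'.2) ∨ (u q.1 = u q'.2 ∧ u q.2 = u q'.1) := by
      omega
    have m1 : q.1 ∈ (Finset.Icc 1 m : Set ℕ) := by simp [Finset.mem_Icc]; omega
    have m2 : q.2 ∈ (Finset.Icc 1 m : Set ℕ) := by simp [Finset.mem_Icc]; omega
    have m1' : q'.1 ∈ (Finset.Icc 1 m : Set ℕ) := by simp [Finset.mem_Icc]; omega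
    have m2' : q'.2 ∈ (Finset.Icc 1 m : Set ℕ) := by simp [Finset.mem_Icc]; omega
    rcases hcase with ⟨e1, e2⟩ | ⟨e1, e2⟩
    · have f1 := hu m1 m1' e1
      have f2 := hu m2 m2' e2
      exact Prod.ext f1 f2
    · have a1 := hu m1 m2' e1
      have a2 := hu m2 m1' e2
      exfalso; omega
  · rintro ⟨x, y⟩ hxy
    simp only [Finset.mem_coe, Finset.mem_filter, Finset.mem_product, Finset.mem_image] at hxy
    obtain ⟨⟨⟨i, hi, rfl⟩, ⟨j, hj, rfl⟩⟩, hlt⟩ := hxy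
    have hij : i ≠ j := fun e => by subst e; exact absurd rfl (ne_of_lt hlt)
    simp only [Finset.mem_Icc] at hi hj
    rcases lt_or_gt_of_ne hij with h | h
    · refine ⟨(i, j), ?_, ?_⟩
      · exact Finset.mem_coe.mpr (mem_pairSet.mpr ⟨by omega, by omega, by omega⟩)
      · simp only [Prod.mk.injEq]
        exact ⟨min_eq_left (le_of_lt hlt), max_eq_right (le_of_lt hlt)⟩
    · refine ⟨(j, i), ?_, ?_⟩
      · exact Finset.mem_coe.mpr (mem_pairSet.mpr ⟨by omega, by omega, by omega⟩)
      · simp only [Prod.mk.injEq]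
        exact ⟨min_eq_right (le_of_lt hlt), max_eq_left (le_of_lt hlt)⟩
  · intro q _
    dsimp only
    rcases le_total (u q.1) (u q.2) with hle | hle
    · rw [min_eq_left hle, max_eq_right hle]
    · rw [min_eq_right hle, max_eq_left hle]; ring

def revMap (m : ℕ) : ℕ × ℕ → ℕ × ℕ :=
  fun q => if q.2 = m then (m - q.1, m) else (m - q.2, m - q.1)

lemma revMap_mem {m : ℕ} {q : ℕ × ℕ} (hq : q ∈ pairSet m) : revMap m q ∈ pairSet m := by
  have h := mem_pairSet.mp hq
  by_cases h2 : q.2 = m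
  · rw [revMap, if_pos h2]
    exact mem_pairSet.mpr ⟨by omega, by omega, le_refl m⟩
  · rw [revMap, if_neg h2]
    exact mem_pairSet.mpr ⟨by omega, by omega, by omega⟩

lemma revMap_eq_of_eq {m x y : ℕ} (hy : y = m) : revMap m (x, y) = (m - x, m) := by
  simp [revMap, hy]

lemma revMap_eq_of_ne {m x y : ℕ} (hy : y ≠ m) : revMap m (x, y) = (m - y, m - x) := by
  simp [revMap, hy]

lemma revMap_invol {m : ℕ} {q : ℕ × ℕ} (hq : q ∈ pairSet m) :
    revMap m (revMap m q) = q := by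
  have h := mem_pairSet.mp hq
  rcases q with ⟨a, b⟩
  simp only at h
  by_cases h2 : b = m
  · subst h2
    rw [revMap_eq_of_eq rfl, revMap_eq_of_eq rfl]
    simp only [Prod.mk.injEq, and_true]
    omega
  · rw [revMap_eq_of_ne h2, revMap_eq_of_ne (show m - a ≠ m by omega)]
    simp only [Prod.mk.injEq]
    omega

theorem stmt_3 (p : ℕ) [Fact p.Prime] (hp16 : p % 16 = 1)
    (A : ℕ → ℕ) (hmono : StrictMonoOn A (Set.Icc 1 ((p - 1) / 4)))
    (hA : ∀ x : ℕ, (∃ i ∈ Finset.Icc 1 ((p - 1) / 4), A i = x) ↔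
      0 < x ∧ 2 * x < p ∧ ∃ y : ZMod p, y ^ 2 = (x : ZMod p))
    (g g' : ℕ) (hg0 : 0 < g) (hgp : g < p) (hg'0 : 0 < g') (hg'p : g' < p)
    (hg : IsPrimitiveRoot (g : ZMod p) (p - 1))
    (hg' : IsPrimitiveRoot (g' : ZMod p) (p - 1))
    (hinv : ((g : ZMod p)) * (g' : ZMod p) = 1) :
    tauSign p g A * tauSign p g' A = -1 := by
  have hp : p.Prime := Fact.out
  have hp2 : 2 ≤ p := hp.two_le
  have hp17 : 17 ≤ p := by omega
  set m := (p - 1) / 4 with hm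
  have hm4 : 4 * m = p - 1 := by omega
  have hmmod : m % 4 = 0 := by omega
  have hmge : 4 ≤ m := by omega
  haveI : NeZero p := ⟨by omega⟩
  haveI : NeZero (p - 1) := ⟨by omega⟩
  set ζ : ZMod p := (g : ZMod p) with hζdef
  have hζ0 : ζ ≠ 0 := hg.ne_zero (by omega)
  have hζpow : ζ ^ (4 * m) = 1 := by rw [hm4]; exact hg.pow_eq_one
  have hcastc : ∀ i : ℕ, ((g ^ (4 * i) % p : ℕ) : ZMod p) = ζ ^ (4 * i) := by
    intro i
    rw [ZMod.natCast_mod]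
    push_cast
    rfl
  have hlt : ∀ x : ℕ, x % p < p := fun x => Nat.mod_lt _ (by omega)
  -- injectivity of the g-power map
  have hcinj : Set.InjOn (fun i => g ^ (4 * i) % p) (Finset.Icc 1 m : Finset ℕ) := by
    intro i hi j hj hij
    simp only [Finset.coe_Icc, Set.mem_Icc] at hi hj
    simp only at hij
    have hz : ζ ^ (4 * i) = ζ ^ (4 * j) := by rw [← hcastc i, ← hcastc j, hij]
    have h1 : ζ ^ (4 * (i - 1)) * ζ ^ 4 = ζ ^ (4 * (j - 1)) * ζ ^ 4 := by
      rw [← pow_add, ← pow_add, show 4 * (i - 1) + 4 = 4 * i from by omega,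
        show 4 * (j - 1) + 4 = 4 * j from by omega, hz]
    have h2 := mul_right_cancel₀ (pow_ne_zero 4 hζ0) h1
    have := hg.pow_inj (i := 4 * (i - 1)) (j := 4 * (j - 1)) (by omega) (by omega) h2
    omega
  have hAprop : ∀ i, i ∈ Finset.Icc 1 m →
      0 < A i ∧ 2 * A i < p ∧ ∃ y : ZMod p, y ^ 2 = (A i : ZMod p) :=
    fun i hi => (hA (A i)).mp ⟨i, hi, rfl⟩
  -- injectivity of the squared-QR map
  have hbinj : Set.InjOn (fun i => A i ^ 2 % p) (Finset.Icc 1 m : Finset ℕ) := by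
    intro i hi j hj hij
    have hi' : i ∈ Finset.Icc 1 m := Finset.mem_coe.mp hi
    have hj' : j ∈ Finset.Icc 1 m := Finset.mem_coe.mp hj
    obtain ⟨hA1, hA2, -⟩ := hAprop i hi'
    obtain ⟨hB1, hB2, -⟩ := hAprop j hj'
    simp only at hij
    have hz : ((A i : ZMod p)) ^ 2 = (A j : ZMod p) ^ 2 := by
      have h0 : ((A i ^ 2 % p : ℕ) : ZMod p) = ((A j ^ 2 % p : ℕ) : ZMod p) := by rw [hij]
      rw [ZMod.natCast_mod, ZMod.natCast_mod] at h0
      push_cast at h0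
      exact h0
    have hfac : ((A i : ZMod p) + A j) * ((A i : ZMod p) - A j) = 0 := by
      rw [← sq_sub_sq, hz, sub_self]
    have hAA : A i = A j := by
      rcases mul_eq_zero.mp hfac with h | h
      · exfalso
        have hcast : ((A i + A j : ℕ) : ZMod p) = 0 := by push_cast; exact h
        rw [ZMod.natCast_eq_zero_iff] at hcast
        have := Nat.le_of_dvd (by omega) hcast
        omega
      · have hij2 : (A i : ZMod p) = (A j : ZMod p) := by rwa [sub_eq_zero] at h
        exact nat_eq_of_zmod_eq (by omega) (by omega) (by omega) hij2
    have hmi : i ∈ Set.Icc 1 m := by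
      rw [Finset.mem_Icc] at hi'; exact Set.mem_Icc.mpr hi'
    have hmj : j ∈ Set.Icc 1 m := by
      rw [Finset.mem_Icc] at hj'; exact Set.mem_Icc.mpr hj'
    exact hmono.injOn hmi hmj hAA
  -- the two images coincide
  have himg : (Finset.Icc 1 m).image (fun i => A i ^ 2 % p)
      = (Finset.Icc 1 m).image (fun i => g ^ (4 * i) % p) := by
    apply Finset.eq_of_subset_of_card_le
    · intro x hx
      obtain ⟨i, hi, rfl⟩ := Finset.mem_image.mp hx
      obtain ⟨hA1, hA2, y, hy⟩ := hAprop i hi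
      have hAne : (A i : ZMod p) ≠ 0 := by
        rw [Ne, ZMod.natCast_eq_zero_iff]
        intro hdvd
        have := Nat.le_of_dvd hA1 hdvd
        omega
      have hyne : y ≠ 0 := by
        intro h0
        rw [h0] at hy
        simp only [ne_eq, zero_pow, OfNat.ofNat_ne_zero, not_false_eq_true] at hy
        exact hAne hy.symm
      have hyp : y ^ (p - 1) = 1 := ZMod.pow_card_sub_one_eq_one hyne
      obtain ⟨t, -, rfl⟩ := hg.eq_pow_of_pow_eq_one hyp
      have hbz : ((A i ^ 2 % p : ℕ) : ZMod p) = ζ ^ (4 * t) := by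
        rw [ZMod.natCast_mod]
        push_cast
        rw [← hy]
        ring
      have hmod : ζ ^ (4 * (t % m)) = ζ ^ (4 * t) := by
        conv_rhs => rw [show t = m * (t / m) + t % m from (Nat.div_add_mod t m).symm]
        rw [show 4 * (m * (t / m) + t % m) = (4 * m) * (t / m) + 4 * (t % m) from by ring,
          pow_add, pow_mul ζ (4 * m) (t / m), hζpow, one_pow, one_mul]
      set i' := if t % m = 0 then m else t % m with hi'def
      have hieq : ζ ^ (4 * i') = ζ ^ (4 * t) := by
        by_cases h0 : t % m = 0
        · rw [hi'def, if_pos h0, ← hmod, h0, mul_zero, pow_zero, hζpow]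
        · rw [hi'def, if_neg h0]
          exact hmod
      refine Finset.mem_image.mpr ⟨i', Finset.mem_Icc.mpr ⟨?_, ?_⟩, ?_⟩
      · by_cases h0 : t % m = 0
        · rw [hi'def, if_pos h0]; omega
        · rw [hi'def, if_neg h0]; omega
      · have htm : t % m < m := Nat.mod_lt _ (by omega)
        by_cases h0 : t % m = 0
        · rw [hi'def, if_pos h0]
        · rw [hi'def, if_neg h0]; omega
      · refine nat_eq_of_zmod_eq (by omega) (hlt _) (hlt _) ?_
        rw [hcastc i', hieq, ← hbz]
    · rw [Finset.card_image_of_injOn hcinj, Finset.card_image_of_injOn hbinj]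
  -- relating the powers of g' to powers of g
  have hdc : ∀ i, 1 ≤ i → i ≤ m → g' ^ (4 * i) % p = g ^ (4 * (m - i)) % p := by
    intro i hi1 hi2
    refine nat_eq_of_zmod_eq (by omega) (hlt _) (hlt _) ?_
    rw [hcastc]
    have hcd : ((g' ^ (4 * i) % p : ℕ) : ZMod p) = (g' : ZMod p) ^ (4 * i) := by
      rw [ZMod.natCast_mod]; push_cast; ring
    rw [hcd]
    have h1 : (g' : ZMod p) ^ (4 * i) * ζ ^ (4 * i) = 1 := by
      rw [← mul_pow, mul_comm ((g' : ZMod p)) ζ, hinv, one_pow]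
    have h2 : ζ ^ (4 * (m - i)) * ζ ^ (4 * i) = 1 := by
      rw [← pow_add, show 4 * (m - i) + 4 * i = 4 * m from by omega, hζpow]
    exact mul_right_cancel₀ (pow_ne_zero _ hζ0) (h1.trans h2.symm)
  have hc0 : g ^ (4 * 0) % p = 1 := by
    rw [mul_zero, pow_zero, Nat.mod_eq_of_lt (by omega)]
  have hcm : g ^ (4 * m) % p = 1 := by
    refine nat_eq_of_zmod_eq (by omega) (hlt _) (by omega) ?_
    rw [hcastc, hζpow]
    norm_num
  -- unfolding tauSign
  have htau : ∀ h : ℕ, tauSign p h A =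
      (∏ q ∈ pairSet m, (((A q.2 ^ 2 % p : ℕ) : ℚ) - ((A q.1 ^ 2 % p : ℕ) : ℚ))) /
      (∏ q ∈ pairSet m, (((h ^ (4 * q.2) % p : ℕ) : ℚ) - ((h ^ (4 * q.1) % p : ℕ) : ℚ))) := by
    intro h
    unfold tauSign
    rw [← hm]
    rw [← prod_pairSet m (fun i j => (((A j ^ 2 % p : ℕ) : ℚ) - ((A i ^ 2 % p : ℕ) : ℚ))),
      ← prod_pairSet m (fun i j => (((h ^ (4 * j) % p : ℕ) : ℚ) - ((h ^ (4 * i) % p : ℕ) : ℚ))),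
      ← Finset.prod_div_distrib]
    exact Finset.prod_congr rfl fun i _ => Finset.prod_div_distrib _ _
  -- Y is nonzero
  have hYne : (∏ q ∈ pairSet m, (((g ^ (4 * q.2) % p : ℕ) : ℚ) - ((g ^ (4 * q.1) % p : ℕ) : ℚ))) ≠ 0 := by
    rw [Finset.prod_ne_zero_iff]
    intro q hq h0
    have h := mem_pairSet.mp hq
    have hq2 : g ^ (4 * q.2) % p = g ^ (4 * q.1) % p := by
      have := sub_eq_zero.mp h0
      exact_mod_cast this
    have := hcinj (Finset.mem_coe.mpr (Finset.mem_Icc.mpr (by omega)))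
      (Finset.mem_coe.mpr (Finset.mem_Icc.mpr (by omega))) hq2
    omega
  -- X^2 = Y^2
  have hXY : (∏ q ∈ pairSet m, (((A q.2 ^ 2 % p : ℕ) : ℚ) - ((A q.1 ^ 2 % p : ℕ) : ℚ))) ^ 2
      = (∏ q ∈ pairSet m, (((g ^ (4 * q.2) % p : ℕ) : ℚ) - ((g ^ (4 * q.1) % p : ℕ) : ℚ))) ^ 2 := by
    rw [← Finset.prod_pow, ← Finset.prod_pow]
    have e1 := prod_sq_pairs (m := m) (u := fun i => A i ^ 2 % p) hbinj
    have e2 := prod_sq_pairs (m := m) (u := fun i => g ^ (4 * i) % p) hcinj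
    rw [e1, e2, himg]
  -- the parity computation
  have hfilter : (pairSet m).filter (fun q => ¬ q.2 = m) = pairSet (m - 1) := by
    ext q
    simp only [Finset.mem_filter, mem_pairSet]
    omega
  have hodd : Odd ((pairSet (m - 1)).card) := by
    obtain ⟨j, hj⟩ : ∃ j, m = 4 * j + 4 := ⟨m / 4 - 1, by omega⟩
    have hc2 := card_pairSet (m - 1)
    have e1 : m - 1 = 4 * j + 3 := by omega
    rw [e1] at hc2 ⊢
    have e2 : 4 * j + 3 - 1 = 4 * j + 2 := by omega
    rw [e2] at hc2
    have e3 : (4 * j + 3) * (4 * j + 2) = ((4 * j + 3) * (2 * j + 1)) * 2 := by ring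
    have e4 : (pairSet (4 * j + 3)).card = (4 * j + 3) * (2 * j + 1) :=
      Nat.eq_of_mul_eq_mul_right (by norm_num) (hc2.trans e3)
    rw [e4]
    exact Odd.mul ⟨2 * j + 1, by ring⟩ ⟨j, by ring⟩
  have heps : (∏ q ∈ pairSet m, (if q.2 = m then (1 : ℚ) else -1)) = -1 := by
    rw [Finset.prod_ite]
    rw [Finset.prod_const, Finset.prod_const, one_pow, one_mul, hfilter]
    exact Odd.neg_one_pow hodd
  -- Z = -Y
  have hZY : (∏ q ∈ pairSet m, (((g' ^ (4 * q.2) % p : ℕ) : ℚ) - ((g' ^ (4 * q.1) % p : ℕ) : ℚ)))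
      = -(∏ q ∈ pairSet m, (((g ^ (4 * q.2) % p : ℕ) : ℚ) - ((g ^ (4 * q.1) % p : ℕ) : ℚ))) := by
    have hstep : ∀ q ∈ pairSet m,
        (((g' ^ (4 * q.2) % p : ℕ) : ℚ) - ((g' ^ (4 * q.1) % p : ℕ) : ℚ))
          = (if q.2 = m then (1 : ℚ) else -1) *
            (((g ^ (4 * (revMap m q).2) % p : ℕ) : ℚ)
              - ((g ^ (4 * (revMap m q).1) % p : ℕ) : ℚ)) := by
      intro q hq
      have h := mem_pairSet.mp hq
      rw [hdc q.1 (by omega) (by omega), hdc q.2 (by omega) (by omega)]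
      rcases q with ⟨a, b⟩
      simp only at h ⊢
      by_cases h2 : b = m
      · rw [if_pos h2, revMap_eq_of_eq h2, one_mul]
        simp only
        rw [h2, Nat.sub_self, hc0, hcm]
      · rw [if_neg h2, revMap_eq_of_ne h2]
        simp only
        ring
    calc (∏ q ∈ pairSet m, (((g' ^ (4 * q.2) % p : ℕ) : ℚ) - ((g' ^ (4 * q.1) % p : ℕ) : ℚ)))
        = ∏ q ∈ pairSet m, ((if q.2 = m then (1 : ℚ) else -1) *
            (((g ^ (4 * (revMap m q).2) % p : ℕ) : ℚ)
              - ((g ^ (4 * (revMap m q).1) % p : ℕ) : ℚ))) :=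
          Finset.prod_congr rfl hstep
      _ = (∏ q ∈ pairSet m, (if q.2 = m then (1 : ℚ) else -1)) *
            ∏ q ∈ pairSet m, (((g ^ (4 * (revMap m q).2) % p : ℕ) : ℚ)
              - ((g ^ (4 * (revMap m q).1) % p : ℕ) : ℚ)) := Finset.prod_mul_distrib
      _ = (-1) * ∏ q ∈ pairSet m, (((g ^ (4 * q.2) % p : ℕ) : ℚ)
              - ((g ^ (4 * q.1) % p : ℕ) : ℚ)) := by
          rw [heps]
          congr 1
          exact Finset.prod_nbij' (revMap m) (revMap m)
            (fun q hq => revMap_mem hq) (fun q hq => revMap_mem hq)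
            (fun q hq => revMap_invol hq) (fun q hq => revMap_invol hq)
            (fun q hq => rfl)
      _ = -(∏ q ∈ pairSet m, (((g ^ (4 * q.2) % p : ℕ) : ℚ)
              - ((g ^ (4 * q.1) % p : ℕ) : ℚ))) := by ring
  -- put everything together
  rw [htau g, htau g', div_mul_div_comm, hZY]
  have hX2 : (∏ q ∈ pairSet m, (((A q.2 ^ 2 % p : ℕ) : ℚ) - ((A q.1 ^ 2 % p : ℕ) : ℚ))) *
      (∏ q ∈ pairSet m, (((A q.2 ^ 2 % p : ℕ) : ℚ) - ((A q.1 ^ 2 % p : ℕ) : ℚ)))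
      = (∏ q ∈ pairSet m, (((g ^ (4 * q.2) % p : ℕ) : ℚ) - ((g ^ (4 * q.1) % p : ℕ) : ℚ))) *
        (∏ q ∈ pairSet m, (((g ^ (4 * q.2) % p : ℕ) : ℚ) - ((g ^ (4 * q.1) % p : ℕ) : ℚ))) := by
    have := hXY
    rw [pow_two, pow_two] at this
    exact this
  rw [hX2, mul_neg, div_neg, div_self (mul_ne_zero hYne hYne)]
end

section
/- Let p ≡ 1 (mod 8) be a prime. Then sgn(ρ_p) = (−1)^{λ_p + ε_p}. -/
open Finset
open scoped Classical

/-- `λ_p`: `0` if `U_p = ∏_{1≤i<j≤(p-1)/4} sin(2π(a_j² − a_i²)/p) > 0`, and `1` otherwise. -/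
noncomputable def lambdaP (p : ℕ) (a : ℕ → ℕ) : ℕ :=
  if 0 < ∏ i ∈ Finset.Icc 1 ((p - 1) / 4), ∏ j ∈ Finset.Icc (i + 1) ((p - 1) / 4),
      Real.sin (2 * Real.pi * ((a j : ℝ) ^ 2 - (a i : ℝ) ^ 2) / p)
  then 0 else 1

/-- The rational 4-th power residue symbol modulo `p`. -/
noncomputable def chi4 (p : ℕ) (m : ℤ) : ℤ :=
  if (m : ZMod p) = 0 then 0
  else if ∃ z : ZMod p, z ^ 4 = (m : ZMod p) then 1 else -1

/-- `ε_p = #{(x,y) : 0 < x, 0 < y, x + y < p/2, χ4(x) = χ4(y) = 1}`. -/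
noncomputable def epsP (p : ℕ) : ℕ :=
  (((Finset.Ioo 0 p) ×ˢ (Finset.Ioo 0 p)).filter
    (fun q => 2 * (q.1 + q.2) < p ∧ chi4 p (q.1 : ℤ) = 1 ∧ chi4 p (q.2 : ℤ) = 1)).card

/-- `sgn(ρ_p) = ∏_{1≤i<j≤(p-1)/4} ({a_j²}_p − {a_i²}_p)/(b_j − b_i)`,
where `{x}_p` is the least nonnegative residue of `x` modulo `p`. -/
noncomputable def rhoSign (p : ℕ) (a b : ℕ → ℕ) : ℚ :=
  ∏ i ∈ Finset.Icc 1 ((p - 1) / 4), ∏ j ∈ Finset.Icc (i + 1) ((p - 1) / 4),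
    (((a j ^ 2 % p : ℕ) : ℚ) - ((a i ^ 2 % p : ℕ) : ℚ)) / ((b j : ℚ) - (b i : ℚ))


lemma prod_pairs {M : Type*} [CommMonoid M] (n : ℕ) (f : ℕ → ℕ → M) :
    ∏ i ∈ Finset.Icc 1 n, ∏ j ∈ Finset.Icc (i + 1) n, f i j
      = ∏ q ∈ ((Finset.Icc 1 n) ×ˢ (Finset.Icc 1 n)).filter (fun q => q.1 < q.2),
          f q.1 q.2 := by
  rw [Finset.prod_filter, Finset.prod_product]
  refine Finset.prod_congr rfl (fun i _ => ?_)
  rw [← Finset.prod_filter]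
  congr 1
  ext j
  simp only [Finset.mem_filter, Finset.mem_Icc]
  omega

lemma sin_pos_of (p : ℕ) (t : ℤ) (h1 : 0 < t) (h2 : 2 * t < p) :
    0 < Real.sin (2 * Real.pi * t / p) := by
  have hp : (0:ℝ) < p := by
    have : 0 < (p:ℤ) := lt_trans (by omega) h2
    exact_mod_cast this
  apply Real.sin_pos_of_pos_of_lt_pi
  · have : (0:ℝ) < t := by exact_mod_cast h1
    positivity
  · rw [div_lt_iff₀ hp]
    have h2' : (2 * t : ℝ) < p := by exact_mod_cast h2
    nlinarith [Real.pi_pos]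

lemma sin_neg_of (p : ℕ) (t : ℤ) (h1 : (p:ℤ) < 2 * t) (h2 : t < p) :
    Real.sin (2 * Real.pi * t / p) < 0 := by
  have hp : (0:ℝ) < p := by
    have : 0 < (p:ℤ) := by omega
    exact_mod_cast this
  set θ := 2 * Real.pi * t / p with hθ
  have h1' : (p:ℝ) < 2 * t := by exact_mod_cast h1
  have h2' : (t:ℝ) < p := by exact_mod_cast h2
  have hπθ : Real.pi < θ := by
    rw [hθ, lt_div_iff₀ hp]; nlinarith [Real.pi_pos]
  have hθ2π : θ < 2 * Real.pi := by
    rw [hθ, div_lt_iff₀ hp]; nlinarith [Real.pi_pos]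
  have hpos : 0 < Real.sin (θ - Real.pi) :=
    Real.sin_pos_of_pos_of_lt_pi (by linarith) (by linarith)
  rw [Real.sin_sub_pi] at hpos
  linarith

lemma neg_one_fourth (p : ℕ) [Fact p.Prime] (hp8 : p % 8 = 1) :
    ∃ w : ZMod p, w ^ 4 = -1 := by
  have hp : p.Prime := Fact.out
  have hp9 : 9 ≤ p := by
    rcases Nat.lt_or_ge p 9 with h | h
    · interval_cases p <;> first | omega | (exfalso; revert hp; decide)
    · exact h
  obtain ⟨g, hg⟩ := IsCyclic.exists_generator (α := (ZMod p)ˣ)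
  have hcard : Fintype.card (ZMod p)ˣ = p - 1 := ZMod.card_units p
  have horder : orderOf g = p - 1 := by
    rw [orderOf_eq_card_of_forall_mem_zpowers hg, Nat.card_eq_fintype_card, hcard]
  set m := (p - 1) / 8 with hm
  have h8 : p - 1 = 8 * m := by omega
  set u := g ^ (4 * m) with hu
  have hu2 : u ^ 2 = 1 := by
    rw [hu, ← pow_mul]
    have : 4 * m * 2 = p - 1 := by omega
    rw [this, ← horder, pow_orderOf_eq_one]
  have hu1 : u ≠ 1 := by
    intro h
    have := orderOf_dvd_of_pow_eq_one (h ▸ rfl : g ^ (4 * m) = 1)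
    rw [horder] at this
    have hmpos : 0 < m := by omega
    have := Nat.le_of_dvd (by omega) this
    omega
  have hcast2 : ((u : ZMod p)) ^ 2 = 1 := by
    rw [← Units.val_pow_eq_pow_val, hu2, Units.val_one]
  have hcast1 : ((u : ZMod p)) ≠ 1 := fun h => hu1 (Units.ext h)
  have hneg : (u : ZMod p) = -1 := by
    have : ((u : ZMod p) - 1) * ((u : ZMod p) + 1) = 0 := by linear_combination hcast2
    rcases mul_eq_zero.mp this with h | h
    · exact absurd (by linear_combination h) hcast1
    · linear_combination h
  refine ⟨((g ^ m : (ZMod p)ˣ) : ZMod p), ?_⟩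
  rw [← Units.val_pow_eq_pow_val, ← pow_mul, mul_comm m 4, ← hu, hneg]

lemma prod_pm {α : Type*} (s : Finset α) (f : α → ℝ) (h : ∀ q ∈ s, f q = 1 ∨ f q = -1) :
    ∏ q ∈ s, f q = 1 ∨ ∏ q ∈ s, f q = -1 := by
  rw [← sq_eq_one_iff, sq, ← Finset.prod_mul_distrib]
  apply Finset.prod_eq_one
  intro q hq
  rcases h q hq with h | h <;> rw [h] <;> norm_num

lemma prod_abs_offDiag (S : Finset ℕ) (c B : ℕ → ℕ)
    (hcinj : ∀ i ∈ S, ∀ j ∈ S, c i = c j → i = j)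
    (hBinj : ∀ i ∈ S, ∀ j ∈ S, B i = B j → i = j)
    (himg : S.image c = S.image B) :
    ∏ q ∈ (S ×ˢ S).filter (fun q => q.1 < q.2), |(c q.2 : ℝ) - (c q.1 : ℝ)|
      = ∏ q ∈ (S ×ˢ S).filter (fun q => q.1 < q.2), |(B q.2 : ℝ) - (B q.1 : ℝ)| := by
  set P := (S ×ˢ S).filter (fun q => q.1 < q.2) with hP
  set T := S.offDiag with hT
  have split : ∀ f : ℕ → ℕ,
      ∏ q ∈ T, |(f q.2 : ℝ) - (f q.1 : ℝ)| = (∏ q ∈ P, |(f q.2 : ℝ) - (f q.1 : ℝ)|) ^ 2 := by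
    intro f
    have hfilt1 : T.filter (fun q => q.1 < q.2) = P := by
      ext q
      simp only [hT, hP, Finset.mem_filter, Finset.mem_offDiag, Finset.mem_product]
      constructor
      · rintro ⟨⟨h1, h2, _⟩, h4⟩; exact ⟨⟨h1, h2⟩, h4⟩
      · rintro ⟨⟨h1, h2⟩, h4⟩; exact ⟨⟨h1, h2, by omega⟩, h4⟩
    have hfilt2 : T.filter (fun q => ¬ q.1 < q.2) = P.image Prod.swap := by
      ext q
      simp only [hT, hP, Finset.mem_filter, Finset.mem_offDiag, Finset.mem_product,
        Finset.mem_image, Prod.exists]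
      constructor
      · rintro ⟨⟨h1, h2, h3⟩, h4⟩
        exact ⟨q.2, q.1, ⟨⟨h2, h1⟩, by omega⟩, by simp [Prod.swap]⟩
      · rintro ⟨a, b, ⟨⟨h1, h2⟩, h3⟩, h4⟩
        subst h4
        simp only [Prod.fst_swap, Prod.snd_swap]
        exact ⟨⟨h2, h1, by omega⟩, by omega⟩
    rw [← Finset.prod_filter_mul_prod_filter_not T (fun q => q.1 < q.2), hfilt1, hfilt2,
      Finset.prod_image (fun a _ b _ h => Prod.swap_injective h)]
    rw [sq]
    congr 1
    refine Finset.prod_congr rfl (fun q _ => ?_)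
    rw [Prod.snd_swap, Prod.fst_swap, abs_sub_comm]
  have toimg : ∀ f : ℕ → ℕ, (∀ i ∈ S, ∀ j ∈ S, f i = f j → i = j) →
      ∏ q ∈ T, |(f q.2 : ℝ) - (f q.1 : ℝ)|
        = ∏ q ∈ (S.image f).offDiag, |(q.2 : ℝ) - (q.1 : ℝ)| := by
    intro f hinj
    apply Finset.prod_nbij (fun q => (f q.1, f q.2))
    · intro q hq
      rw [hT, Finset.mem_offDiag] at hq
      rw [Finset.mem_offDiag]
      exact ⟨Finset.mem_image_of_mem f hq.1, Finset.mem_image_of_mem f hq.2.1,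
        fun h => hq.2.2 (hinj _ hq.1 _ hq.2.1 h)⟩
    · intro q hq q' hq' h
      simp only [Finset.coe_filter, Set.mem_setOf_eq, Finset.mem_coe, hT,
        Finset.mem_offDiag] at hq hq'
      have h1 := congrArg Prod.fst h
      have h2 := congrArg Prod.snd h
      simp only at h1 h2
      exact Prod.ext (hinj _ hq.1 _ hq'.1 h1) (hinj _ hq.2.1 _ hq'.2.1 h2)
    · intro x hx
      simp only [Finset.coe_offDiag, Set.mem_offDiag, Finset.mem_coe, Finset.mem_image] at hx
      obtain ⟨⟨i, hi, hix⟩, ⟨j, hj, hjx⟩, hne⟩ := hx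
      refine ⟨(i, j), ?_, ?_⟩
      · simp only [Finset.mem_coe, hT, Finset.mem_offDiag]
        refine ⟨hi, hj, ?_⟩
        intro h; subst h; exact hne (hix ▸ hjx ▸ rfl)
      · simp [hix, hjx]
    · intro q hq; rfl
  have key : (∏ q ∈ P, |(c q.2 : ℝ) - (c q.1 : ℝ)|) ^ 2
      = (∏ q ∈ P, |(B q.2 : ℝ) - (B q.1 : ℝ)|) ^ 2 := by
    rw [← split c, ← split B, toimg c hcinj, toimg B hBinj, himg]
  have h1 : (0:ℝ) ≤ ∏ q ∈ P, |(c q.2 : ℝ) - (c q.1 : ℝ)| :=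
    Finset.prod_nonneg (fun q _ => abs_nonneg _)
  have h2 : (0:ℝ) ≤ ∏ q ∈ P, |(B q.2 : ℝ) - (B q.1 : ℝ)| :=
    Finset.prod_nonneg (fun q _ => abs_nonneg _)
  nlinarith [key, h1, h2]

theorem stmt_4 (p : ℕ) [Fact p.Prime] (hp8 : p % 8 = 1)
    (A : ℕ → ℕ) (hmono : StrictMonoOn A (Set.Icc 1 ((p - 1) / 4)))
    (hA : ∀ x : ℕ, (∃ i ∈ Finset.Icc 1 ((p - 1) / 4), A i = x) ↔
      0 < x ∧ 2 * x < p ∧ ∃ y : ZMod p, y ^ 2 = (x : ZMod p))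
    (B : ℕ → ℕ) (hBmono : StrictMonoOn B (Set.Icc 1 ((p - 1) / 4)))
    (hB : ∀ x : ℕ, (∃ i ∈ Finset.Icc 1 ((p - 1) / 4), B i = x) ↔
      0 < x ∧ x < p ∧ ∃ y : ZMod p, y ^ 4 = (x : ZMod p)) :
    rhoSign p A B = (-1 : ℚ) ^ (lambdaP p A + epsP p) := by
  classical
  have hp : p.Prime := Fact.out
  have hp9 : 9 ≤ p := by
    rcases Nat.lt_or_ge p 9 with h | h
    · interval_cases p <;> first | omega | (exfalso; revert hp; decide)
    · exact h
  have hp0 : 0 < p := by omega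
  have hpR : (0:ℝ) < p := by exact_mod_cast hp0
  set n := (p - 1) / 4 with hn
  set S := Finset.Icc 1 n with hS
  set Pset := (S ×ˢ S).filter (fun q : ℕ × ℕ => q.1 < q.2) with hPdef
  have hPmem : ∀ q : ℕ × ℕ, q ∈ Pset ↔ q.1 ∈ S ∧ q.2 ∈ S ∧ q.1 < q.2 := by
    intro q
    simp only [hPdef, Finset.mem_filter, Finset.mem_product, and_assoc]
  set c : ℕ → ℕ := fun i => A i ^ 2 % p with hc
  -- basic facts
  have hAfact : ∀ i ∈ S, 0 < A i ∧ 2 * A i < p ∧ ∃ y : ZMod p, y ^ 2 = (A i : ZMod p) :=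
    fun i hi => (hA (A i)).mp ⟨i, hi, rfl⟩
  have hBfact : ∀ i ∈ S, 0 < B i ∧ B i < p ∧ ∃ y : ZMod p, y ^ 4 = (B i : ZMod p) :=
    fun i hi => (hB (B i)).mp ⟨i, hi, rfl⟩
  have hmemS : ∀ i, i ∈ S → i ∈ Set.Icc 1 n := by
    intro i hi
    rw [hS, Finset.mem_Icc] at hi
    exact Set.mem_Icc.mpr hi
  have hBinj : ∀ i ∈ S, ∀ j ∈ S, B i = B j → i = j :=
    fun i hi j hj h => hBmono.injOn (hmemS i hi) (hmemS j hj) h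
  have hclt : ∀ i, c i < p := fun i => Nat.mod_lt _ hp0
  have hcpos : ∀ i ∈ S, 0 < c i := by
    intro i hi
    rcases Nat.eq_zero_or_pos (c i) with h | h
    · exfalso
      have hdvd : p ∣ A i ^ 2 := Nat.dvd_of_mod_eq_zero h
      have h2 := Nat.le_of_dvd (hAfact i hi).1 (hp.dvd_of_dvd_pow hdvd)
      have := (hAfact i hi).2.1
      omega
    · exact h
  have hccast : ∀ i, ((c i : ℕ) : ZMod p) = (A i : ZMod p) ^ 2 := by
    intro i
    rw [hc]
    push_cast [ZMod.natCast_mod]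
    ring
  have hnatinj : ∀ a b : ℕ, a < p → b < p → ((a : ZMod p) = (b : ZMod p)) → a = b := by
    intro a b ha hb h
    have := congrArg ZMod.val h
    rwa [ZMod.val_cast_of_lt ha, ZMod.val_cast_of_lt hb] at this
  have hne0 : ∀ a : ℕ, 0 < a → a < p → ((a : ZMod p) ≠ 0) := by
    intro a h1 h2 h
    rw [ZMod.natCast_eq_zero_iff] at h
    have := Nat.le_of_dvd h1 h
    omega
  have hcinj : ∀ i ∈ S, ∀ j ∈ S, c i = c j → i = j := by
    intro i hi j hj h
    have hcast : (A i : ZMod p) ^ 2 = (A j : ZMod p) ^ 2 := by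
      rw [← hccast, ← hccast, h]
    have hfac : ((A i : ZMod p) - A j) * ((A i : ZMod p) + A j) = 0 := by
      linear_combination hcast
    rcases mul_eq_zero.mp hfac with hz | hz
    · have : (A i : ZMod p) = A j := by linear_combination hz
      have hAi := (hAfact i hi).2.1
      have hAj := (hAfact j hj).2.1
      exact hmono.injOn (hmemS i hi) (hmemS j hj)
        (hnatinj _ _ (by omega) (by omega) this)
    · exfalso
      have : ((A i + A j : ℕ) : ZMod p) = 0 := by push_cast; linear_combination hz
      have hAi := (hAfact i hi).1
      have hAj := (hAfact j hj).2.1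
      have hAi2 := (hAfact i hi).2.1
      exact hne0 (A i + A j) (by omega) (by omega) this
  have hw4 : ∃ w : ZMod p, w ^ 4 = -1 := neg_one_fourth p hp8
  have hs2 : ∃ s : ZMod p, s ^ 2 = -1 := by
    obtain ⟨w, hw⟩ := hw4
    exact ⟨w ^ 2, by rw [← hw]; ring⟩
  have hcbiq : ∀ i ∈ S, ∃ y : ZMod p, y ^ 4 = (c i : ZMod p) := by
    intro i hi
    obtain ⟨y, hy⟩ := (hAfact i hi).2.2
    exact ⟨y, by rw [hccast, ← hy]; ring⟩
  -- image characterization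
  have hmemc : ∀ x : ℕ, x ∈ S.image c ↔
      (0 < x ∧ x < p ∧ ∃ y : ZMod p, y ^ 4 = (x : ZMod p)) := by
    intro x
    rw [Finset.mem_image]
    constructor
    · rintro ⟨i, hi, rfl⟩
      exact ⟨hcpos i hi, hclt i, hcbiq i hi⟩
    · rintro ⟨hx0, hxp, y, hy⟩
      have hxne : (x : ZMod p) ≠ 0 := hne0 x hx0 hxp
      set w : ZMod p := y ^ 2 with hwdef
      have hw2 : w ^ 2 = (x : ZMod p) := by rw [hwdef, ← hy]; ring
      have hwne : w ≠ 0 := by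
        intro h
        apply hxne
        rw [← hw2, h]
        ring
      set v := w.val with hv
      have hvlt : v < p := w.val_lt
      have hvne : v ≠ 0 := by
        rw [hv]
        intro h
        exact hwne ((ZMod.val_eq_zero w).mp h)
      have hvcast : ((v : ℕ) : ZMod p) = w := ZMod.natCast_zmod_val w
      have hpodd : p % 2 = 1 := by omega
      set u := if 2 * v < p then v else p - v with hu
      have hu0 : 0 < u ∧ 2 * u < p := by
        rw [hu]; split <;> omega
      have hucast : ((u : ℕ) : ZMod p) = w ∨ ((u : ℕ) : ZMod p) = -w := by
        rw [hu]; split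
        · left; exact hvcast
        · right
          have hsub : ((p - v : ℕ) : ZMod p) = (p : ZMod p) - (v : ZMod p) := by
            push_cast [Nat.cast_sub (le_of_lt hvlt)]
            ring
          rw [hsub, ZMod.natCast_self, hvcast]
          ring
      have huQR : ∃ z : ZMod p, z ^ 2 = (u : ZMod p) := by
        rcases hucast with h | h
        · exact ⟨y, by rw [h, hwdef]⟩
        · obtain ⟨s, hs⟩ := hs2
          exact ⟨s * y, by rw [h, hwdef, mul_pow, hs]; ring⟩
      obtain ⟨i, hi, hiu⟩ := (hA u).mpr ⟨hu0.1, hu0.2, huQR⟩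
      refine ⟨i, hi, ?_⟩
      apply hnatinj _ _ (hclt i) hxp
      rw [hccast, hiu]
      rcases hucast with h | h
      · rw [h]; exact hw2
      · rw [h, ← hw2]; ring
  have himg : S.image c = S.image B := by
    ext x
    rw [hmemc, Finset.mem_image]
    constructor
    · intro hx
      obtain ⟨i, hi, hix⟩ := (hB x).mpr hx
      exact ⟨i, hi, hix⟩
    · rintro ⟨i, hi, rfl⟩
      exact hBfact i hi
  -- sign bookkeeping
  set d : ℕ × ℕ → ℤ := fun q => (c q.2 : ℤ) - (c q.1 : ℤ) with hd
  set sd : ℕ × ℕ → ℝ := fun q => if 0 < d q then 1 else -1 with hsd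
  set sq : ℕ × ℕ → ℝ :=
    fun q => Real.sin (2 * Real.pi * ((A q.2 : ℝ) ^ 2 - (A q.1 : ℝ) ^ 2) / p) with hsq
  set ssq : ℕ × ℕ → ℝ := fun q => if 0 < sq q then 1 else -1 with hssq
  set mq : ℕ × ℕ → Prop := fun q => (p : ℤ) < 2 * |d q| with hmqdef
  have hdfacts : ∀ q ∈ Pset, d q ≠ 0 ∧ -(p:ℤ) < d q ∧ d q < p := by
    intro q hq
    obtain ⟨h1, h2, h3⟩ := (hPmem q).mp hq
    have hne : c q.1 ≠ c q.2 := fun h => by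
      have := hcinj _ h1 _ h2 h
      omega
    have e1 := hclt q.1
    have e2 := hclt q.2
    simp only [hd]
    refine ⟨by omega, by omega, by omega⟩
  have hsin_eq : ∀ q ∈ Pset, sq q = Real.sin (2 * Real.pi * (d q) / p) := by
    intro q hq
    have e2 : A q.2 ^ 2 = p * (A q.2 ^ 2 / p) + c q.2 := (Nat.div_add_mod _ p).symm
    have e1 : A q.1 ^ 2 = p * (A q.1 ^ 2 / p) + c q.1 := (Nat.div_add_mod _ p).symm
    have h2 : ((A q.2 : ℝ)) ^ 2 = p * ((A q.2 ^ 2 / p : ℕ) : ℝ) + (c q.2 : ℝ) := by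
      exact_mod_cast congrArg (fun t : ℕ => (t : ℝ)) e2
    have h1 : ((A q.1 : ℝ)) ^ 2 = p * ((A q.1 ^ 2 / p : ℕ) : ℝ) + (c q.1 : ℝ) := by
      exact_mod_cast congrArg (fun t : ℕ => (t : ℝ)) e1
    set K : ℤ := ((A q.2 ^ 2 / p : ℕ) : ℤ) - ((A q.1 ^ 2 / p : ℕ) : ℤ) with hK
    have hnum : ((A q.2 : ℝ) ^ 2 - (A q.1 : ℝ) ^ 2) = ((d q : ℤ) : ℝ) + (K : ℝ) * p := by
      have hKr : (K : ℝ) = ((A q.2 ^ 2 / p : ℕ) : ℝ) - ((A q.1 ^ 2 / p : ℕ) : ℝ) := by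
        rw [hK, Int.cast_sub, Int.cast_natCast, Int.cast_natCast]
      have hdr : ((d q : ℤ) : ℝ) = (c q.2 : ℝ) - (c q.1 : ℝ) := by
        simp only [hd]; push_cast; ring
      rw [hKr, hdr, h1, h2]; ring
    have harg : 2 * Real.pi * ((A q.2 : ℝ) ^ 2 - (A q.1 : ℝ) ^ 2) / p
        = 2 * Real.pi * ((d q : ℤ) : ℝ) / p + (K : ℤ) * (2 * Real.pi) := by
      rw [hnum]
      field_simp
    simp only [hsq]
    rw [harg, Real.sin_add_int_mul_two_pi]
  have hkey : ∀ q ∈ Pset, sq q ≠ 0 ∧ sd q = ssq q * (if mq q then -1 else 1) := by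
    intro q hq
    obtain ⟨hdne, hdlow, hdhigh⟩ := hdfacts q hq
    have hpodd : p % 2 = 1 := by omega
    have hse := hsin_eq q hq
    rcases lt_trichotomy (d q) 0 with hneg | hzero | hpos
    · have habs : |d q| = -(d q) := abs_of_neg hneg
      have hsd1 : sd q = -1 := by simp only [hsd]; rw [if_neg (by omega)]
      have hflip : sq q = - Real.sin (2 * Real.pi * ((-(d q) : ℤ) : ℝ) / p) := by
        rw [hse, show 2 * Real.pi * ((d q : ℤ) : ℝ) / p
            = -(2 * Real.pi * ((-(d q) : ℤ) : ℝ) / p) by push_cast; ring, Real.sin_neg]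
      rcases lt_or_gt_of_ne (show 2 * (-(d q)) ≠ (p : ℤ) by omega) with hlt | hgt
      · have hpos' := sin_pos_of p (-(d q)) (by omega) hlt
        have hsqneg : sq q < 0 := by rw [hflip]; linarith
        have hssq1 : ssq q = -1 := by simp only [hssq]; rw [if_neg (by linarith)]
        have hmqf : ¬ mq q := by simp only [hmqdef]; rw [habs]; omega
        exact ⟨ne_of_lt hsqneg, by rw [hsd1, hssq1, if_neg hmqf]; norm_num⟩
      · have hneg' := sin_neg_of p (-(d q)) hgt (by omega)
        have hsqpos : 0 < sq q := by rw [hflip]; linarith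
        have hssq1 : ssq q = 1 := by simp only [hssq]; rw [if_pos hsqpos]
        have hmqt : mq q := by simp only [hmqdef]; rw [habs]; omega
        exact ⟨ne_of_gt hsqpos, by rw [hsd1, hssq1, if_pos hmqt]; norm_num⟩
    · exact absurd hzero hdne
    · have habs : |d q| = d q := abs_of_pos hpos
      have hsd1 : sd q = 1 := by simp only [hsd]; rw [if_pos hpos]
      rcases lt_or_gt_of_ne (show 2 * d q ≠ (p : ℤ) by omega) with hlt | hgt
      · have hpos' := sin_pos_of p (d q) hpos hlt
        have hsqpos : 0 < sq q := by rw [hse]; exact hpos'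
        have hssq1 : ssq q = 1 := by simp only [hssq]; rw [if_pos hsqpos]
        have hmqf : ¬ mq q := by simp only [hmqdef]; rw [habs]; omega
        exact ⟨ne_of_gt hsqpos, by rw [hsd1, hssq1, if_neg hmqf]; norm_num⟩
      · have hneg' := sin_neg_of p (d q) hgt hdhigh
        have hsqneg : sq q < 0 := by rw [hse]; exact hneg'
        have hssq1 : ssq q = -1 := by simp only [hssq]; rw [if_neg (by linarith)]
        have hmqt : mq q := by simp only [hmqdef]; rw [habs]; omega
        exact ⟨ne_of_lt hsqneg, by rw [hsd1, hssq1, if_pos hmqt]; norm_num⟩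
  -- the three main product identities
  have hBlt : ∀ q ∈ Pset, B q.1 < B q.2 := by
    intro q hq
    obtain ⟨h1, h2, h3⟩ := (hPmem q).mp hq
    exact hBmono (hmemS _ h1) (hmemS _ h2) h3
  have habsprod : (∏ q ∈ Pset, |(c q.2 : ℝ) - (c q.1 : ℝ)|)
      = ∏ q ∈ Pset, ((B q.2 : ℝ) - (B q.1 : ℝ)) := by
    have habs1 := prod_abs_offDiag S c B hcinj hBinj himg
    have habs2 : (∏ q ∈ Pset, |(B q.2 : ℝ) - (B q.1 : ℝ)|)
        = ∏ q ∈ Pset, ((B q.2 : ℝ) - (B q.1 : ℝ)) := by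
      refine Finset.prod_congr rfl (fun q hq => ?_)
      have := hBlt q hq
      have : (B q.1 : ℝ) < B q.2 := by exact_mod_cast this
      rw [abs_of_pos (by linarith)]
    exact habs1.trans habs2
  have hden : (∏ q ∈ Pset, ((B q.2 : ℝ) - (B q.1 : ℝ))) ≠ 0 := by
    apply ne_of_gt
    apply Finset.prod_pos
    intro q hq
    have := hBlt q hq
    have : (B q.1 : ℝ) < B q.2 := by exact_mod_cast this
    linarith
  have hrho : ((rhoSign p A B : ℚ) : ℝ) = ∏ q ∈ Pset, sd q := by
    have hform : ((rhoSign p A B : ℚ) : ℝ)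
        = ∏ q ∈ Pset, (((c q.2 : ℝ) - (c q.1 : ℝ)) / ((B q.2 : ℝ) - (B q.1 : ℝ))) := by
      simp only [rhoSign]
      push_cast
      rw [prod_pairs, ← hn]
    have hnum : (∏ q ∈ Pset, ((c q.2 : ℝ) - (c q.1 : ℝ)))
        = (∏ q ∈ Pset, sd q) * ∏ q ∈ Pset, |(c q.2 : ℝ) - (c q.1 : ℝ)| := by
      rw [← Finset.prod_mul_distrib]
      refine Finset.prod_congr rfl (fun q hq => ?_)
      simp only [hsd]
      split
      · have hdq : (0:ℤ) < d q := by assumption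
        have : c q.1 < c q.2 := by simp only [hd] at hdq; omega
        have hlt : (c q.1 : ℝ) < c q.2 := by exact_mod_cast this
        rw [one_mul, abs_of_pos (by linarith)]
      · have hdq : ¬ (0:ℤ) < d q := by assumption
        have : c q.2 ≤ c q.1 := by simp only [hd] at hdq; omega
        have hle : (c q.2 : ℝ) ≤ c q.1 := by exact_mod_cast this
        rw [abs_of_nonpos (by linarith)]
        ring
    rw [hform, Finset.prod_div_distrib, hnum, habsprod, mul_div_assoc, div_self hden, mul_one]
  have hlam : (∏ q ∈ Pset, ssq q) = (-1 : ℝ) ^ (lambdaP p A) := by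
    have hUdef : lambdaP p A = if 0 < ∏ q ∈ Pset, sq q then 0 else 1 := by
      simp only [lambdaP]
      rw [prod_pairs, ← hn]
    have hsseq : ∀ q ∈ Pset, sq q = ssq q * |sq q| := by
      intro q hq
      simp only [hssq]
      split
      · rename_i h
        rw [one_mul, abs_of_pos h]
      · rename_i h
        have hne := (hkey q hq).1
        rw [abs_of_neg (lt_of_le_of_ne (not_lt.mp h) hne)]
        ring
    have hUsplit : (∏ q ∈ Pset, sq q) = (∏ q ∈ Pset, ssq q) * ∏ q ∈ Pset, |sq q| := by
      rw [← Finset.prod_mul_distrib]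
      exact Finset.prod_congr rfl hsseq
    have habspos : 0 < ∏ q ∈ Pset, |sq q| :=
      Finset.prod_pos (fun q hq => abs_pos.mpr (hkey q hq).1)
    have hpm := prod_pm Pset ssq (fun q hq => by
      simp only [hssq]; split
      · exact Or.inl rfl
      · exact Or.inr rfl)
    rw [hUdef]
    by_cases hU : 0 < ∏ q ∈ Pset, sq q
    · rw [if_pos hU, pow_zero]
      rcases hpm with h | h
      · exact h
      · exfalso
        rw [hUsplit, h] at hU
        nlinarith
    · rw [if_neg hU, pow_one]
      rcases hpm with h | h
      · exfalso
        rw [hUsplit, h, one_mul] at hU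
        exact hU habspos
      · exact h
  have hchi : ∀ x : ℕ, 0 < x → x < p →
      (chi4 p (x : ℤ) = 1 ↔ ∃ z : ZMod p, z ^ 4 = (x : ZMod p)) := by
    intro x h1 h2
    have hcoe : (((x : ℤ)) : ZMod p) = (x : ZMod p) := by push_cast; ring
    simp only [chi4, hcoe]
    rw [if_neg (hne0 x h1 h2)]
    by_cases hex : ∃ z : ZMod p, z ^ 4 = (x : ZMod p)
    · simp [hex]
    · simp [hex]
  have hpm4 : ∀ v : ℕ, v < p → (∃ y : ZMod p, y ^ 4 = (v : ZMod p)) →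
      ∃ y : ZMod p, y ^ 4 = ((p - v : ℕ) : ZMod p) := by
    rintro v h2 ⟨y, hy⟩
    obtain ⟨w, hw⟩ := hw4
    refine ⟨w * y, ?_⟩
    have hsub : ((p - v : ℕ) : ZMod p) = -(v : ZMod p) := by
      push_cast [Nat.cast_sub h2.le]
      rw [ZMod.natCast_self]
      ring
    rw [hsub, mul_pow, hw, hy]
    ring
  have hqfacts : ∀ q ∈ Pset, 0 < c q.1 ∧ c q.1 < p ∧ 0 < c q.2 ∧ c q.2 < p ∧ c q.1 ≠ c q.2 := by
    intro q hq
    obtain ⟨h1, h2, h3⟩ := (hPmem q).mp hq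
    exact ⟨hcpos _ h1, hclt _, hcpos _ h2, hclt _, fun h => by
      have := hcinj _ h1 _ h2 h; omega⟩
  have hNeps : (Pset.filter mq).card = epsP p := by
    rw [epsP]
    apply Finset.card_bij
      (fun q _ => if c q.1 < c q.2 then (c q.1, p - c q.2) else (c q.2, p - c q.1))
    · -- maps into the target set
      intro q hq
      obtain ⟨hqP, hqm⟩ := Finset.mem_filter.mp hq
      obtain ⟨h1, h2, h3⟩ := (hPmem q).mp hqP
      obtain ⟨e1, e2, e3, e4, e5⟩ := hqfacts q hqP
      have hqm' : (p : ℤ) < 2 * |(c q.2 : ℤ) - (c q.1 : ℤ)| := hqm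
      have hbiq1 := hcbiq _ h1
      have hbiq2 := hcbiq _ h2
      rw [Finset.mem_filter, Finset.mem_product]
      split
      · rename_i hlt
        have habs : |(c q.2 : ℤ) - (c q.1 : ℤ)| = (c q.2 : ℤ) - (c q.1 : ℤ) :=
          abs_of_pos (by omega)
        rw [habs] at hqm'
        refine ⟨⟨Finset.mem_Ioo.mpr ⟨e1, by omega⟩, Finset.mem_Ioo.mpr ⟨by omega, by omega⟩⟩,
          by simp only; omega, ?_, ?_⟩
        · exact (hchi _ e1 e2).mpr hbiq1
        · exact (hchi _ (by omega) (by omega)).mpr (hpm4 _ e4 hbiq2)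
      · rename_i hlt
        have habs : |(c q.2 : ℤ) - (c q.1 : ℤ)| = (c q.1 : ℤ) - (c q.2 : ℤ) := by
          rw [abs_of_nonpos (by omega)]; ring
        rw [habs] at hqm'
        refine ⟨⟨Finset.mem_Ioo.mpr ⟨e3, by omega⟩, Finset.mem_Ioo.mpr ⟨by omega, by omega⟩⟩,
          by simp only; omega, ?_, ?_⟩
        · exact (hchi _ e3 e4).mpr hbiq2
        · exact (hchi _ (by omega) (by omega)).mpr (hpm4 _ e2 hbiq1)
    · -- injective
      intro q hq q' hq' heq
      obtain ⟨hqP, _⟩ := Finset.mem_filter.mp hq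
      obtain ⟨hqP', _⟩ := Finset.mem_filter.mp hq'
      obtain ⟨h1, h2, h3⟩ := (hPmem q).mp hqP
      obtain ⟨h1', h2', h3'⟩ := (hPmem q').mp hqP'
      obtain ⟨e1, e2, e3, e4, e5⟩ := hqfacts q hqP
      obtain ⟨e1', e2', e3', e4', e5'⟩ := hqfacts q' hqP'
      have hfst := congrArg Prod.fst heq
      have hsnd := congrArg Prod.snd heq
      simp only [apply_ite Prod.fst, apply_ite Prod.snd] at hfst hsnd
      have hcases :
          (c q.1 = c q'.1 ∧ c q.2 = c q'.2) ∨ (c q.1 = c q'.2 ∧ c q.2 = c q'.1) := by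
        rcases lt_or_ge (c q.1) (c q.2) with hx | hx
        · rw [if_pos hx] at hfst hsnd
          rcases lt_or_ge (c q'.1) (c q'.2) with hy | hy
          · rw [if_pos hy] at hfst hsnd
            exact Or.inl ⟨by omega, by omega⟩
          · rw [if_neg (not_lt.mpr hy)] at hfst hsnd
            exact Or.inr ⟨by omega, by omega⟩
        · rw [if_neg (not_lt.mpr hx)] at hfst hsnd
          rcases lt_or_ge (c q'.1) (c q'.2) with hy | hy
          · rw [if_pos hy] at hfst hsnd
            exact Or.inr ⟨by omega, by omega⟩
          · rw [if_neg (not_lt.mpr hy)] at hfst hsnd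
            exact Or.inl ⟨by omega, by omega⟩
      rcases hcases with ⟨ha, hb⟩ | ⟨ha, hb⟩
      · have := hcinj _ h1 _ h1' ha
        have := hcinj _ h2 _ h2' hb
        exact Prod.ext ‹q.1 = q'.1› ‹q.2 = q'.2›
      · have hx := hcinj _ h1 _ h2' ha
        have hy := hcinj _ h2 _ h1' hb
        omega
    · -- surjective
      rintro ⟨x, y⟩ hxy
      obtain ⟨hmem, hlt2, hchx, hchy⟩ := Finset.mem_filter.mp hxy
      obtain ⟨hx, hy⟩ := Finset.mem_product.mp hmem
      rw [Finset.mem_Ioo] at hx hy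
      have hbx : ∃ z : ZMod p, z ^ 4 = (x : ZMod p) := (hchi _ hx.1 hx.2).mp hchx
      have hby : ∃ z : ZMod p, z ^ 4 = (y : ZMod p) := (hchi _ hy.1 hy.2).mp hchy
      have hbpy : ∃ z : ZMod p, z ^ 4 = ((p - y : ℕ) : ZMod p) := hpm4 _ hy.2 hby
      simp only at hlt2
      obtain ⟨i, hi, hix⟩ := Finset.mem_image.mp ((hmemc x).mpr ⟨hx.1, hx.2, hbx⟩)
      obtain ⟨j, hj, hjy⟩ :=
        Finset.mem_image.mp ((hmemc (p - y)).mpr ⟨by omega, by omega, hbpy⟩)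
      have hxlt : x < p - y := by omega
      have hij : i ≠ j := by
        intro h
        rw [h, hjy] at hix
        omega
      have hmval : (p : ℤ) < 2 * ((p - y : ℕ) : ℤ) - 2 * (x : ℤ) := by omega
      rcases lt_or_gt_of_ne hij with hlt | hgt
      · refine ⟨(i, j), Finset.mem_filter.mpr ⟨(hPmem _).mpr ⟨hi, hj, hlt⟩, ?_⟩, ?_⟩
        · show (p : ℤ) < 2 * |(c j : ℤ) - (c i : ℤ)|
          rw [hix, hjy, abs_of_pos (by omega)]
          omega
        · simp only [hix, hjy]
          rw [if_pos hxlt]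
          have : p - (p - y) = y := by omega
          rw [this]
      · refine ⟨(j, i), Finset.mem_filter.mpr ⟨(hPmem _).mpr ⟨hj, hi, hgt⟩, ?_⟩, ?_⟩
        · show (p : ℤ) < 2 * |(c i : ℤ) - (c j : ℤ)|
          rw [hix, hjy, abs_of_neg (by omega)]
          omega
        · simp only [hix, hjy]
          rw [if_neg (by omega)]
          have : p - (p - y) = y := by omega
          rw [this]
  -- assembly
  have hsplit : (∏ q ∈ Pset, sd q)
      = (∏ q ∈ Pset, ssq q) * ∏ q ∈ Pset, (if mq q then (-1 : ℝ) else 1) := by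
    rw [← Finset.prod_mul_distrib]
    exact Finset.prod_congr rfl (fun q hq => (hkey q hq).2)
  have hite : (∏ q ∈ Pset, (if mq q then (-1 : ℝ) else 1)) = (-1 : ℝ) ^ epsP p := by
    rw [Finset.prod_ite, Finset.prod_const, Finset.prod_const, one_pow, mul_one, hNeps]
  have final : ((rhoSign p A B : ℚ) : ℝ) = (-1 : ℝ) ^ (lambdaP p A + epsP p) := by
    rw [hrho, hsplit, hite, hlam, pow_add]
  exact_mod_cast final
end

section
/- Let p be an odd prime, let k be a positive integer with k | p − 1, set n = (p−1)/k and ζ = e^{2πi/(p−1)}, and let P(ζ) = ∏_{1≤i<j≤n} (ζ^{kj} − ζ^{ki}). Then P(ζ) = (−1)^{(n−2)/4} · n^{n/2} if ν_2(n) = 1; P(ζ) = (−1)^{(n−4)/4} · i · n^{n/2} if ν_2(n) > 1; P(ζ) = (−1)^{(n−1)/4} · n^{n/2} if n ≡ 1 (mod 4); and P(ζ) = (−1)^{(n+1)/4} · i · n^{n/2} if n ≡ 3 (mod 4). -/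
open Finset Complex
open scoped Real

-- complex factorization
private lemma aux_exp_sub_exp (a b : ℂ) :
    Complex.exp (2*a*I) - Complex.exp (2*b*I)
      = Complex.exp ((a+b)*I) * I * (2 * Complex.sin (a - b)) := by
  rw [Complex.sin]
  have e1 : Complex.exp ((a+b)*I) * Complex.exp ((a-b)*I) = Complex.exp (2*a*I) := by
    rw [← Complex.exp_add]; congr 1; ring
  have e2 : Complex.exp ((a+b)*I) * Complex.exp (-(a-b)*I) = Complex.exp (2*b*I) := by
    rw [← Complex.exp_add]; congr 1; ring
  linear_combination e2 - e1 + (Complex.exp ((a+b)*I) *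
    (Complex.exp ((a-b)*I) - Complex.exp (-(a-b)*I))) * Complex.I_sq

private lemma aux_one_sub_exp (θ : ℝ) :
    1 - Complex.exp (2*θ*I) = -I * Complex.exp (θ*I) * (2 * Real.sin θ) := by
  have := aux_exp_sub_exp 0 (θ:ℂ)
  simp only [mul_zero, zero_mul, Complex.exp_zero, zero_add, zero_sub, Complex.sin_neg] at this
  rw [this, Complex.ofReal_sin]
  ring

private lemma aux_gauss (n : ℕ) : (∑ i ∈ Icc 1 n, i) * 2 = n * (n + 1) := by
  have h : ∑ i ∈ range (n+1), i = ∑ i ∈ Icc 1 n, i := by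
    rw [Finset.range_eq_Ico, ← Finset.Ico_add_one_right_eq_Icc,
      Finset.sum_eq_sum_Ico_succ_bot (by omega)]
    simp
  rw [← h, Finset.sum_range_id_mul_two]
  simp [Nat.mul_comm]

private lemma aux_reshape {M : Type*} [CommMonoid M] (f : ℕ → M) (n : ℕ) :
    ∏ i ∈ Icc 1 n, ∏ j ∈ Icc (i + 1) n, f (j - i) =
      ∏ m ∈ Icc 1 (n - 1), f m ^ (n - m) := by
  have h1 : ∀ i ∈ Icc 1 n, ∏ j ∈ Icc (i + 1) n, f (j - i) = ∏ m ∈ Icc 1 (n - i), f m := by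
    intro i hi
    refine Finset.prod_nbij' (fun j => j - i) (fun m => m + i) ?_ ?_ ?_ ?_ ?_
    · intro j hj; simp only [mem_Icc] at *; omega
    · intro m hm; simp only [mem_Icc] at *; omega
    · intro j hj; simp only [mem_Icc] at *; omega
    · intro m hm; simp only [mem_Icc] at *; omega
    · intro j hj; rfl
  rw [Finset.prod_congr rfl h1,
    Finset.prod_comm' (t' := Icc 1 (n-1)) (s' := fun m => Icc 1 (n - m))
      (by intro i m; simp only [mem_Icc]; omega)]
  refine Finset.prod_congr rfl fun m hm => ?_
  rw [Finset.prod_const, Nat.card_Icc]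
  congr 1 <;> omega

private lemma aux_sumS (n : ℕ) :
    2 * (∑ i ∈ Icc 1 n, ∑ j ∈ Icc (i+1) n, (i+j)) = (n - 1) * (n * (n+1)) := by
  have h1 : ∀ i ∈ Icc 1 n, ∑ j ∈ Icc (i+1) n, (i+j)
      = (n - i) * i + ∑ j ∈ Icc (i+1) n, j := by
    intro i hi
    rw [Finset.sum_add_distrib, Finset.sum_const, Nat.card_Icc, smul_eq_mul]
    congr 2 <;> omega
  rw [Finset.sum_congr rfl h1, Finset.sum_add_distrib]
  have h2 : ∑ i ∈ Icc 1 n, ∑ j ∈ Icc (i+1) n, j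
      = ∑ j ∈ Icc 1 n, ∑ _i ∈ Icc 1 (j-1), j := by
    refine Finset.sum_comm' ?_
    intro i j; simp only [mem_Icc]; omega
  rw [h2]
  have h3 : ∀ j ∈ Icc 1 n, ∑ _i ∈ Icc 1 (j-1), j = (j-1) * j := by
    intro j hj; rw [Finset.sum_const, Nat.card_Icc, smul_eq_mul]; congr 1 <;> omega
  rw [Finset.sum_congr rfl h3, ← Finset.sum_add_distrib]
  have h4 : ∀ i ∈ Icc 1 n, (n - i) * i + (i-1) * i = (n-1) * i := by
    intro i hi
    simp only [mem_Icc] at hi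
    rw [← Nat.add_mul]
    congr 1 <;> omega
  rw [Finset.sum_congr rfl h4, ← Finset.mul_sum]
  rw [Nat.mul_comm 2, Nat.mul_assoc, ← aux_gauss n]
  try ring

private lemma aux_sumN (n : ℕ) (hn : 0 < n) :
    ∑ i ∈ Icc 1 n, (n - i) = n * (n - 1) / 2 := by
  have h1 : (∑ i ∈ Icc 1 n, (n - i)) + ∑ i ∈ Icc 1 n, i = n * n := by
    rw [← Finset.sum_add_distrib]
    have : ∀ i ∈ Icc 1 n, (n - i) + i = n := by intro i hi; simp only [mem_Icc] at hi; omega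
    rw [Finset.sum_congr rfl this, Finset.sum_const, Nat.card_Icc, smul_eq_mul]
    congr 1 <;> omega
  have h2 := aux_gauss n
  have h3 : n * (n+1) + n * (n-1) = 2 * (n * n) := by
    obtain ⟨m, rfl⟩ := Nat.exists_eq_succ_of_ne_zero hn.ne'
    simp only [Nat.succ_sub_one, Nat.succ_eq_add_one]
    ring
  have h4 : (∑ i ∈ Icc 1 n, (n - i)) * 2 = n * (n-1) := by omega
  omega

private lemma aux_prodsin (n : ℕ) (hn : 0 < n) :
    ∏ m ∈ Icc 1 (n-1), (2 * Real.sin (π * m / n)) = n := by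
  obtain ⟨m, rfl⟩ := Nat.exists_eq_succ_of_ne_zero hn.ne'
  simp only [Nat.succ_sub_one, Nat.succ_eq_add_one]
  have prim := Complex.isPrimitiveRoot_exp (m+1) (by omega)
  have key := prim.prod_one_sub_pow_eq_order
  have hm0 : ((m:ℂ) + 1) ≠ 0 := by
    have : (0:ℝ) < m + 1 := by positivity
    exact_mod_cast (by exact_mod_cast this.ne' : ((m:ℂ)+1) ≠ 0)
  have hfac : ∀ k ∈ range m, (1 : ℂ) - Complex.exp (2*π*I/(↑(m+1))) ^ (k+1)
      = -I * Complex.exp (↑(π*(k+1)/(m+1) : ℝ)*I) * ↑(2 * Real.sin (π*(k+1)/(m+1))) := by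
    intro k hk
    rw [← Complex.exp_nat_mul]
    rw [show ((k+1 : ℕ) : ℂ) * (2*π*I/(↑(m+1))) = 2 * ↑(π*(k+1)/(m+1) : ℝ) * I by
      push_cast; field_simp]
    rw [Complex.ofReal_mul, Complex.ofReal_ofNat]
    exact aux_one_sub_exp _
  rw [Finset.prod_congr rfl hfac] at key
  simp only [Finset.prod_mul_distrib, Finset.prod_const, Finset.card_range] at key
  rw [← Complex.exp_sum] at key
  -- the ℕ Gauss sum
  have hN : (∑ k ∈ range m, (k+1)) * 2 = m * (m+1) := by
    have h := Finset.sum_range_id_mul_two (m+1)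
    rw [Finset.sum_range_succ'] at h
    simp only [Nat.add_sub_cancel, add_zero] at h
    exact h.trans (Nat.mul_comm _ _)
  have hsumR : ∑ k ∈ range m, (π*((k:ℝ)+1)/(m+1)) = m * (π/2) := by
    rw [← Finset.sum_div, ← Finset.mul_sum]
    have h1 : ∑ k ∈ range m, ((k:ℝ)+1) = m*(m+1)/2 := by
      have : ((∑ k ∈ range m, (k+1) : ℕ) : ℝ) * 2 = (m:ℝ) * (m+1) := by exact_mod_cast hN
      push_cast at this
      linarith
    rw [h1]
    have hm1 : ((m:ℝ)+1) ≠ 0 := by positivity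
    field_simp
  have hsum : ∑ k ∈ range m, ((↑(π*((k:ℕ)+1)/(m+1) : ℝ)) * I) = ↑m * ((↑(π/2 : ℝ)) * I) := by
    rw [← Finset.sum_mul, ← Complex.ofReal_sum]
    rw [hsumR]
    push_cast
    ring
  rw [hsum] at key
  have hI : Complex.exp ((↑(π/2 : ℝ)) * I) = I := by
    rw [Complex.exp_mul_I]
    simp [← Complex.ofReal_cos, ← Complex.ofReal_sin, Real.cos_pi_div_two, Real.sin_pi_div_two]
  rw [show ((m:ℂ)) * ((↑(π/2 : ℝ)) * I) = ((m:ℕ):ℂ) * ((↑(π/2 : ℝ)) * I) by norm_cast,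
    Complex.exp_nat_mul, hI] at key
  rw [show ∏ k ∈ range m, ((2 * Real.sin (π*(k+1)/(m+1)) : ℝ) : ℂ)
      = ((∏ k ∈ range m, (2 * Real.sin (π*(k+1)/(m+1))) : ℝ) : ℂ) from
    (Complex.ofReal_prod _ _).symm] at key
  rw [← mul_pow] at key
  rw [show (-Complex.I * Complex.I) = 1 by simp] at key
  rw [one_pow, one_mul] at key
  have keyR : (∏ k ∈ range m, (2 * Real.sin (π*(k+1)/(m+1))) : ℝ) = (m:ℝ) + 1 := by
    exact_mod_cast key
  rw [← Finset.Ico_add_one_right_eq_Icc, Finset.prod_Ico_eq_prod_range]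
  have hgoal : ∏ k ∈ range (m+1-1), (2 * Real.sin (π * ↑(1+k) / ↑(m+1)))
      = ∏ k ∈ range m, (2 * Real.sin (π*(k+1)/(m+1))) := by
    refine Finset.prod_congr (by norm_num) fun k _ => ?_
    congr 2
    push_cast
    ring
  rw [hgoal, keyR]
  push_cast
  ring

private lemma aux_T (n : ℕ) (hn : 0 < n) :
    ∏ m ∈ Icc 1 (n-1), (2 * Real.sin (π * m / n)) ^ (n - m) = (n:ℝ) ^ ((n:ℝ)/2) := by
  set T := ∏ m ∈ Icc 1 (n-1), (2 * Real.sin (π * m / n)) ^ (n - m) with hT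
  have hpos : ∀ m ∈ Icc 1 (n-1), 0 < 2 * Real.sin (π * m / n) := by
    intro m hm
    simp only [mem_Icc] at hm
    have hmn : (m:ℝ) < n := by exact_mod_cast (by omega : m < n)
    have hm0 : (0:ℝ) < m := by exact_mod_cast (by omega : 0 < m)
    have hn0 : (0:ℝ) < n := by exact_mod_cast hn
    have h1 : 0 < π * m / n := by positivity
    have h2 : π * m / n < π := by
      rw [div_lt_iff₀ hn0]
      nlinarith [Real.pi_pos]
    nlinarith [Real.sin_pos_of_pos_of_lt_pi h1 h2]
  have hTpos : 0 < T := Finset.prod_pos fun m hm => pow_pos (hpos m hm) _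
  have hswap : T = ∏ m ∈ Icc 1 (n-1), (2 * Real.sin (π * m / n)) ^ m := by
    rw [hT]
    refine Finset.prod_nbij' (fun m => n - m) (fun m => n - m) ?_ ?_ ?_ ?_ ?_
    · intro m hm; simp only [mem_Icc] at *; omega
    · intro m hm; simp only [mem_Icc] at *; omega
    · intro m hm; simp only [mem_Icc] at *; omega
    · intro m hm; simp only [mem_Icc] at *; omega
    · intro m hm
      simp only [mem_Icc] at hm
      have hs : Real.sin (π * ↑(n-m) / n) = Real.sin (π * m / n) := by
        rw [show (π * ↑(n-m) / n : ℝ) = π - π * m / n by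
          rw [Nat.cast_sub (by omega)]
          have hn0 : ((n:ℝ)) ≠ 0 := by positivity
          field_simp]
        exact Real.sin_pi_sub _
      rw [hs]
  have hT2 : T^2 = (n:ℝ)^(n:ℕ) := by
    rw [sq]
    nth_rewrite 2 [hswap]
    rw [← Finset.prod_mul_distrib]
    have h5 : ∀ m ∈ Icc 1 (n-1), (2*Real.sin (π*m/n))^(n-m) * (2*Real.sin (π*m/n))^m
        = (2*Real.sin (π*m/n))^n := by
      intro m hm; simp only [mem_Icc] at hm; rw [← pow_add]; congr 1; omega
    rw [Finset.prod_congr rfl h5, Finset.prod_pow, aux_prodsin n hn]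
  have hTs : T = Real.sqrt ((n:ℝ)^(n:ℕ)) := by
    rw [← hT2, Real.sqrt_sq hTpos.le]
  rw [hTs, Real.sqrt_eq_rpow, ← Real.rpow_natCast (n:ℝ) n, ← Real.rpow_mul (Nat.cast_nonneg n)]
  congr 1
  ring

private lemma aux_expI : Complex.exp ((↑(π/2 : ℝ)) * I) = I := by
  rw [Complex.exp_mul_I]
  simp [← Complex.ofReal_cos, ← Complex.ofReal_sin, Real.cos_pi_div_two, Real.sin_pi_div_two]

private lemma aux_main (n : ℕ) (hn : 0 < n) :
    ∏ i ∈ Icc 1 n, ∏ j ∈ Icc (i + 1) n,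
        (Complex.exp (2*↑π*I/(n:ℂ)) ^ j - Complex.exp (2*↑π*I/(n:ℂ)) ^ i)
      = I ^ (n * (n - 1) / 2) * I ^ (n ^ 2 - 1) * (((n : ℝ) ^ ((n : ℝ) / 2) : ℝ) : ℂ) := by
  have hn0 : ((n:ℂ)) ≠ 0 := Nat.cast_ne_zero.mpr hn.ne'
  have hnR : ((n:ℝ)) ≠ 0 := Nat.cast_ne_zero.mpr hn.ne'
  have hfac : ∀ i ∈ Icc 1 n, ∀ j ∈ Icc (i+1) n,
      Complex.exp (2*↑π*I/(n:ℂ)) ^ j - Complex.exp (2*↑π*I/(n:ℂ)) ^ i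
        = Complex.exp (((i+j : ℕ) : ℂ) * (↑(π/n : ℝ) * I)) * I
            * (((2 * Real.sin (π * ((j-i : ℕ):ℝ) / n) : ℝ)) : ℂ) := by
    intro i hi j hj
    simp only [mem_Icc] at hi hj
    rw [← Complex.exp_nat_mul, ← Complex.exp_nat_mul]
    have e := aux_exp_sub_exp ((j:ℂ)*↑π/n) ((i:ℂ)*↑π/n)
    rw [show 2 * ((j:ℂ)*↑π/n) * I = (j:ℂ) * (2*↑π*I/n) by ring,
        show 2 * ((i:ℂ)*↑π/n) * I = (i:ℂ) * (2*↑π*I/n) by ring] at e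
    rw [e]
    rw [show ((j:ℂ)*↑π/n + (i:ℂ)*↑π/n) * I = ((i+j : ℕ) : ℂ) * (↑(π/n : ℝ) * I) by
      push_cast; ring]
    congr 1
    have harg : (j:ℂ)*↑π/n - (i:ℂ)*↑π/n = (((π * ((j - i : ℕ):ℝ) / n) : ℝ) : ℂ) := by
      push_cast [Nat.cast_sub (show i ≤ j by omega)]
      ring
    rw [harg, ← Complex.ofReal_sin]
    norm_cast
  rw [Finset.prod_congr rfl fun i hi => Finset.prod_congr rfl (hfac i hi)]
  simp only [Finset.prod_mul_distrib]
  -- exp part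
  have hexp : ∏ i ∈ Icc 1 n, ∏ j ∈ Icc (i+1) n,
      Complex.exp (((i+j : ℕ) : ℂ) * (↑(π/n : ℝ) * I)) = I ^ (n^2 - 1) := by
    simp only [← Complex.exp_sum]
    have h1 : (∑ i ∈ Icc 1 n, ∑ j ∈ Icc (i+1) n, ((i+j : ℕ) : ℂ) * (↑(π/n : ℝ) * I))
        = ((∑ i ∈ Icc 1 n, ∑ j ∈ Icc (i+1) n, (i+j) : ℕ) : ℂ) * (↑(π/n : ℝ) * I) := by
      simp only [← Finset.sum_mul]
      congr 1
      push_cast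
      rfl
    rw [h1]
    have hS := aux_sumS n
    have hcast := congrArg (Nat.cast : ℕ → ℂ) hS
    push_cast [Nat.cast_sub hn] at hcast
    rw [show ((∑ i ∈ Icc 1 n, ∑ j ∈ Icc (i+1) n, (i+j) : ℕ) : ℂ) * (↑(π/n : ℝ) * I)
        = ((n^2-1 : ℕ):ℂ) * (↑(π/2 : ℝ) * I) by
      push_cast [Nat.cast_sub (Nat.one_le_pow _ _ hn)]
      field_simp
      linear_combination hcast]
    rw [Complex.exp_nat_mul, aux_expI]
  rw [hexp]
  -- I part
  have hIpart : ∏ i ∈ Icc 1 n, ∏ _j ∈ Icc (i+1) n, (I:ℂ) = I ^ (n * (n-1) / 2) := by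
    have h1 : ∀ i ∈ Icc 1 n, ∏ _j ∈ Icc (i+1) n, (I:ℂ) = I ^ (n - i) := by
      intro i hi
      rw [Finset.prod_const, Nat.card_Icc]
      congr 1 <;> omega
    rw [Finset.prod_congr rfl h1, Finset.prod_pow_eq_pow_sum, aux_sumN n hn]
  rw [hIpart]
  -- sin part
  have hsin : ∏ i ∈ Icc 1 n, ∏ j ∈ Icc (i+1) n,
      (((2 * Real.sin (π * ((j-i : ℕ):ℝ) / n) : ℝ)) : ℂ)
        = (((n : ℝ) ^ ((n : ℝ) / 2) : ℝ) : ℂ) := by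
    rw [aux_reshape (fun m => (((2 * Real.sin (π * (m:ℝ) / n) : ℝ)) : ℂ)) n]
    rw [show ∏ m ∈ Icc 1 (n-1), (((2*Real.sin (π*(m:ℝ)/n) : ℝ)):ℂ)^(n-m)
        = ((∏ m ∈ Icc 1 (n-1), (2*Real.sin (π*(m:ℝ)/n))^(n-m) : ℝ) : ℂ) by push_cast; rfl]
    rw [aux_T n hn]
  rw [hsin]
  ring

private lemma aux_sign (A B q r : ℕ) (h : A + B = 4*q + r) :
    (I:ℂ)^A * I^B = I^r := by
  rw [← pow_add, h, pow_add, pow_mul, Complex.I_pow_four, one_pow, one_mul]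

private lemma aux_neg_even (c : ℕ) : ((-1:ℂ))^(2*c) = 1 := by
  rw [pow_mul]; norm_num

private lemma aux_neg_odd (c : ℕ) : ((-1:ℂ))^(2*c+1) = -1 := by
  rw [pow_succ, aux_neg_even]; norm_num

private lemma aux_I3 : (I:ℂ)^3 = -I := by
  rw [pow_succ, Complex.I_sq]; ring

theorem stmt_9 (p k : ℕ) (hp : p.Prime) (hodd : Odd p) (hk : 0 < k) (hkd : k ∣ p - 1)
    (n : ℕ) (hn : n = (p - 1) / k)
    (ζ : ℂ) (hζ : ζ = Complex.exp (2 * Real.pi * Complex.I / ((p : ℂ) - 1))) :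
    (padicValNat 2 n = 1 →
      ∏ i ∈ Finset.Icc 1 n, ∏ j ∈ Finset.Icc (i + 1) n, (ζ ^ (k * j) - ζ ^ (k * i)) =
        (-1 : ℂ) ^ ((n - 2) / 4) * (((n : ℝ) ^ ((n : ℝ) / 2) : ℝ) : ℂ)) ∧
    (1 < padicValNat 2 n →
      ∏ i ∈ Finset.Icc 1 n, ∏ j ∈ Finset.Icc (i + 1) n, (ζ ^ (k * j) - ζ ^ (k * i)) =
        (-1 : ℂ) ^ ((n - 4) / 4) * Complex.I * (((n : ℝ) ^ ((n : ℝ) / 2) : ℝ) : ℂ)) ∧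
    (n % 4 = 1 →
      ∏ i ∈ Finset.Icc 1 n, ∏ j ∈ Finset.Icc (i + 1) n, (ζ ^ (k * j) - ζ ^ (k * i)) =
        (-1 : ℂ) ^ ((n - 1) / 4) * (((n : ℝ) ^ ((n : ℝ) / 2) : ℝ) : ℂ)) ∧
    (n % 4 = 3 →
      ∏ i ∈ Finset.Icc 1 n, ∏ j ∈ Finset.Icc (i + 1) n, (ζ ^ (k * j) - ζ ^ (k * i)) =
        (-1 : ℂ) ^ ((n + 1) / 4) * Complex.I * (((n : ℝ) ^ ((n : ℝ) / 2) : ℝ) : ℂ)) := by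
  have hp3 : 3 ≤ p := by
    have h2 := hp.two_le
    have ho := Nat.odd_iff.mp hodd
    omega
  have hkn : k * n = p - 1 := by rw [hn]; exact Nat.mul_div_cancel' hkd
  have hn1 : 0 < n := by
    rcases Nat.eq_zero_or_pos n with h | h
    · rw [h, mul_zero] at hkn; omega
    · exact h
  have hcast : ((p:ℂ) - 1) = ((k*n : ℕ) : ℂ) := by
    rw [hkn]; push_cast [Nat.cast_sub (by omega : 1 ≤ p)]; ring
  have hk0 : ((k:ℂ)) ≠ 0 := Nat.cast_ne_zero.mpr hk.ne'
  have hn0 : ((n:ℂ)) ≠ 0 := Nat.cast_ne_zero.mpr hn1.ne'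
  have hzeta : ∀ m : ℕ, ζ ^ (k * m) = Complex.exp (2*↑π*I/(n:ℂ)) ^ m := by
    intro m
    rw [hζ, hcast, ← Complex.exp_nat_mul, ← Complex.exp_nat_mul]
    congr 1
    push_cast
    field_simp
  have key : ∏ i ∈ Icc 1 n, ∏ j ∈ Icc (i+1) n, (ζ ^ (k*j) - ζ ^ (k*i))
      = I ^ (n * (n - 1) / 2) * I ^ (n ^ 2 - 1) * (((n : ℝ) ^ ((n : ℝ) / 2) : ℝ) : ℂ) := by
    rw [← aux_main n hn1]
    exact Finset.prod_congr rfl fun i _ => Finset.prod_congr rfl fun j _ => by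
      rw [hzeta, hzeta]
  refine ⟨?_, ?_, ?_, ?_⟩
  · -- ν₂(n) = 1 : n ≡ 2 mod 4
    intro hv
    have hd1 : 2 ∣ n := by
      have h := pow_padicValNat_dvd (p := 2) (n := n)
      rwa [hv, pow_one] at h
    have hd2 : ¬ (2^2 ∣ n) := by
      rw [Nat.Prime.pow_dvd_iff_le_factorization Nat.prime_two hn1.ne',
        Nat.factorization_def n Nat.prime_two, hv]
      omega
    have h4 : n % 4 = 2 := by omega
    have h8 : n % 8 = 2 ∨ n % 8 = 6 := by omega
    rw [key]
    rcases h8 with h8 | h8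
    · obtain ⟨c, hc⟩ : ∃ c, n = 8*c+2 := ⟨n/8, by omega⟩
      have ha : n * (n-1) / 2 = 32*(c*c)+12*c+1 := by
        rw [hc]
        apply Nat.div_eq_of_eq_mul_left (by norm_num)
        rw [show 8*c+2-1 = 8*c+1 by omega]; ring
      have hb : n^2 - 1 = 64*(c*c)+32*c+3 := by
        rw [hc]; apply Nat.sub_eq_of_eq_add; ring
      have hr : (n-2)/4 = 2*c := by omega
      rw [aux_sign _ _ (24*(c*c)+11*c+1) 0 (by rw [ha, hb]; ring), hr, pow_zero, one_mul,
        aux_neg_even, one_mul]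
    · obtain ⟨c, hc⟩ : ∃ c, n = 8*c+6 := ⟨n/8, by omega⟩
      have ha : n * (n-1) / 2 = 32*(c*c)+44*c+15 := by
        rw [hc]
        apply Nat.div_eq_of_eq_mul_left (by norm_num)
        rw [show 8*c+6-1 = 8*c+5 by omega]; ring
      have hb : n^2 - 1 = 64*(c*c)+96*c+35 := by
        rw [hc]; apply Nat.sub_eq_of_eq_add; ring
      have hr : (n-2)/4 = 2*c+1 := by omega
      rw [aux_sign _ _ (24*(c*c)+35*c+12) 2 (by rw [ha, hb]; ring), hr, Complex.I_sq,
        aux_neg_odd]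
  · -- ν₂(n) > 1 : 4 ∣ n
    intro hv
    have hd1 : 2^2 ∣ n := dvd_trans (pow_dvd_pow 2 hv) pow_padicValNat_dvd
    have h4 : n % 4 = 0 := by omega
    have h8 : n % 8 = 4 ∨ n % 8 = 0 := by omega
    rw [key]
    rcases h8 with h8 | h8
    · obtain ⟨c, hc⟩ : ∃ c, n = 8*c+4 := ⟨n/8, by omega⟩
      have ha : n * (n-1) / 2 = 32*(c*c)+28*c+6 := by
        rw [hc]
        apply Nat.div_eq_of_eq_mul_left (by norm_num)
        rw [show 8*c+4-1 = 8*c+3 by omega]; ring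
      have hb : n^2 - 1 = 64*(c*c)+64*c+15 := by
        rw [hc]; apply Nat.sub_eq_of_eq_add; ring
      have hr : (n-4)/4 = 2*c := by omega
      rw [aux_sign _ _ (24*(c*c)+23*c+5) 1 (by rw [ha, hb]; ring), hr, pow_one,
        aux_neg_even, one_mul]
    · obtain ⟨c, hc⟩ : ∃ c, n = 8*c+8 := ⟨n/8 - 1, by omega⟩
      have ha : n * (n-1) / 2 = 32*(c*c)+60*c+28 := by
        rw [hc]
        apply Nat.div_eq_of_eq_mul_left (by norm_num)
        rw [show 8*c+8-1 = 8*c+7 by omega]; ring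
      have hb : n^2 - 1 = 64*(c*c)+128*c+63 := by
        rw [hc]; apply Nat.sub_eq_of_eq_add; ring
      have hr : (n-4)/4 = 2*c+1 := by omega
      rw [aux_sign _ _ (24*(c*c)+47*c+22) 3 (by rw [ha, hb]; ring), hr, aux_I3,
        aux_neg_odd]
      ring
  · -- n ≡ 1 mod 4
    intro h4
    have h8 : n % 8 = 1 ∨ n % 8 = 5 := by omega
    rw [key]
    rcases h8 with h8 | h8
    · obtain ⟨c, hc⟩ : ∃ c, n = 8*c+1 := ⟨n/8, by omega⟩
      have ha : n * (n-1) / 2 = 32*(c*c)+4*c := by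
        rw [hc]
        apply Nat.div_eq_of_eq_mul_left (by norm_num)
        rw [show 8*c+1-1 = 8*c by omega]; ring
      have hb : n^2 - 1 = 64*(c*c)+16*c := by
        rw [hc]; apply Nat.sub_eq_of_eq_add; ring
      have hr : (n-1)/4 = 2*c := by omega
      rw [aux_sign _ _ (24*(c*c)+5*c) 0 (by rw [ha, hb]; ring), hr, pow_zero, one_mul,
        aux_neg_even, one_mul]
    · obtain ⟨c, hc⟩ : ∃ c, n = 8*c+5 := ⟨n/8, by omega⟩
      have ha : n * (n-1) / 2 = 32*(c*c)+36*c+10 := by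
        rw [hc]
        apply Nat.div_eq_of_eq_mul_left (by norm_num)
        rw [show 8*c+5-1 = 8*c+4 by omega]; ring
      have hb : n^2 - 1 = 64*(c*c)+80*c+24 := by
        rw [hc]; apply Nat.sub_eq_of_eq_add; ring
      have hr : (n-1)/4 = 2*c+1 := by omega
      rw [aux_sign _ _ (24*(c*c)+29*c+8) 2 (by rw [ha, hb]; ring), hr, Complex.I_sq,
        aux_neg_odd]
  · -- n ≡ 3 mod 4
    intro h4
    have h8 : n % 8 = 3 ∨ n % 8 = 7 := by omega
    rw [key]
    rcases h8 with h8 | h8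
    · obtain ⟨c, hc⟩ : ∃ c, n = 8*c+3 := ⟨n/8, by omega⟩
      have ha : n * (n-1) / 2 = 32*(c*c)+20*c+3 := by
        rw [hc]
        apply Nat.div_eq_of_eq_mul_left (by norm_num)
        rw [show 8*c+3-1 = 8*c+2 by omega]; ring
      have hb : n^2 - 1 = 64*(c*c)+48*c+8 := by
        rw [hc]; apply Nat.sub_eq_of_eq_add; ring
      have hr : (n+1)/4 = 2*c+1 := by omega
      rw [aux_sign _ _ (24*(c*c)+17*c+2) 3 (by rw [ha, hb]; ring), hr, aux_I3,
        aux_neg_odd]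
      ring
    · obtain ⟨c, hc⟩ : ∃ c, n = 8*c+7 := ⟨n/8, by omega⟩
      have ha : n * (n-1) / 2 = 32*(c*c)+52*c+21 := by
        rw [hc]
        apply Nat.div_eq_of_eq_mul_left (by norm_num)
        rw [show 8*c+7-1 = 8*c+6 by omega]; ring
      have hb : n^2 - 1 = 64*(c*c)+112*c+48 := by
        rw [hc]; apply Nat.sub_eq_of_eq_add; ring
      have hr : (n+1)/4 = 2*(c+1) := by omega
      rw [aux_sign _ _ (24*(c*c)+41*c+17) 1 (by rw [ha, hb]; ring), hr, pow_one,
        aux_neg_even, one_mul]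
end

section
/- Let p be an odd prime, let k be a positive integer with k | p − 1, set n = (p−1)/k, and assume n is even. Let P(x) = ∏_{1≤i<j≤n} (x^{kj} − x^{ki}) ∈ ℤ[x], and let G(x) = (−1)^{(n−2)/4} · n^{n/2} if ν_2(n) = 1, and G(x) = (−1)^{(n−4)/4} · n^{n/2} · x^{(p−1)/4} if ν_2(n) > 1. Then the (p−1)-th cyclotomic polynomial Φ_{p−1}(x) divides P(x) − G(x) in ℤ[x]. -/
open Finset Polynomial Complex

namespace Stmt11Aux

lemma gauss (n : ℕ) : 2 * ∑ j ∈ Finset.Icc 1 n, j = n * (n + 1) := by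
  induction n with
  | zero => simp
  | succ m ih =>
    rw [Finset.sum_Icc_succ_top (by omega), Nat.mul_add, ih]
    ring

lemma cardsum (n : ℕ) : 2 * ∑ i ∈ Finset.Icc 1 n, (n - i) = n * (n - 1) := by
  induction n with
  | zero => simp
  | succ m ih =>
    rw [Finset.sum_Icc_succ_top (by omega)]
    have h1 : ∑ i ∈ Finset.Icc 1 m, (m + 1 - i) = (∑ i ∈ Finset.Icc 1 m, (m - i)) + m := by
      have : ∀ i ∈ Finset.Icc 1 m, (m + 1 - i) = (m - i) + 1 := by
        intro i hi; simp only [Finset.mem_Icc] at hi; omega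
      rw [Finset.sum_congr rfl this, Finset.sum_add_distrib, Finset.sum_const, Nat.card_Icc]
      simp
    rw [h1]
    have h2 : (m + 1) * (m + 1 - 1) = m * (m - 1) + 2 * m := by
      cases m with
      | zero => simp
      | succ s => simp only [Nat.add_sub_cancel]; ring
    omega

lemma tsum (n : ℕ) :
    2 * ∑ i ∈ Finset.Icc 1 n, ∑ j ∈ Finset.Icc (i + 1) n, (i + j) = (n - 1) * n * (n + 1) := by
  induction n with
  | zero => simp
  | succ m ih =>
    rw [Finset.sum_Icc_succ_top (by omega)]
    have hempty : Finset.Icc (m + 1 + 1) (m + 1) = (∅ : Finset ℕ) := by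
      apply Finset.Icc_eq_empty; omega
    rw [hempty, Finset.sum_empty]
    have h1 : ∀ i ∈ Finset.Icc 1 m,
        ∑ j ∈ Finset.Icc (i + 1) (m + 1), (i + j)
          = (∑ j ∈ Finset.Icc (i + 1) m, (i + j)) + (i + (m + 1)) := by
      intro i hi; simp only [Finset.mem_Icc] at hi
      rw [Finset.sum_Icc_succ_top (by omega)]
    rw [Finset.sum_congr rfl h1, Finset.sum_add_distrib, Finset.sum_add_distrib,
      Finset.sum_const, Nat.card_Icc]
    have hg := gauss m
    simp only [smul_eq_mul, Nat.add_sub_cancel]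
    have h2 : m * (m + 1) * (m + 1 + 1) = (m - 1) * m * (m + 1) + m * (m + 1) + 2 * (m * (m + 1)) := by
      cases m with
      | zero => simp
      | succ s => simp only [Nat.add_sub_cancel]; ring
    linarith [ih, hg, h2]

lemma tri (n : ℕ) (g : ℕ → ℕ → ℂ) :
    ∏ i ∈ Finset.Icc 1 n, ∏ j ∈ Finset.Icc (i + 1) n, g i j
      = ∏ j ∈ Finset.Icc 1 n, ∏ i ∈ Finset.Icc 1 (j - 1), g i j := by
  rw [Finset.prod_sigma', Finset.prod_sigma']
  refine Finset.prod_nbij' (fun x => ⟨x.2, x.1⟩) (fun x => ⟨x.2, x.1⟩) ?_ ?_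
    (fun _ _ => rfl) (fun _ _ => rfl) (fun _ _ => rfl) <;>
  simp only [Finset.mem_Icc, Sigma.forall, Finset.mem_sigma] <;>
  rintro a b ⟨⟨h1, h2⟩, h3, h4⟩ <;> omega


lemma prod_X_sub (n : ℕ) (hn : 0 < n) {ω : ℂ} (hω : IsPrimitiveRoot ω n) :
    ∏ i ∈ Finset.Icc 1 n, (X - C (ω ^ i)) = X ^ n - 1 := by
  rw [Polynomial.X_pow_sub_one_eq_prod hn hω]
  apply Finset.prod_nbij (fun i => ω ^ i)
  · intro i _
    refine (Polynomial.mem_nthRootsFinset hn 1).2 ?_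
    rw [← pow_mul, mul_comm, pow_mul, hω.pow_eq_one, one_pow]
  · intro i hi j hj hij
    simp only [Finset.coe_Icc, Set.mem_Icc] at hi hj
    have hne : ω ≠ 0 := hω.ne_zero hn.ne'
    have key : ∀ a b : ℕ, a ≤ b → b ≤ n → 1 ≤ a → ω ^ a = ω ^ b → a = b := by
      intro a b hab hbn ha h
      have h2 : ω ^ a * ω ^ (b - a) = ω ^ a * 1 := by
        rw [← pow_add, show a + (b - a) = b by omega, ← h, mul_one]
      have h3 : ω ^ (b - a) = 1 := mul_left_cancel₀ (pow_ne_zero a hne) h2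
      have h4 := (hω.pow_eq_one_iff_dvd _).1 h3
      rcases Nat.eq_zero_or_pos (b - a) with h5 | h5
      · omega
      · have := Nat.le_of_dvd h5 h4; omega
    rcases le_total i j with h | h
    · exact key i j h hj.2 hi.1 hij
    · exact (key j i h hi.2 hj.1 hij.symm).symm
  · intro x hx
    have hx1 : x ^ n = 1 := (Polynomial.mem_nthRootsFinset hn 1).1 hx
    have : NeZero n := ⟨hn.ne'⟩
    obtain ⟨i, hi, rfl⟩ := hω.eq_pow_of_pow_eq_one hx1
    rcases Nat.eq_zero_or_pos i with rfl | hipos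
    · exact ⟨n, by simp only [Finset.coe_Icc, Set.mem_Icc]; omega, by simp [hω.pow_eq_one]⟩
    · exact ⟨i, by simp [Finset.mem_Icc]; omega, rfl⟩
  · intro a _; rfl

lemma row (n : ℕ) (hn : 0 < n) {ω : ℂ} (hω : IsPrimitiveRoot ω n) {j : ℕ}
    (hj : j ∈ Finset.Icc 1 n) :
    ∏ i ∈ (Finset.Icc 1 n).erase j, (ω ^ j - ω ^ i) = n * ω ^ (j * (n - 1)) := by
  have hpoly : (X - C (ω ^ j)) * ∏ i ∈ (Finset.Icc 1 n).erase j, (X - C (ω ^ i))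
      = X ^ n - 1 := by
    rw [Finset.mul_prod_erase (Finset.Icc 1 n) (fun i => X - C (ω ^ i)) hj,
      prod_X_sub n hn hω]
  have hder := congrArg Polynomial.derivative hpoly
  rw [Polynomial.derivative_mul, Polynomial.derivative_sub, Polynomial.derivative_X,
    Polynomial.derivative_C, Polynomial.derivative_sub, Polynomial.derivative_X_pow,
    Polynomial.derivative_one] at hder
  have hev := congrArg (Polynomial.eval (ω ^ j)) hder
  simp only [Polynomial.eval_add, Polynomial.eval_mul, Polynomial.eval_sub,
    Polynomial.eval_X, Polynomial.eval_C, Polynomial.eval_prod, Polynomial.eval_pow,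
    Polynomial.eval_one, Polynomial.eval_natCast, sub_self, sub_zero, zero_mul, mul_zero,
    one_mul, add_zero, zero_add] at hev
  rw [hev, ← pow_mul]

lemma factor {n i j : ℕ} (hn : 0 < n) (hij : i < j) :
    Complex.exp (2 * ↑Real.pi * I / ↑n) ^ j - Complex.exp (2 * ↑Real.pi * I / ↑n) ^ i
      = ((2 * Real.sin (Real.pi * ↑(j - i) / ↑n) : ℝ) : ℂ)
        * (Complex.exp (↑Real.pi * I * (↑i + ↑j) / ↑n) * I) := by
  have hn0 : (n : ℂ) ≠ 0 := Nat.cast_ne_zero.2 hn.ne'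
  have hd : (↑(j - i) : ℂ) = (j : ℂ) - (i : ℂ) := by
    push_cast [Nat.cast_sub hij.le]; ring
  set θ : ℂ := ↑Real.pi * ↑(j - i) / ↑n with hθ
  set A : ℂ := ↑Real.pi * I * (↑i + ↑j) / ↑n with hA
  rw [← Complex.exp_nat_mul, ← Complex.exp_nat_mul]
  have h1 : (j : ℂ) * (2 * ↑Real.pi * I / ↑n) = A + θ * I := by
    rw [hθ, hA, hd]; field_simp; ring
  have h2 : (i : ℂ) * (2 * ↑Real.pi * I / ↑n) = A + -θ * I := by
    rw [hθ, hA, hd]; field_simp; ring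
  have hs : ((2 * Real.sin (Real.pi * ↑(j - i) / ↑n) : ℝ) : ℂ) = 2 * Complex.sin θ := by
    rw [hθ]; push_cast; ring
  rw [h1, h2, Complex.exp_add, Complex.exp_add, Complex.exp_mul_I, Complex.exp_mul_I,
    Complex.cos_neg, Complex.sin_neg, hs]
  ring


lemma odd_sq_sub_one {n : ℕ} (hn2 : 2 ≤ n) (hne : Even n) : Odd (n ^ 2 - 1) := by
  obtain ⟨c, hc⟩ := hne
  have h5 : 1 ≤ c := by omega
  have h4 : n ^ 2 = 2 * (2 * c * c) := by rw [pow_two, hc]; ring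
  have h6 : 1 ≤ 2 * c * c := by nlinarith
  revert h4 h6
  generalize 2 * c * c = m
  intro h4 h6
  rw [h4]
  exact ⟨m - 1, by omega⟩

lemma halfarg (a b c x : ℂ) (hc : c ≠ 0) (h : 2 * a = c * b) :
    a * (x * I / c) = b * (x / 2 * I) := by
  field_simp
  linear_combination x * h

lemma fullarg (a b c x : ℂ) (hc : c ≠ 0) (h : 2 * a = c * b) :
    a * (2 * x * I / c) = b * (x * I) := by
  field_simp
  linear_combination x * h

lemma exp_pi_div_two_mul_I : Complex.exp (↑Real.pi / 2 * I) = I := by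
  have h : (↑Real.pi / 2 : ℂ) = ((Real.pi / 2 : ℝ) : ℂ) := by push_cast; ring
  rw [Complex.exp_mul_I, h, ← Complex.ofReal_cos, ← Complex.ofReal_sin,
    Real.cos_pi_div_two, Real.sin_pi_div_two]
  simp

lemma key (n : ℕ) (hn2 : 2 ≤ n) (hne : Even n) :
    ∏ i ∈ Finset.Icc 1 n, ∏ j ∈ Finset.Icc (i + 1) n,
        (Complex.exp (2 * ↑Real.pi * I / ↑n) ^ j - Complex.exp (2 * ↑Real.pi * I / ↑n) ^ i)
      = (n : ℂ) ^ (n / 2) * I ^ (n * (n - 1) / 2 + (n ^ 2 - 1)) := by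
  have hn : 0 < n := by omega
  have hn0 : (n : ℂ) ≠ 0 := Nat.cast_ne_zero.2 hn.ne'
  set ω : ℂ := Complex.exp (2 * ↑Real.pi * I / ↑n) with hω
  have hprim : IsPrimitiveRoot ω n := Complex.isPrimitiveRoot_exp n (by omega)
  have hN2 : 2 * ∑ i ∈ Finset.Icc 1 n, (n - i) = n * (n - 1) := cardsum n
  set N : ℕ := ∑ i ∈ Finset.Icc 1 n, (n - i) with hNdef
  have hT2 : 2 * ∑ i ∈ Finset.Icc 1 n, ∑ j ∈ Finset.Icc (i + 1) n, (i + j)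
      = (n - 1) * n * (n + 1) := tsum n
  set T : ℕ := ∑ i ∈ Finset.Icc 1 n, ∑ j ∈ Finset.Icc (i + 1) n, (i + j) with hTdef
  have hsq : (n - 1) * n * (n + 1) = n * (n ^ 2 - 1) := by
    cases n with
    | zero => simp
    | succ m =>
      simp only [Nat.add_sub_cancel]
      have h : (m + 1) ^ 2 = m * (m + 2) + 1 := by ring
      have h2 : (m + 1) ^ 2 - 1 = m * (m + 2) := by omega
      rw [h2]; ring
  set R : ℝ := ∏ i ∈ Finset.Icc 1 n, ∏ j ∈ Finset.Icc (i + 1) n,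
      (2 * Real.sin (Real.pi * ↑(j - i) / ↑n)) with hRdef
  have hRpos : 0 < R := by
    refine Finset.prod_pos fun i hi => Finset.prod_pos fun j hj => ?_
    simp only [Finset.mem_Icc] at hi hj
    have hd1 : (0 : ℝ) < ↑(j - i) := by
      have : 0 < j - i := by omega
      exact_mod_cast this
    have hdn : ((j - i : ℕ) : ℝ) < (n : ℝ) := by exact_mod_cast (by omega : j - i < n)
    have hnr : (0 : ℝ) < (n : ℝ) := by exact_mod_cast hn
    have h1 : 0 < Real.pi * ↑(j - i) / ↑n := by positivity
    have h2 : Real.pi * ↑(j - i) / ↑n < Real.pi := by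
      rw [div_lt_iff₀ hnr]
      nlinarith [Real.pi_pos]
    have := Real.sin_pos_of_pos_of_lt_pi h1 h2
    linarith
  -- Step 1 : polar form
  have hpolar : ∏ i ∈ Finset.Icc 1 n, ∏ j ∈ Finset.Icc (i + 1) n, (ω ^ j - ω ^ i)
      = (R : ℂ) * (Complex.exp ((T : ℂ) * (↑Real.pi * I / ↑n)) * I ^ N) := by
    have step1 : ∏ i ∈ Finset.Icc 1 n, ∏ j ∈ Finset.Icc (i + 1) n, (ω ^ j - ω ^ i)
        = ∏ i ∈ Finset.Icc 1 n, ∏ j ∈ Finset.Icc (i + 1) n,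
            (((2 * Real.sin (Real.pi * ↑(j - i) / ↑n) : ℝ) : ℂ)
              * Complex.exp (↑Real.pi * I * (↑i + ↑j) / ↑n) * I) := by
      refine Finset.prod_congr rfl fun i hi => Finset.prod_congr rfl fun j hj => ?_
      simp only [Finset.mem_Icc] at hi hj
      rw [hω]
      exact (factor hn (by omega)).trans (mul_assoc _ _ _).symm
    rw [step1]
    simp only [Finset.prod_mul_distrib]
    have pieceR : ∏ i ∈ Finset.Icc 1 n, ∏ j ∈ Finset.Icc (i + 1) n,
        ((2 * Real.sin (Real.pi * ↑(j - i) / ↑n) : ℝ) : ℂ) = (R : ℂ) := by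
      rw [hRdef]; norm_cast
    have pieceI : ∏ i ∈ Finset.Icc 1 n, ∏ j ∈ Finset.Icc (i + 1) n, I = I ^ N := by
      simp only [Finset.prod_const, Nat.card_Icc]
      rw [Finset.prod_pow_eq_pow_sum]
      congr 1
      refine Finset.sum_congr rfl fun i hi => ?_
      simp only [Finset.mem_Icc] at hi; omega
    have pieceE : ∏ i ∈ Finset.Icc 1 n, ∏ j ∈ Finset.Icc (i + 1) n,
        Complex.exp (↑Real.pi * I * (↑i + ↑j) / ↑n)
        = Complex.exp ((T : ℂ) * (↑Real.pi * I / ↑n)) := by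
      have harg : ∀ i j : ℕ, (↑Real.pi * I * (↑i + ↑j) / ↑n : ℂ)
          = ((i + j : ℕ) : ℂ) * (↑Real.pi * I / ↑n) := by
        intro i j; push_cast; ring
      calc ∏ i ∈ Finset.Icc 1 n, ∏ j ∈ Finset.Icc (i + 1) n,
            Complex.exp (↑Real.pi * I * (↑i + ↑j) / ↑n)
          = ∏ i ∈ Finset.Icc 1 n,
              Complex.exp (∑ j ∈ Finset.Icc (i + 1) n, ((i + j : ℕ) : ℂ) * (↑Real.pi * I / ↑n)) := by
            refine Finset.prod_congr rfl fun i hi => ?_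
            rw [Complex.exp_sum]
            exact Finset.prod_congr rfl fun j hj => by rw [harg]
        _ = Complex.exp (∑ i ∈ Finset.Icc 1 n,
              ∑ j ∈ Finset.Icc (i + 1) n, ((i + j : ℕ) : ℂ) * (↑Real.pi * I / ↑n)) := by
            rw [Complex.exp_sum]
        _ = Complex.exp ((T : ℂ) * (↑Real.pi * I / ↑n)) := by
            congr 1
            simp only [← Finset.sum_mul]
            rw [hTdef]
            push_cast
            ring
    rw [pieceR, pieceI, pieceE]
    ring
  -- Step 2 : the exponential of T
  have hexpT : Complex.exp ((T : ℂ) * (↑Real.pi * I / ↑n)) = I ^ (n ^ 2 - 1) := by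
    have h2T : 2 * T = n * (n ^ 2 - 1) := by rw [hT2]; exact hsq
    have hc : ((2 * T : ℕ) : ℂ) = (n : ℂ) * ((n ^ 2 - 1 : ℕ) : ℂ) := by
      rw [h2T]; push_cast; ring
    have harg : (T : ℂ) * (↑Real.pi * I / ↑n) = ((n ^ 2 - 1 : ℕ) : ℂ) * (↑Real.pi / 2 * I) := by
      have h2 : 2 * (T : ℂ) = (n : ℂ) * ((n ^ 2 - 1 : ℕ) : ℂ) := by
        rw [← hc]; push_cast; ring
      exact halfarg _ _ _ _ hn0 h2
    rw [harg, Complex.exp_nat_mul, exp_pi_div_two_mul_I]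
  -- Step 3 : product over all rows
  have hrows : ∏ j ∈ Finset.Icc 1 n, ∏ i ∈ (Finset.Icc 1 n).erase j, (ω ^ j - ω ^ i)
      = -((n : ℂ) ^ n) := by
    have h1 : ∀ j ∈ Finset.Icc 1 n, ∏ i ∈ (Finset.Icc 1 n).erase j, (ω ^ j - ω ^ i)
        = (n : ℂ) * ω ^ (j * (n - 1)) := fun j hj => row n hn hprim hj
    rw [Finset.prod_congr rfl h1, Finset.prod_mul_distrib, Finset.prod_const, Nat.card_Icc,
      Finset.prod_pow_eq_pow_sum]
    have hM2 : 2 * ∑ j ∈ Finset.Icc 1 n, j * (n - 1) = n * (n ^ 2 - 1) := by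
      rw [← Finset.sum_mul, ← mul_assoc, ← hsq]
      rw [show 2 * (∑ j ∈ Finset.Icc 1 n, j) * (n-1) = (2 * ∑ j ∈ Finset.Icc 1 n, j) * (n-1) by ring,
        gauss]
      ring
    have hωM : ω ^ (∑ j ∈ Finset.Icc 1 n, j * (n - 1)) = -1 := by
      set M := ∑ j ∈ Finset.Icc 1 n, j * (n - 1) with hMdef
      rw [hω, ← Complex.exp_nat_mul]
      have hc : ((2 * M : ℕ) : ℂ) = (n : ℂ) * ((n ^ 2 - 1 : ℕ) : ℂ) := by
        rw [hM2]; push_cast; ring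
      have harg : (M : ℂ) * (2 * ↑Real.pi * I / ↑n) = ((n ^ 2 - 1 : ℕ) : ℂ) * (↑Real.pi * I) := by
        have h2 : 2 * (M : ℂ) = (n : ℂ) * ((n ^ 2 - 1 : ℕ) : ℂ) := by
          rw [← hc]; push_cast; ring
        exact fullarg _ _ _ _ hn0 h2
      rw [harg, Complex.exp_nat_mul, Complex.exp_pi_mul_I]
      exact (odd_sq_sub_one hn2 hne).neg_one_pow
    rw [hωM]
    simp only [Nat.add_sub_cancel]
    ring
  -- Step 4 : splitting the rows
  have hsplit : ∏ j ∈ Finset.Icc 1 n, ∏ i ∈ (Finset.Icc 1 n).erase j, (ω ^ j - ω ^ i)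
      = (∏ i ∈ Finset.Icc 1 n, ∏ j ∈ Finset.Icc (i + 1) n, (ω ^ j - ω ^ i))
        * ∏ i ∈ Finset.Icc 1 n, ∏ j ∈ Finset.Icc (i + 1) n, (ω ^ i - ω ^ j) := by
    have h2 : ∀ j ∈ Finset.Icc 1 n, ∏ i ∈ (Finset.Icc 1 n).erase j, (ω ^ j - ω ^ i)
        = (∏ i ∈ Finset.Icc 1 (j - 1), (ω ^ j - ω ^ i))
          * ∏ i ∈ Finset.Icc (j + 1) n, (ω ^ j - ω ^ i) := by
      intro j hj
      simp only [Finset.mem_Icc] at hj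
      have h1 : (Finset.Icc 1 n).erase j = Finset.Icc 1 (j - 1) ∪ Finset.Icc (j + 1) n := by
        ext x
        simp only [Finset.mem_erase, Finset.mem_Icc, Finset.mem_union]
        omega
      rw [h1, Finset.prod_union]
      rw [Finset.disjoint_left]
      intro a ha hb
      simp only [Finset.mem_Icc] at ha hb
      omega
    rw [Finset.prod_congr rfl h2, Finset.prod_mul_distrib, ← tri]
  -- Step 5 : sign of the transposed product
  have hsign : (∏ i ∈ Finset.Icc 1 n, ∏ j ∈ Finset.Icc (i + 1) n, (ω ^ i - ω ^ j))
      = (-1 : ℂ) ^ N * ∏ i ∈ Finset.Icc 1 n, ∏ j ∈ Finset.Icc (i + 1) n, (ω ^ j - ω ^ i) := by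
    have hrow : ∀ i ∈ Finset.Icc 1 n, ∏ j ∈ Finset.Icc (i + 1) n, (ω ^ i - ω ^ j)
        = (-1 : ℂ) ^ (n - i) * ∏ j ∈ Finset.Icc (i + 1) n, (ω ^ j - ω ^ i) := by
      intro i hi
      simp only [Finset.mem_Icc] at hi
      calc ∏ j ∈ Finset.Icc (i + 1) n, (ω ^ i - ω ^ j)
          = ∏ j ∈ Finset.Icc (i + 1) n, ((-1) * (ω ^ j - ω ^ i)) :=
            Finset.prod_congr rfl fun j hj => by ring
        _ = (-1 : ℂ) ^ (Finset.Icc (i + 1) n).card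
              * ∏ j ∈ Finset.Icc (i + 1) n, (ω ^ j - ω ^ i) := by
            rw [Finset.prod_mul_distrib, Finset.prod_const]
        _ = (-1 : ℂ) ^ (n - i) * ∏ j ∈ Finset.Icc (i + 1) n, (ω ^ j - ω ^ i) := by
            rw [Nat.card_Icc, show n + 1 - (i + 1) = n - i by omega]
    rw [Finset.prod_congr rfl hrow, Finset.prod_mul_distrib, Finset.prod_pow_eq_pow_sum]
  -- Step 6 : conclude
  have hVsq : (∏ i ∈ Finset.Icc 1 n, ∏ j ∈ Finset.Icc (i + 1) n, (ω ^ j - ω ^ i))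
      * ((-1 : ℂ) ^ N * ∏ i ∈ Finset.Icc 1 n, ∏ j ∈ Finset.Icc (i + 1) n, (ω ^ j - ω ^ i))
      = -((n : ℂ) ^ n) := by
    rw [← hsign, ← hsplit, hrows]
  rw [hpolar, hexpT] at hVsq ⊢
  have hoddn2 : Odd (n ^ 2 - 1 + N) = Odd (n ^ 2 - 1 + N) := rfl
  -- extract R² = n^n
  have hR2 : (R : ℂ) ^ 2 = (n : ℂ) ^ n := by
    have hI2 : (I ^ (n ^ 2 - 1) * I ^ N) * (I ^ (n ^ 2 - 1) * I ^ N) = -((-1 : ℂ) ^ N) := by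
      have : (I ^ (n ^ 2 - 1) * I ^ N) * (I ^ (n ^ 2 - 1) * I ^ N)
          = (I ^ 2) ^ (n ^ 2 - 1) * (I ^ 2) ^ N := by ring
      rw [this, Complex.I_sq]
      rw [(odd_sq_sub_one hn2 hne).neg_one_pow]
      ring
    have expand : ((R : ℂ) * (I ^ (n ^ 2 - 1) * I ^ N))
        * ((-1 : ℂ) ^ N * ((R : ℂ) * (I ^ (n ^ 2 - 1) * I ^ N)))
        = (R : ℂ) ^ 2 * (((I ^ (n ^ 2 - 1) * I ^ N) * (I ^ (n ^ 2 - 1) * I ^ N)) * (-1 : ℂ) ^ N) := by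
      ring
    rw [expand, hI2] at hVsq
    have hm1 : (-((-1 : ℂ) ^ N)) * (-1 : ℂ) ^ N = -1 := by
      rw [show (-((-1 : ℂ) ^ N)) * (-1 : ℂ) ^ N = -(((-1 : ℂ) ^ N) ^ 2) by ring]
      have h5 : ((-1 : ℂ) ^ N) ^ 2 = 1 := by
        rw [← pow_mul, mul_comm, pow_mul, neg_one_sq, one_pow]
      rw [h5]
    rw [hm1] at hVsq
    have := neg_injective (by linear_combination hVsq : -((R:ℂ)^2) = -((n:ℂ)^n))
    exact this
  have hR2' : R ^ 2 = (n : ℝ) ^ n := by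
    have : ((R ^ 2 : ℝ) : ℂ) = (((n : ℝ) ^ n : ℝ) : ℂ) := by push_cast; exact_mod_cast hR2
    exact_mod_cast this
  have hRval : R = (n : ℝ) ^ (n / 2) := by
    have hpow : ((n : ℝ) ^ (n / 2)) ^ 2 = (n : ℝ) ^ n := by
      rw [← pow_mul]
      congr 1
      have := Nat.even_iff.mp hne
      omega
    nlinarith [hRpos, hR2', hpow, pow_nonneg (by positivity : (0:ℝ) ≤ (n:ℝ)) (n / 2)]
  rw [hRval]
  have hNval : n * (n - 1) / 2 = N := by
    rw [← hN2]
    exact Nat.mul_div_cancel_left N two_pos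
  rw [← hNval]
  push_cast
  ring

end Stmt11Aux

open Stmt11Aux

theorem stmt_11 (p k : ℕ) (hp : p.Prime) (hodd : Odd p) (hk : 0 < k) (hkd : k ∣ p - 1)
    (n : ℕ) (hn : n = (p - 1) / k) (hne : Even n) :
    (padicValNat 2 n = 1 →
      Polynomial.cyclotomic (p - 1) ℤ ∣
        (∏ i ∈ Finset.Icc 1 n, ∏ j ∈ Finset.Icc (i + 1) n,
          ((Polynomial.X : Polynomial ℤ) ^ (k * j) - Polynomial.X ^ (k * i))) -
          Polynomial.C ((-1 : ℤ) ^ ((n - 2) / 4) * (n : ℤ) ^ (n / 2))) ∧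
    (1 < padicValNat 2 n →
      Polynomial.cyclotomic (p - 1) ℤ ∣
        (∏ i ∈ Finset.Icc 1 n, ∏ j ∈ Finset.Icc (i + 1) n,
          ((Polynomial.X : Polynomial ℤ) ^ (k * j) - Polynomial.X ^ (k * i))) -
          Polynomial.C ((-1 : ℤ) ^ ((n - 4) / 4) * (n : ℤ) ^ (n / 2)) *
            Polynomial.X ^ ((p - 1) / 4)) := by
  have hp3 : 3 ≤ p := by
    obtain ⟨m, hm⟩ := hodd
    have := hp.two_le
    omega
  have hp1 : 0 < p - 1 := by omega
  have hkn : k * n = p - 1 := by rw [hn]; exact Nat.mul_div_cancel' hkd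
  have hnpos : 0 < n := by
    rcases Nat.eq_zero_or_pos n with h0 | h
    · rw [h0, mul_zero] at hkn; omega
    · exact h
  have hn2 : 2 ≤ n := by
    obtain ⟨c, hc⟩ := hne; omega
  set ζ : ℂ := Complex.exp (2 * ↑Real.pi * I / ↑(p - 1)) with hζdef
  have hζ : IsPrimitiveRoot ζ (p - 1) := Complex.isPrimitiveRoot_exp _ hp1.ne'
  have hk0 : (k : ℂ) ≠ 0 := Nat.cast_ne_zero.2 hk.ne'
  have hn0 : (n : ℂ) ≠ 0 := Nat.cast_ne_zero.2 hnpos.ne'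
  have hωeq : ζ ^ k = Complex.exp (2 * ↑Real.pi * I / ↑n) := by
    rw [hζdef, ← Complex.exp_nat_mul]
    congr 1
    have h1 : ((p - 1 : ℕ) : ℂ) = (k : ℂ) * (n : ℂ) := by rw [← hkn]; push_cast; ring
    rw [h1]
    field_simp
  have hdvd : ∀ F : Polynomial ℤ, Polynomial.aeval ζ F = 0 →
      Polynomial.cyclotomic (p - 1) ℤ ∣ F := by
    intro F hF
    rw [Polynomial.cyclotomic_eq_minpoly hζ hp1]
    exact minpoly.isIntegrallyClosed_dvd (hζ.isIntegral hp1) hF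
  have hprodeval : Polynomial.aeval ζ
      (∏ i ∈ Finset.Icc 1 n, ∏ j ∈ Finset.Icc (i + 1) n,
        ((Polynomial.X : Polynomial ℤ) ^ (k * j) - Polynomial.X ^ (k * i)))
      = (n : ℂ) ^ (n / 2) * I ^ (n * (n - 1) / 2 + (n ^ 2 - 1)) := by
    rw [map_prod]
    have hin : ∀ i ∈ Finset.Icc 1 n, Polynomial.aeval ζ
        (∏ j ∈ Finset.Icc (i + 1) n,
          ((Polynomial.X : Polynomial ℤ) ^ (k * j) - Polynomial.X ^ (k * i)))
        = ∏ j ∈ Finset.Icc (i + 1) n, ((ζ ^ k) ^ j - (ζ ^ k) ^ i) := by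
      intro i _
      rw [map_prod]
      refine Finset.prod_congr rfl fun j _ => ?_
      rw [map_sub, map_pow, map_pow, Polynomial.aeval_X, pow_mul, pow_mul]
    rw [Finset.prod_congr rfl hin, hωeq]
    exact key n hn2 hne
  constructor
  · intro hv
    have h2 : (2 : ℕ) ∣ n := by
      have h := pow_padicValNat_dvd (p := 2) (n := n)
      rw [hv] at h
      simpa using h
    have h4 : ¬ (4 : ℕ) ∣ n := by
      have : Fact (Nat.Prime 2) := ⟨Nat.prime_two⟩
      have h := pow_succ_padicValNat_not_dvd (p := 2) hnpos.ne'
      rw [hv] at h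
      norm_num at h
      exact h
    obtain ⟨t, ht⟩ : ∃ t, n = 4 * t + 2 := ⟨n / 4, by omega⟩
    apply hdvd
    rw [map_sub, hprodeval, Polynomial.aeval_C]
    have hcast : (algebraMap ℤ ℂ) ((-1 : ℤ) ^ ((n - 2) / 4) * (n : ℤ) ^ (n / 2))
        = (-1 : ℂ) ^ ((n - 2) / 4) * (n : ℂ) ^ (n / 2) := by
      push_cast; ring
    rw [hcast, show (n - 2) / 4 = t from by omega]
    have hE : n * (n - 1) / 2 + (n ^ 2 - 1) = 4 * (6 * (t * t) + 5 * t + 1) + 2 * t := by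
      have e1 : n * (n - 1) = 2 * (8 * (t * t) + 6 * t + 1) := by
        rw [ht, show 4 * t + 2 - 1 = 4 * t + 1 from by omega]; ring
      have e2 : n * (n - 1) / 2 = 8 * (t * t) + 6 * t + 1 := by
        rw [e1]; exact Nat.mul_div_cancel_left _ two_pos
      have e3 : n ^ 2 = 16 * (t * t) + 16 * t + 4 := by rw [ht]; ring
      revert e2 e3
      generalize t * t = q
      intro e2 e3
      omega
    rw [hE, pow_add, pow_mul, Complex.I_pow_four, one_pow, pow_mul, Complex.I_sq]
    ring
  · intro hv
    have h4 : (4 : ℕ) ∣ n := by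
      have h22 : (2 : ℕ) ^ 2 ∣ 2 ^ padicValNat 2 n := pow_dvd_pow 2 (by omega)
      have h := pow_padicValNat_dvd (p := 2) (n := n)
      have := dvd_trans h22 h
      norm_num at this
      exact this
    obtain ⟨s, hs⟩ : ∃ s, n = 4 * s + 4 := ⟨n / 4 - 1, by omega⟩
    have h4p : (4 : ℕ) ∣ p - 1 := by rw [← hkn]; exact Dvd.dvd.mul_left h4 k
    have hζ4 : ζ ^ ((p - 1) / 4) = I := by
      obtain ⟨m, hm⟩ := h4p
      have hm1 : (p - 1) / 4 = m := by omega
      have hmpos : 0 < m := by omega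
      have hm0 : (m : ℂ) ≠ 0 := Nat.cast_ne_zero.2 hmpos.ne'
      rw [hm1, hζdef, ← Complex.exp_nat_mul]
      have harg : (m : ℂ) * (2 * ↑Real.pi * I / ↑(p - 1)) = ↑Real.pi / 2 * I := by
        rw [hm]
        push_cast
        field_simp
        ring
      rw [harg, Stmt11Aux.exp_pi_div_two_mul_I]
    apply hdvd
    rw [map_sub, hprodeval, map_mul, map_pow, Polynomial.aeval_C, Polynomial.aeval_X, hζ4]
    have hcast : (algebraMap ℤ ℂ) ((-1 : ℤ) ^ ((n - 4) / 4) * (n : ℤ) ^ (n / 2))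
        = (-1 : ℂ) ^ ((n - 4) / 4) * (n : ℂ) ^ (n / 2) := by
      push_cast; ring
    rw [hcast, show (n - 4) / 4 = s from by omega]
    have hE : n * (n - 1) / 2 + (n ^ 2 - 1) = 4 * (6 * (s * s) + 11 * s + 5) + (2 * s + 1) := by
      have e1 : n * (n - 1) = 2 * (8 * (s * s) + 14 * s + 6) := by
        rw [hs, show 4 * s + 4 - 1 = 4 * s + 3 from by omega]; ring
      have e2 : n * (n - 1) / 2 = 8 * (s * s) + 14 * s + 6 := by
        rw [e1]; exact Nat.mul_div_cancel_left _ two_pos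
      have e3 : n ^ 2 = 16 * (s * s) + 32 * s + 16 := by rw [hs]; ring
      revert e2 e3
      generalize s * s = q
      intro e2 e3
      omega
    rw [hE, pow_add, pow_mul, Complex.I_pow_four, one_pow, pow_succ, pow_mul, Complex.I_sq]
    ring
end

section
/- Let p ≡ 1 (mod 8) be a prime, and for 1 ≤ m ≤ p − 1 let A_m = {x ∈ ℤ : 1 ≤ x ≤ p − 1, (x/p) = ((x+m)/p) = 1}. Then #A_m = (p − 3 − 2(m/p))/4. -/
open Finset
open scoped Classical

/-- The Legendre symbol `(x/p)`. -/
noncomputable def leg (p : ℕ) (x : ℤ) : ℤ :=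
  if (x : ZMod p) = 0 then 0
  else if ∃ y : ZMod p, y ^ 2 = (x : ZMod p) then 1 else -1

/-- `A_m = {1 ≤ x ≤ p − 1 : (x/p) = ((x+m)/p) = 1}`. -/
noncomputable def Am (p m : ℕ) : Finset ℕ :=
  (Finset.Icc 1 (p - 1)).filter (fun x => leg p (x : ℤ) = 1 ∧ leg p ((x : ℤ) + m) = 1)

lemma leg_eq (p : ℕ) [Fact p.Prime] (x : ℤ) :
    leg p x = quadraticChar (ZMod p) (x : ZMod p) := by
  rw [leg, quadraticChar_apply, quadraticCharFun]
  congr 1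
  · congr 1
    simp only [IsSquare, sq, eq_iff_iff]
    constructor
    · rintro ⟨y, hy⟩; exact ⟨y, hy.symm⟩
    · rintro ⟨y, hy⟩; exact ⟨y, hy.symm⟩

theorem stmt_13 (p : ℕ) [Fact p.Prime] (hp8 : p % 8 = 1)
    (m : ℕ) (hm1 : 1 ≤ m) (hmp : m ≤ p - 1) :
    ((Am p m).card : ℤ) = ((p : ℤ) - 3 - 2 * leg p (m : ℤ)) / 4 := by
  have hp := (Fact.out : p.Prime)
  have hp2 : 2 < p := by
    rcases hp.two_le.lt_or_eq with h | h
    · exact h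
    · omega
  have hmlt : m < p := by omega
  set χ := quadraticChar (ZMod p) with hχ
  have hchar : ringChar (ZMod p) ≠ 2 := by
    rw [ZMod.ringChar_zmod_n]; omega
  have hm0 : (m : ZMod p) ≠ 0 := by
    rw [Ne, ZMod.natCast_eq_zero_iff]
    intro h
    have := Nat.le_of_dvd (by omega) h
    omega
  -- χ(-1) = 1
  have hneg1 : χ (-1) = 1 := by
    rw [hχ, quadraticChar_neg_one hchar, ZMod.card]
    rw [ZMod.χ₄_nat_eq_if_mod_four]
    have h4 : p % 4 = 1 := by omega
    have h2 : p % 2 = 1 := by omega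
    simp [h4, h2]
  set S : Finset (ZMod p) := univ.filter (fun a => χ a = 1 ∧ χ (a + m) = 1) with hS
  -- card of Am equals card of S
  have hcard : (Am p m).card = S.card := by
    refine Finset.card_bij (fun x _ => ((x : ZMod p) : ZMod p)) ?_ ?_ ?_
    · intro x hx
      simp only [Am, mem_filter, mem_Icc] at hx
      simp only [hS, mem_filter, mem_univ, true_and]
      obtain ⟨⟨h1, h2⟩, h3, h4⟩ := hx
      rw [leg_eq] at h3 h4
      push_cast at h3 h4
      exact ⟨h3, h4⟩
    · intro x hx y hy hxy
      simp only [Am, mem_filter, mem_Icc] at hx hy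
      have hxlt : x < p := by omega
      have hylt : y < p := by omega
      have := congrArg (ZMod.val) hxy
      rwa [ZMod.val_natCast_of_lt hxlt, ZMod.val_natCast_of_lt hylt] at this
    · intro a ha
      simp only [hS, mem_filter, mem_univ, true_and] at ha
      have ha0 : a ≠ 0 := by
        intro h; rw [h] at ha; simp [hχ] at ha
      refine ⟨a.val, ?_, ?_⟩
      · simp only [Am, mem_filter, mem_Icc]
        have hlt : a.val < p := ZMod.val_lt a
        have hpos : 0 < a.val := by
          rcases Nat.eq_zero_or_pos a.val with h | h
          · exact absurd ((ZMod.val_eq_zero a).mp h) ha0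
          · exact h
        refine ⟨⟨hpos, by omega⟩, ?_, ?_⟩
        · rw [leg_eq]; push_cast [ZMod.natCast_val, ZMod.cast_id]; exact ha.1
        · rw [leg_eq]; push_cast [ZMod.natCast_val, ZMod.cast_id]; exact ha.2
      · simp [ZMod.natCast_val, ZMod.cast_id]
  -- the main character sum identity
  have hsum_univ : ∑ a : ZMod p, (1 + χ a) * (1 + χ (a + m)) = (p : ℤ) - 1 := by
    have e1 : ∀ a : ZMod p, (1 + χ a) * (1 + χ (a + m))
        = 1 + χ a + χ (a + m) + χ a * χ (a + m) := by intro a; ring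
    simp only [e1]
    rw [Finset.sum_add_distrib, Finset.sum_add_distrib, Finset.sum_add_distrib]
    have h0 : ∑ _a : ZMod p, (1 : ℤ) = p := by
      simp [Finset.card_univ, ZMod.card]
    have h1 : ∑ a : ZMod p, χ a = 0 := quadraticChar_sum_zero hchar
    have h2 : ∑ a : ZMod p, χ (a + m) = 0 := by
      rw [← h1]
      exact Fintype.sum_equiv (Equiv.addRight (m : ZMod p)) _ _ (fun a => rfl)
    have h3 : ∑ a : ZMod p, χ a * χ (a + m) = -1 := by
      have step1 : ∑ a : ZMod p, χ a * χ (a + m)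
          = ∑ a ∈ univ \ {0}, χ a * χ (a + m) := by
        rw [eq_comm]
        apply Finset.sum_subset (Finset.sdiff_subset)
        intro x _ hx
        simp only [mem_sdiff, mem_univ, true_and, mem_singleton, not_not] at hx
        simp [hx, hχ]
      have step2 : ∀ a ∈ univ \ ({0} : Finset (ZMod p)),
          χ a * χ (a + m) = χ (1 + m * a⁻¹) := by
        intro a ha
        simp only [mem_sdiff, mem_singleton] at ha
        have ha0 : a ≠ 0 := ha.2
        have : a * (a + m) = a ^ 2 * (1 + m * a⁻¹) := by
          field_simp
        rw [← map_mul, this, map_mul, quadraticChar_sq_one' ha0, one_mul]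
      rw [step1, Finset.sum_congr rfl step2]
      have step3 : ∑ a ∈ univ \ ({0} : Finset (ZMod p)), χ (1 + m * a⁻¹)
          = ∑ t ∈ univ \ ({1} : Finset (ZMod p)), χ t := by
        apply Finset.sum_nbij' (fun a => 1 + (m : ZMod p) * a⁻¹)
          (fun t => (m : ZMod p) * (t - 1)⁻¹)
        · intro a ha
          simp only [mem_sdiff, mem_singleton, mem_univ, true_and] at ha ⊢
          intro h
          have : (m : ZMod p) * a⁻¹ = 0 := by linear_combination h
          rcases mul_eq_zero.mp this with h' | h'
          · exact hm0 h'
          · exact ha (inv_eq_zero.mp h')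
        · intro t ht
          simp only [mem_sdiff, mem_singleton, mem_univ, true_and] at ht ⊢
          intro h
          rcases mul_eq_zero.mp h with h' | h'
          · exact hm0 h'
          · exact ht (by
              have := inv_eq_zero.mp h'
              linear_combination this)
        · intro a ha
          simp only [mem_sdiff, mem_singleton, mem_univ, true_and] at ha
          field_simp
          simp [hm0]
        · intro t ht
          simp only [mem_sdiff, mem_singleton, mem_univ, true_and] at ht
          have ht1 : t - 1 ≠ 0 := sub_ne_zero.mpr ht
          field_simp
          ring
        · intro a _; rfl
      rw [step3]
      have : ∑ t ∈ univ \ ({1} : Finset (ZMod p)), χ t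
          = (∑ t : ZMod p, χ t) - χ 1 := by
        rw [Finset.sum_sdiff_eq_sub (Finset.subset_univ _), Finset.sum_singleton]
      rw [this, quadraticChar_sum_zero hchar]
      simp [hχ]
    rw [h0, h1, h2, h3]
    ring
  -- the sum also equals 4 * card S + 2 * (1 + χ m)
  have hsum_S : ∑ a : ZMod p, (1 + χ a) * (1 + χ (a + m))
      = 4 * S.card + 2 * (1 + χ m) := by
    have hne : (0 : ZMod p) ≠ -(m : ZMod p) := by
      intro h
      apply hm0
      have := h.symm
      rwa [neg_eq_zero] at this
    have hT : (univ : Finset (ZMod p)) = (univ \ {0, -(m : ZMod p)}) ∪ {0, -(m:ZMod p)} := by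
      rw [Finset.sdiff_union_of_subset (Finset.subset_univ _)]
    rw [hT, Finset.sum_union (Finset.sdiff_disjoint)]
    have hpair : ∑ a ∈ ({0, -(m : ZMod p)} : Finset (ZMod p)),
        (1 + χ a) * (1 + χ (a + m)) = 2 * (1 + χ m) := by
      rw [Finset.sum_pair hne]
      have hneg : χ (-(m : ZMod p)) = χ m := by
        have : (-(m : ZMod p)) = (-1) * m := by ring
        rw [this, map_mul, hneg1, one_mul]
      simp only [zero_add, neg_add_cancel]
      rw [hneg]
      simp [hχ]
      ring
    have hmain : ∑ a ∈ univ \ ({0, -(m : ZMod p)} : Finset (ZMod p)),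
        (1 + χ a) * (1 + χ (a + m)) = 4 * S.card := by
      have hterm : ∀ a ∈ univ \ ({0, -(m : ZMod p)} : Finset (ZMod p)),
          (1 + χ a) * (1 + χ (a + m)) = if χ a = 1 ∧ χ (a + m) = 1 then 4 else 0 := by
        intro a ha
        simp only [mem_sdiff, mem_insert, mem_singleton, not_or, mem_univ, true_and] at ha
        have ha0 : a ≠ 0 := ha.1
        have ham : a + m ≠ 0 := by
          intro h
          exact ha.2 (by linear_combination h)
        rcases quadraticChar_dichotomy ha0 with h1 | h1 <;>
          rcases quadraticChar_dichotomy ham with h2 | h2 <;>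
          simp [hχ, h1, h2]
      rw [Finset.sum_congr rfl hterm, Finset.sum_ite, Finset.sum_const, Finset.sum_const]
      have hfilter : (univ \ ({0, -(m : ZMod p)} : Finset (ZMod p))).filter
          (fun a => χ a = 1 ∧ χ (a + m) = 1) = S := by
        ext a
        simp only [hS, mem_filter, mem_sdiff, mem_insert, mem_singleton, not_or,
          mem_univ, true_and]
        constructor
        · rintro ⟨_, h⟩; exact h
        · rintro ⟨h1, h2⟩
          refine ⟨⟨?_, ?_⟩, h1, h2⟩
          · intro h; rw [h] at h1; simp [hχ] at h1
          · intro h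
            rw [h] at h2
            simp only [neg_add_cancel] at h2
            simp [hχ] at h2
      rw [hfilter]
      simp [mul_comm]
    rw [hmain, hpair]
  -- conclude
  have hlegm : leg p (m : ℤ) = χ m := by rw [leg_eq]; push_cast; rfl
  have key : (4 : ℤ) * S.card = (p : ℤ) - 3 - 2 * χ m := by
    have := hsum_univ
    rw [hsum_S] at this
    linarith
  rw [hcard, hlegm, ← key, Int.mul_ediv_cancel_left _ (by norm_num)]
end

section
/- Let p ≡ 1 (mod 8) be a prime of the form p = a² + 4b² with a ≡ −1 (mod 4) and b > 0, and let 1 ≤ m ≤ p − 1. Then ∑_{x ∈ A_m} χ4(x² + mx) = (−1 + a·(m/p))/2. -/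
open Finset
open scoped Classical

namespace Helpers

section Transversal

variable {α : Type*} [DecidableEq α]


variable {α : Type*} [DecidableEq α]

lemma exists_transversal (σ : α → α) :
    ∀ (s : Finset α), (∀ x ∈ s, σ x ∈ s) → (∀ x ∈ s, σ (σ x) = x) → (∀ x ∈ s, σ x ≠ x) →
    ∃ T : Finset α, T ⊆ s ∧ (∀ x ∈ s, (x ∈ T ↔ σ x ∉ T)) := by
  intro s
  induction s using Finset.strongInduction with
  | _ s ih =>
    intro h1 h2 h3
    rcases s.eq_empty_or_nonempty with rfl | ⟨x, hx⟩
    · exact ⟨∅, by simp⟩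
    · set s' : Finset α := s \ {x, σ x} with hs'
      have hss : s' ⊂ s := by
        refine Finset.ssubset_iff_of_subset (Finset.sdiff_subset) |>.mpr ⟨x, hx, by simp [hs']⟩
      have hmem : ∀ y, y ∈ s' ↔ y ∈ s ∧ y ≠ x ∧ y ≠ σ x := by
        intro y; simp [hs', and_assoc]
      obtain ⟨T', hT'sub, hT'mem⟩ := ih s' hss
        (fun y hy => by
          rw [hmem] at hy ⊢
          refine ⟨h1 y hy.1, fun h => hy.2.2 (by rw [← h2 y hy.1, h]), fun h => hy.2.1 ?_⟩
          have := congrArg σ h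
          rwa [h2 y hy.1, h2 x hx] at this)
        (fun y hy => h2 y ((hmem y).mp hy).1)
        (fun y hy => h3 y ((hmem y).mp hy).1)
      refine ⟨insert x T', ?_, ?_⟩
      · exact Finset.insert_subset hx (hT'sub.trans Finset.sdiff_subset)
      · intro y hy
        have hsxnotin : σ x ∉ insert x T' := by
          intro hcon
          rcases Finset.mem_insert.mp hcon with h | h
          · exact h3 x hx h
          · exact ((hmem _).mp (hT'sub h)).2.2 rfl
        rcases eq_or_ne y x with rfl | hyx
        · exact ⟨fun _ => hsxnotin, fun _ => Finset.mem_insert_self y T'⟩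
        · rcases eq_or_ne y (σ x) with rfl | hysx
          · rw [h2 x hx]
            exact ⟨fun h => (hsxnotin h).elim, fun h => (h (Finset.mem_insert_self x T')).elim⟩
          · have hys' : y ∈ s' := (hmem y).mpr ⟨hy, hyx, hysx⟩
            have hσne : σ y ≠ x := fun h => hysx (by rw [← h2 y hy, h])
            simp only [Finset.mem_insert, hyx, false_or, hσne, false_or]
            exact hT'mem y hys'

lemma transversal_card {s T : Finset α} (σ : α → α)
    (h1 : ∀ x ∈ s, σ x ∈ s) (h2 : ∀ x ∈ s, σ (σ x) = x)
    (hT : T ⊆ s) (hmem : ∀ x ∈ s, (x ∈ T ↔ σ x ∉ T)) :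
    s.card = 2 * T.card := by
  have himg : T.image σ = s \ T := by
    ext y
    simp only [Finset.mem_image, Finset.mem_sdiff]
    constructor
    · rintro ⟨z, hz, rfl⟩
      exact ⟨h1 z (hT hz), (hmem z (hT hz)).mp hz⟩
    · rintro ⟨hys, hyT⟩
      refine ⟨σ y, ?_, h2 y hys⟩
      by_contra hcon
      exact hyT ((hmem y hys).mpr hcon)
  have hinj : Set.InjOn σ T := fun u hu v hv huv => by
    have := congrArg σ huv
    rwa [h2 u (hT hu), h2 v (hT hv)] at this
  have hcard : (T.image σ).card = T.card := Finset.card_image_of_injOn hinj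
  have hle := Finset.card_le_card hT
  have : s.card = T.card + (s \ T).card := by
    rw [Finset.card_sdiff_of_subset hT]; omega
  rw [← himg, hcard] at this
  omega

lemma transversal_sum {M : Type*} [AddCommMonoid M] {s T : Finset α} (σ : α → α) (f : α → M)
    (h1 : ∀ x ∈ s, σ x ∈ s) (h2 : ∀ x ∈ s, σ (σ x) = x)
    (hT : T ⊆ s) (hmem : ∀ x ∈ s, (x ∈ T ↔ σ x ∉ T))
    (hf : ∀ x ∈ s, f (σ x) = f x) :
    ∑ x ∈ s, f x = ∑ x ∈ T, f x + ∑ x ∈ T, f x := by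
  have himg : T.image σ = s \ T := by
    ext y
    simp only [Finset.mem_image, Finset.mem_sdiff]
    constructor
    · rintro ⟨z, hz, rfl⟩
      exact ⟨h1 z (hT hz), (hmem z (hT hz)).mp hz⟩
    · rintro ⟨hys, hyT⟩
      refine ⟨σ y, ?_, h2 y hys⟩
      by_contra hcon
      exact hyT ((hmem y hys).mpr hcon)
  have hinj : Set.InjOn σ T := fun u hu v hv huv => by
    have := congrArg σ huv
    rwa [h2 u (hT hu), h2 v (hT hv)] at this
  have hsplit : ∑ x ∈ s, f x = ∑ x ∈ T, f x + ∑ x ∈ s \ T, f x := by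
    rw [add_comm, Finset.sum_sdiff hT]
  rw [hsplit, ← himg, Finset.sum_image hinj]
  congr 1
  exact Finset.sum_congr rfl (fun x hx => hf x (hT hx))


end Transversal

noncomputable def II : GaussianInt := ⟨0, 1⟩

lemma II_sq : II * II = -1 := by
  ext <;> simp [II, Zsqrtd.re_mul, Zsqrtd.im_mul]

lemma II_pow_four : II ^ 4 = 1 := by
  have : II ^ 4 = (II * II) * (II * II) := by ring
  rw [this, II_sq]; ring

lemma isPrimitiveRoot_II : IsPrimitiveRoot II 4 := by
  refine ⟨II_pow_four, fun l hl => ?_⟩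
  have hmod : II ^ (l % 4) = 1 := by
    conv at hl => rw [← Nat.div_add_mod l 4, pow_add, pow_mul, II_pow_four, one_pow, one_mul]
    exact hl
  have h4 : l % 4 < 4 := Nat.mod_lt _ (by norm_num)
  interval_cases h : l % 4
  · omega
  · exfalso; rw [pow_one] at hmod
    have := congrArg Zsqrtd.im hmod; simp [II] at this
  · exfalso
    have : II ^ 2 = -1 := by rw [sq]; exact II_sq
    rw [this] at hmod
    have := congrArg Zsqrtd.re hmod; simp at this
  · exfalso
    have h2 : II ^ 3 = -II := by
      have : II ^ 3 = (II * II) * II := by ring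
      rw [this, II_sq]; ring
    rw [h2] at hmod
    have := congrArg Zsqrtd.im hmod; simp [II] at this

lemma int_sq_add_sq_eq_one {x y : ℤ} (h : x * x + y * y = 1) :
    (y = 0 ∧ (x = 1 ∨ x = -1)) ∨ (x = 0 ∧ (y = 1 ∨ y = -1)) := by
  have hx1 : -1 ≤ x := by nlinarith [mul_self_nonneg y, mul_self_nonneg (x+1)]
  have hx2 : x ≤ 1 := by nlinarith [mul_self_nonneg y, mul_self_nonneg (x-1)]
  have hy1 : -1 ≤ y := by nlinarith [mul_self_nonneg x, mul_self_nonneg (y+1)]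
  have hy2 : y ≤ 1 := by nlinarith [mul_self_nonneg x, mul_self_nonneg (y-1)]
  interval_cases x <;> interval_cases y <;> omega

lemma norm_eq_one_of_pow_four {z : GaussianInt} (h : z ^ 4 = 1) : Zsqrtd.norm z = 1 := by
  have h1 : (Zsqrtd.norm z) ^ 4 = 1 := by
    have : z ^ 4 = z * z * z * z := by ring
    rw [this] at h
    have := congrArg Zsqrtd.norm h
    rw [Zsqrtd.norm_mul, Zsqrtd.norm_mul, Zsqrtd.norm_mul, Zsqrtd.norm_one] at this
    linear_combination this
  have h2 : (0:ℤ) ≤ Zsqrtd.norm z := GaussianInt.norm_nonneg z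
  have h3 : Zsqrtd.norm z ∣ 1 := ⟨(Zsqrtd.norm z)^3, by linear_combination -h1⟩
  exact Int.eq_one_of_dvd_one h2 h3

lemma star_eq_cube_of_pow_four {z : GaussianInt} (h : z ^ 4 = 1) : star z = z ^ 3 := by
  have hn : (Zsqrtd.norm z : GaussianInt) = z * star z := Zsqrtd.norm_eq_mul_conj z
  have h1 : z * star z = 1 := by rw [← hn, norm_eq_one_of_pow_four h]; simp
  calc star z = z ^ 4 * star z := by rw [h, one_mul]
    _ = z ^ 3 * (z * star z) := by ring
    _ = z ^ 3 := by rw [h1, mul_one]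

lemma one_add_I_dvd_sub_one_of_pow_four {z : GaussianInt} (h : z ^ 4 = 1) :
    (⟨1,1⟩ : GaussianInt) ∣ z - 1 := by
  have hn : Zsqrtd.norm z = 1 := norm_eq_one_of_pow_four h
  rw [Zsqrtd.norm_def] at hn
  have hn' : z.re * z.re + z.im * z.im = 1 := by linarith
  rcases int_sq_add_sq_eq_one hn' with ⟨hy, hx | hx⟩ | ⟨hx, hy | hy⟩
  · refine ⟨0, ?_⟩; ext <;> simp [hx, hy]
  · refine ⟨⟨-1, 1⟩, ?_⟩; ext <;> simp [hx, hy, Zsqrtd.re_mul, Zsqrtd.im_mul]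
  · refine ⟨⟨0, 1⟩, ?_⟩; ext <;> simp [hx, hy, Zsqrtd.re_mul, Zsqrtd.im_mul]
  · refine ⟨⟨-1, 0⟩, ?_⟩; ext <;> simp [hx, hy, Zsqrtd.re_mul, Zsqrtd.im_mul]



variable {p : ℕ} [Fact p.Prime] {χ : MulChar (ZMod p) GaussianInt}

lemma unit_rep (g : (ZMod p)ˣ) (hg : ∀ x, x ∈ Subgroup.zpowers g) (a : (ZMod p)ˣ) :
    ∃ k : ℕ, g ^ k = a :=
  (Submonoid.mem_powers_iff a g).mp (mem_powers_iff_mem_zpowers.mpr (hg a))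

lemma val_pow_four (hord : orderOf χ = 4) {x : ZMod p} (hx : x ≠ 0) : (χ x) ^ 4 = 1 := by
  have h4 : χ ^ 4 = 1 := hord ▸ pow_orderOf_eq_one χ
  rw [← MulChar.pow_apply' χ (by norm_num) x, h4]
  exact MulChar.one_apply (isUnit_iff_ne_zero.mpr hx)

lemma gen_sq_ne_one (hord : orderOf χ = 4) (g : (ZMod p)ˣ) (hg : ∀ x, x ∈ Subgroup.zpowers g) :
    (χ ↑g) ^ 2 ≠ 1 := by
  intro hcon
  have hsq : χ ^ 2 = 1 := by
    apply MulChar.ext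
    intro a
    obtain ⟨k, hk⟩ := unit_rep g hg a
    rw [MulChar.one_apply_coe, MulChar.pow_apply' χ (by norm_num), ← hk]
    push_cast [← Units.val_pow_eq_pow_val]
    rw [Units.val_pow_eq_pow_val, map_pow, ← pow_mul, mul_comm k 2, pow_mul, hcon, one_pow]
  have : orderOf χ ∣ 2 := orderOf_dvd_of_pow_eq_one hsq
  rw [hord] at this
  omega
lemma gen_pow_four (hord : orderOf χ = 4) (g : (ZMod p)ˣ) : (χ ↑g) ^ 4 = 1 :=
  val_pow_four hord (Units.ne_zero g)

lemma gen_sq_eq_neg_one (hord : orderOf χ = 4) (g : (ZMod p)ˣ)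
    (hg : ∀ x, x ∈ Subgroup.zpowers g) : (χ ↑g) ^ 2 = -1 := by
  have h1 : ((χ ↑g) ^ 2) * ((χ ↑g) ^ 2) = 1 := by rw [← pow_add]; exact gen_pow_four hord g
  rcases mul_self_eq_one_iff.mp h1 with h | h
  · exact absurd h (gen_sq_ne_one hord g hg)
  · exact h

lemma sq_eq_one_iff_isSquare (hord : orderOf χ = 4) {x : ZMod p} (hx : x ≠ 0) :
    (χ x) ^ 2 = 1 ↔ IsSquare x := by
  obtain ⟨g, hg⟩ := IsCyclic.exists_generator (α := (ZMod p)ˣ)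
  constructor
  · intro h
    obtain ⟨k, hk⟩ := unit_rep g hg (Units.mk0 x hx)
    have hxk : (↑g : ZMod p) ^ k = x := by
      rw [← Units.val_pow_eq_pow_val, hk, Units.val_mk0]
    rw [← hxk, map_pow, ← pow_mul, mul_comm k 2, pow_mul, gen_sq_eq_neg_one hord g hg] at h
    have hne : (-1 : GaussianInt) ≠ 1 := by
      intro hcon; have := congrArg Zsqrtd.re hcon; simp at this
    have hk2 : Even k := (neg_one_pow_eq_one_iff_even hne).mp h
    obtain ⟨j, hj⟩ := hk2
    exact ⟨(↑g : ZMod p) ^ j, by rw [← hxk, hj, pow_add]⟩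
  · rintro ⟨y, rfl⟩
    have hy : y ≠ 0 := by intro hcon; rw [hcon] at hx; simp at hx
    rw [map_mul, ← sq, ← pow_mul]
    norm_num
    exact val_pow_four hord hy

lemma eq_one_iff_fourth_power (hord : orderOf χ = 4) {x : ZMod p} (hx : x ≠ 0) :
    (χ x = 1 ↔ ∃ z : ZMod p, z ^ 4 = x) := by
  obtain ⟨g, hg⟩ := IsCyclic.exists_generator (α := (ZMod p)ˣ)
  have hordg : orderOf (χ ↑g) = 4 := by
    have h4 : (χ ↑g) ^ 2 ^ (1 + 1) = 1 := gen_pow_four hord g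
    have h2 : ¬ (χ ↑g) ^ 2 ^ 1 = 1 := by
      rw [pow_one]; exact gen_sq_ne_one hord g hg
    exact orderOf_eq_prime_pow h2 h4
  constructor
  · intro h
    obtain ⟨k, hk⟩ := unit_rep g hg (Units.mk0 x hx)
    have hxk : (↑g : ZMod p) ^ k = x := by
      rw [← Units.val_pow_eq_pow_val, hk, Units.val_mk0]
    rw [← hxk, map_pow] at h
    have : 4 ∣ k := hordg ▸ orderOf_dvd_of_pow_eq_one h
    obtain ⟨j, rfl⟩ := this
    exact ⟨(↑g : ZMod p) ^ j, by rw [← hxk, ← pow_mul, mul_comm j 4]⟩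
  · rintro ⟨z, rfl⟩
    have hz : z ≠ 0 := by intro hcon; rw [hcon] at hx; simp at hx
    rw [map_pow]
    exact val_pow_four hord hz

lemma chi_neg_one (hp8 : p % 8 = 1) (hord : orderOf χ = 4) : χ (-1) = 1 := by
  have hp2 : 2 ≤ p := (Fact.out : p.Prime).two_le
  obtain ⟨t, ht⟩ : ∃ t, p - 1 = 8 * t := ⟨(p-1)/8, by omega⟩
  have ht0 : 0 < t := by
    rcases Nat.eq_zero_or_pos t with h | h
    · exfalso; omega
    · exact h
  obtain ⟨g, hg⟩ := IsCyclic.exists_generator (α := (ZMod p)ˣ)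
  have hcard : orderOf g = p - 1 := by
    rw [orderOf_eq_card_of_forall_mem_zpowers hg, Nat.card_eq_fintype_card, Fintype.card_units,
      ZMod.card]
  have hw2 : ((↑g : ZMod p) ^ (4 * t)) * ((↑g : ZMod p) ^ (4 * t)) = 1 := by
    rw [← pow_add]
    have : 4 * t + 4 * t = p - 1 := by omega
    rw [this, ← hcard]
    have := pow_orderOf_eq_one g
    calc (↑g : ZMod p) ^ orderOf g = ↑(g ^ orderOf g) := by rw [Units.val_pow_eq_pow_val]
      _ = 1 := by rw [this]; rfl
  have hwne : ((↑g : ZMod p) ^ (4 * t)) ≠ 1 := by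
    intro hcon
    have : g ^ (4 * t) = 1 := by
      apply Units.ext
      rwa [Units.val_pow_eq_pow_val, Units.val_one]
    have hdvd : orderOf g ∣ 4 * t := orderOf_dvd_of_pow_eq_one this
    rw [hcard] at hdvd
    have := Nat.le_of_dvd (by omega) hdvd
    omega
  have hw : ((↑g : ZMod p) ^ (4 * t)) = -1 := by
    rcases mul_self_eq_one_iff.mp hw2 with h | h
    · exact absurd h hwne
    · exact h
  have heq : χ (-1) = χ (((↑(g ^ t) : ZMod p)) ^ 4) := by
    rw [← hw]; congr 1
    rw [Units.val_pow_eq_pow_val, ← pow_mul, mul_comm t 4]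
  rw [heq, map_pow]
  exact val_pow_four hord (Units.ne_zero _)

lemma star_char_eq_cube (hord : orderOf χ = 4) : star χ = χ ^ 3 := by
  apply MulChar.ext
  intro a
  rw [MulChar.star_apply, MulChar.pow_apply' χ (by norm_num)]
  exact star_eq_cube_of_pow_four (val_pow_four hord (Units.ne_zero a))



variable {p : ℕ} [Fact p.Prime] {χ : MulChar (ZMod p) GaussianInt}

/-- T1-shape sum -/
lemma sum_quad (ξ : MulChar (ZMod p) GaussianInt) {m : ZMod p} (hm : m ≠ 0) :
    ∑ u : ZMod p, ξ (u * (u + m)) = ξ (-1) * (ξ m) ^ 2 * jacobiSum ξ ξ := by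
  have he : ∀ t : ZMod p, ξ ((-m * t) * ((-m * t) + m)) = ξ (-1) * (ξ m) ^ 2 * (ξ t * ξ (1 - t)) := by
    intro t
    have harg : (-m * t) * ((-m * t) + m) = (-1) * (m * m) * (t * (1 - t)) := by ring
    rw [harg, map_mul, map_mul, map_mul, map_mul, sq]
  calc ∑ u : ZMod p, ξ (u * (u + m))
      = ∑ t : ZMod p, ξ ((-m * t) * ((-m * t) + m)) := by
        rw [← Equiv.sum_comp (Equiv.mulLeft₀ (-m) (neg_ne_zero.mpr hm))
          (fun u => ξ (u * (u + m)))]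
        rfl
    _ = ∑ t : ZMod p, ξ (-1) * (ξ m) ^ 2 * (ξ t * ξ (1 - t)) := by
        exact Finset.sum_congr rfl (fun t _ => he t)
    _ = ξ (-1) * (ξ m) ^ 2 * jacobiSum ξ ξ := by
        rw [← Finset.mul_sum]; rfl

/-- T2-shape sum -/
lemma sum_cube_mix (ξ : MulChar (ZMod p) GaussianInt) (hξ : ξ ≠ 1)
    (h4 : ∀ {x : ZMod p}, x ≠ 0 → (ξ x) ^ 4 = 1) {m : ZMod p} (hm : m ≠ 0) :
    ∑ u : ZMod p, (ξ u) ^ 3 * ξ (u + m) = -1 := by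
  classical
  have h0 : (ξ (0 : ZMod p)) ^ 3 * ξ ((0 : ZMod p) + m) = 0 := by
    rw [MulChar.map_zero]; ring
  rw [← Finset.sum_erase (f := fun u : ZMod p => (ξ u) ^ 3 * ξ (u + m)) Finset.univ h0]
  have key : ∑ u ∈ Finset.univ.erase (0 : ZMod p), (ξ u) ^ 3 * ξ (u + m)
      = ∑ v ∈ Finset.univ.erase (1 : ZMod p), ξ v := by
    apply Finset.sum_nbij' (i := fun u => 1 + m * u⁻¹) (j := fun v => m * (v - 1)⁻¹)
    · intro u hu
      simp only [Finset.mem_erase, Finset.mem_univ, and_true] at hu ⊢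
      intro hcon
      have : m * u⁻¹ = 0 := by linear_combination hcon
      rcases mul_eq_zero.mp this with h | h
      · exact hm h
      · exact hu (inv_eq_zero.mp h)
    · intro v hv
      simp only [Finset.mem_erase, Finset.mem_univ, and_true] at hv ⊢
      intro hcon
      rcases mul_eq_zero.mp hcon with h | h
      · exact hm h
      · exact hv (by
          have := inv_eq_zero.mp h
          have : v = 1 := by linear_combination this
          exact this)
    · intro u hu
      simp only [Finset.mem_erase, Finset.mem_univ, and_true] at hu
      field_simp
      rw [add_sub_cancel_left, div_self hm]
    · intro v hv
      simp only [Finset.mem_erase, Finset.mem_univ, and_true] at hv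
      have hv1 : v - 1 ≠ 0 := sub_ne_zero.mpr hv
      field_simp
      ring
    · intro u hu
      simp only [Finset.mem_erase, Finset.mem_univ, and_true] at hu
      have harg : u + m = u * (1 + m * u⁻¹) := by
        field_simp
      rw [harg, map_mul, ← mul_assoc, ← pow_succ]
      rw [h4 hu, one_mul]
  rw [key, Finset.sum_erase_eq_sub (Finset.mem_univ _), MulChar.sum_eq_zero_of_ne_one hξ,
    map_one]
  ring

/-- T3-shape sum -/
lemma sum_mix_cube (ξ : MulChar (ZMod p) GaussianInt) (hξ : ξ ≠ 1)
    (h4 : ∀ {x : ZMod p}, x ≠ 0 → (ξ x) ^ 4 = 1) {m : ZMod p} (hm : m ≠ 0) :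
    ∑ u : ZMod p, ξ u * (ξ (u + m)) ^ 3 = -1 := by
  have := sum_cube_mix ξ hξ h4 (neg_ne_zero.mpr hm)
  rw [← this]
  rw [← Equiv.sum_comp (Equiv.subRight m) (fun u => ξ u * (ξ (u + m)) ^ 3)]
  apply Finset.sum_congr rfl
  intro w _
  simp only [Equiv.subRight_apply]
  rw [sub_add_cancel]
  rw [mul_comm]
  congr 2
  ring

/-- the Jacobi sum decomposition modulo 2+2i -/
lemma jacobi_decomp (hp8 : p % 8 = 1) (hord : orderOf χ = 4) :
    ∃ w : GaussianInt, jacobiSum χ χ = (p : GaussianInt) - 2 + ⟨2,2⟩ * w := by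
  classical
  have hp2 : 2 ≤ p := (Fact.out : p.Prime).two_le
  have hpne2 : p ≠ 2 := by omega
  have h2ne : (2 : ZMod p) ≠ 0 := by
    intro hcon
    have : ((2 : ℕ) : ZMod p) = 0 := by push_cast; exact hcon
    have := (ZMod.natCast_eq_zero_iff 2 p).mp this
    have := Nat.le_of_dvd (by norm_num) this
    omega
  set c : ZMod p := (2 : ZMod p)⁻¹ with hc
  have hcne : c ≠ 0 := inv_ne_zero h2ne
  have h2c : (2 : ZMod p) * c = 1 := mul_inv_cancel₀ h2ne
  have hcc : 1 - c = c := by linear_combination -h2c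
  have h1ne : (1 : ZMod p) ≠ c := by
    intro hcon
    have : (1 : ZMod p) = 0 := by
      calc (1 : ZMod p) = c := hcon
        _ = 1 - c := hcc.symm
        _ = 0 := by rw [← hcon]; ring
    exact one_ne_zero this
  have h0ne : (0 : ZMod p) ≠ c := fun hcon => hcne hcon.symm
  set f : ZMod p → GaussianInt := fun x => χ (x * (1 - x)) with hf
  -- J = sum of f
  have hJ : jacobiSum χ χ = ∑ x : ZMod p, f x := by
    apply Finset.sum_congr rfl
    intro x _
    show χ x * χ (1 - x) = χ (x * (1 - x))
    rw [map_mul]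
  set σ : ZMod p → ZMod p := fun x => 1 - x with hσ
  set s : Finset (ZMod p) := Finset.univ.erase c with hs
  have hσs : ∀ x ∈ s, σ x ∈ s := by
    intro x hx
    simp only [hs, Finset.mem_erase, Finset.mem_univ, and_true] at hx ⊢
    intro hcon
    apply hx
    have : x = 1 - c := by linear_combination -hcon
    rw [this, hcc]
  have hσσ : ∀ x ∈ s, σ (σ x) = x := by intro x _; simp [hσ]
  have hσne : ∀ x ∈ s, σ x ≠ x := by
    intro x hx
    simp only [hs, Finset.mem_erase, Finset.mem_univ, and_true] at hx
    intro hcon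
    apply hx
    have h2x : (2 : ZMod p) * x = 1 := by linear_combination -hcon
    have := inv_eq_of_mul_eq_one_right h2x
    rw [← this, hc]
  obtain ⟨T, hTsub, hTmem⟩ := exists_transversal σ s hσs hσσ hσne
  have hfs : ∀ x ∈ s, f (σ x) = f x := by
    intro x _
    simp only [hf, hσ]
    congr 1
    ring
  have hsum2 : ∑ x ∈ s, f x = ∑ x ∈ T, f x + ∑ x ∈ T, f x :=
    transversal_sum σ f hσs hσσ hTsub hTmem hfs
  have hscard : s.card = p - 1 := by
    rw [hs, Finset.card_erase_of_mem (Finset.mem_univ c), Finset.card_univ, ZMod.card]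
  have hTcard : p - 1 = 2 * T.card := by
    rw [← hscard]; exact transversal_card σ hσs hσσ hTsub hTmem
  -- the element e of {0,1} lying in T
  have h0s : (0 : ZMod p) ∈ s := by simp [hs, h0ne]
  have h01 : ((0 : ZMod p) ∈ T) ↔ (1 : ZMod p) ∉ T := by
    have := hTmem 0 h0s
    simpa [hσ] using this
  set e : ZMod p := if (0 : ZMod p) ∈ T then 0 else 1 with he
  have heT : e ∈ T := by
    by_cases h : (0 : ZMod p) ∈ T
    · simp [he, h]
    · have h1T : (1 : ZMod p) ∈ T := by
        by_contra hcon
        exact h (h01.mpr hcon)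
      simp [he, h, h1T]
  have hoth : ∀ x ∈ T.erase e, x ≠ 0 ∧ x ≠ 1 := by
    intro x hx
    obtain ⟨hxe, hxT⟩ := Finset.mem_erase.mp hx
    by_cases h : (0 : ZMod p) ∈ T
    · have h1 : (1 : ZMod p) ∉ T := h01.mp h
      have he0 : e = 0 := by simp [he, h]
      exact ⟨fun hcon => hxe (by rw [hcon, he0]), fun hcon => h1 (hcon ▸ hxT)⟩
    · have he1 : e = 1 := by simp [he, h]
      exact ⟨fun hcon => h (hcon ▸ hxT), fun hcon => hxe (by rw [hcon, he1])⟩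
  have hfe : f e = 0 := by
    by_cases h : (0 : ZMod p) ∈ T
    · have he0 : e = 0 := by simp [he, h]
      rw [he0, hf]; simp; exact MulChar.map_zero χ
    · have he1 : e = 1 := by simp [he, h]
      rw [he1, hf]; simp; exact MulChar.map_zero χ
  have hTe : ∑ x ∈ T, f x = ∑ x ∈ T.erase e, f x := (Finset.sum_erase _ hfe).symm
  -- each term in T.erase e is ≡ 1 mod (1+i)
  have hdvd : (⟨1,1⟩ : GaussianInt) ∣ (∑ x ∈ T.erase e, f x) - (T.erase e).card := by
    have : (∑ x ∈ T.erase e, f x) - ((T.erase e).card : GaussianInt)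
        = ∑ x ∈ T.erase e, (f x - 1) := by
      rw [Finset.sum_sub_distrib]
      simp
    rw [this]
    apply Finset.dvd_sum
    intro x hx
    obtain ⟨hx0, hx1⟩ := hoth x hx
    have harg : x * (1 - x) ≠ 0 := by
      apply mul_ne_zero hx0
      intro hcon
      apply hx1
      have : x = 1 := by linear_combination -hcon
      exact this
    exact one_add_I_dvd_sub_one_of_pow_four (val_pow_four hord harg)
  obtain ⟨v, hv⟩ := hdvd
  -- f c = 1
  have hfc : f c = 1 := by
    have hsq2 : IsSquare (2 : ZMod p) := by
      rw [ZMod.exists_sq_eq_two_iff hpne2]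
      left; exact hp8
    obtain ⟨y, hy⟩ := hsq2
    have hyne : y ≠ 0 := by
      intro hcon; rw [hcon, mul_zero] at hy; exact h2ne hy
    have hsqc : IsSquare c := ⟨y⁻¹, by rw [hc, hy, mul_inv_rev]⟩
    show χ (c * (1 - c)) = 1
    rw [hcc, map_mul, ← sq]
    exact (sq_eq_one_iff_isSquare hord hcne).mpr hsqc
  -- assemble
  have hJ2 : jacobiSum χ χ = f c + ∑ x ∈ s, f x := by
    rw [hJ, hs, ← Finset.add_sum_erase _ f (Finset.mem_univ c)]
  have hTecard : (T.erase e).card = T.card - 1 := Finset.card_erase_of_mem heT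
  have hT1 : 1 ≤ T.card := Finset.card_pos.mpr ⟨e, heT⟩
  have hsumTe : ∑ x ∈ T.erase e, f x = ((T.erase e).card : GaussianInt) + ⟨1,1⟩ * v := by
    rw [← hv]; ring
  have hTc : (T.card : GaussianInt) * 2 = (p : GaussianInt) - 1 := by
    have h1 : ((p - 1 : ℕ) : GaussianInt) = ((2 * T.card : ℕ) : GaussianInt) := by
      rw [← hTcard]
    rw [Nat.cast_sub (by omega), Nat.cast_mul] at h1
    push_cast at h1
    linear_combination -h1
  have h22 : (⟨2,2⟩ : GaussianInt) = 2 * ⟨1,1⟩ := by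
    ext <;> simp [Zsqrtd.re_mul, Zsqrtd.im_mul]
  have hxcast : (((T.erase e).card : ℕ) : GaussianInt) = (T.card : GaussianInt) - 1 := by
    rw [hTecard, Nat.cast_sub hT1, Nat.cast_one]
  refine ⟨v, ?_⟩
  rw [hJ2, hfc, hsum2, hTe, hsumTe, hxcast, h22]
  linear_combination hTc


lemma jacobi_norm (hord : orderOf χ = 4) : Zsqrtd.norm (jacobiSum χ χ) = p := by
  have hinj : Function.Injective GaussianInt.toComplex := by
    intro x y h
    exact GaussianInt.toComplex_inj.mp h
  set χ' : MulChar (ZMod p) ℂ := χ.ringHomComp GaussianInt.toComplex with hχ'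
  have hχne : χ ≠ 1 := by
    intro hcon; rw [hcon, orderOf_one] at hord; omega
  have hχ2 : χ * χ ≠ 1 := by
    intro hcon
    have : χ ^ 2 = 1 := by rw [sq]; exact hcon
    have := orderOf_dvd_of_pow_eq_one this
    rw [hord] at this; omega
  have hχ'ne : χ' ≠ 1 := (MulChar.ringHomComp_ne_one_iff hinj).mpr hχne
  have hχ'2 : χ' * χ' ≠ 1 := by
    rw [hχ', ← MulChar.ringHomComp_mul]
    exact (MulChar.ringHomComp_ne_one_iff hinj).mpr hχ2
  have hchar : ringChar ℂ ≠ ringChar (ZMod p) := by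
    rw [ringChar.eq_zero, ZMod.ringChar_zmod_n]
    exact fun h => (Fact.out : p.Prime).ne_zero h.symm
  have key := jacobiSum_mul_jacobiSum_inv hchar hχ'ne hχ'ne hχ'2
  have hstar : jacobiSum χ'⁻¹ χ'⁻¹ = (starRingEnd ℂ) (jacobiSum χ' χ') := by
    rw [← MulChar.star_eq_inv χ']
    exact jacobiSum_ringHomComp χ' χ' (starRingEnd ℂ)
  rw [hstar] at key
  have hJ' : jacobiSum χ' χ' = GaussianInt.toComplex (jacobiSum χ χ) :=
    jacobiSum_ringHomComp χ χ GaussianInt.toComplex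
  rw [hJ', Complex.mul_conj, ← GaussianInt.intCast_complex_norm] at key
  have : ((Zsqrtd.norm (jacobiSum χ χ) : ℤ) : ℂ) = ((p : ℤ) : ℂ) := by
    rw [key]
    simp [ZMod.card]
  exact_mod_cast this

lemma two_sq_unique {p : ℕ} (hp : p.Prime) {A B a b : ℤ}
    (h1 : A * A + B * B = (p : ℤ)) (h2 : (p : ℤ) = a ^ 2 + 4 * b ^ 2)
    (hA : A % 4 = 3) (ha : a % 4 = 3) : A = a := by
  set w₁ : GaussianInt := ⟨A, B⟩ with hw₁
  set w₂ : GaussianInt := ⟨a, 2 * b⟩ with hw₂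
  have hn1 : Zsqrtd.norm w₁ = (p : ℤ) := by
    rw [Zsqrtd.norm_def]; simp [hw₁]; linarith
  have hn2 : Zsqrtd.norm w₂ = (p : ℤ) := by
    rw [Zsqrtd.norm_def]; simp [hw₂]; nlinarith
  have hpne1 : (p : ℤ).natAbs = p := Int.natAbs_natCast p
  have hirr : Irreducible w₂ := by
    constructor
    · intro hcon
      have := Zsqrtd.norm_eq_one_iff.mpr hcon
      rw [hn2, hpne1] at this
      exact hp.one_lt.ne' this
    · intro s t hst
      have hnm : Zsqrtd.norm s * Zsqrtd.norm t = (p : ℤ) := by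
        rw [← Zsqrtd.norm_mul, ← hst, hn2]
      have hnat : (Zsqrtd.norm s).natAbs * (Zsqrtd.norm t).natAbs = p := by
        rw [← Int.natAbs_mul, hnm, hpne1]
      have hdvd : (Zsqrtd.norm s).natAbs ∣ p := ⟨_, hnat.symm⟩
      rcases (Nat.Prime.eq_one_or_self_of_dvd hp _ hdvd) with h | h
      · left; exact Zsqrtd.norm_eq_one_iff.mp h
      · right
        apply Zsqrtd.norm_eq_one_iff.mp
        have hppos : 0 < p := hp.pos
        have : p * (Zsqrtd.norm t).natAbs = p * 1 := by
          rw [mul_one]; calc p * (Zsqrtd.norm t).natAbs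
              = (Zsqrtd.norm s).natAbs * (Zsqrtd.norm t).natAbs := by rw [h]
            _ = p := hnat
        exact Nat.eq_of_mul_eq_mul_left hppos this
  have hprime : Prime w₂ := hirr.prime
  have hdvd : w₂ ∣ w₁ * star w₁ := by
    have e1 : w₁ * star w₁ = ((Zsqrtd.norm w₁ : ℤ) : GaussianInt) := (Zsqrtd.norm_eq_mul_conj w₁).symm
    have e2 : w₂ * star w₂ = ((Zsqrtd.norm w₂ : ℤ) : GaussianInt) := (Zsqrtd.norm_eq_mul_conj w₂).symm
    rw [e1, hn1, ← hn2, ← e2]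
    exact Dvd.intro _ rfl
  have hAodd : A % 2 = 1 := by omega
  rcases hprime.2.2 _ _ hdvd with hcase | hcase
  · obtain ⟨u, hu⟩ := hcase
    have hnu : Zsqrtd.norm u = 1 := by
      have : Zsqrtd.norm w₁ = Zsqrtd.norm w₂ * Zsqrtd.norm u := by rw [hu, Zsqrtd.norm_mul]
      rw [hn1, hn2] at this
      have hppos : (0:ℤ) < p := by exact_mod_cast hp.pos
      exact mul_left_cancel₀ (ne_of_gt hppos) (by linarith)
    rw [Zsqrtd.norm_def] at hnu
    have hnu' : u.re * u.re + u.im * u.im = 1 := by linarith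
    have hre : A = a * u.re - 2 * b * u.im := by
      have := congrArg Zsqrtd.re hu
      simpa [hw₁, hw₂, Zsqrtd.re_mul, sub_eq_add_neg] using this
    rcases int_sq_add_sq_eq_one hnu' with ⟨hy, hx | hx⟩ | ⟨hx, hy | hy⟩ <;>
      rw [hx, hy] at hre <;> omega
  · obtain ⟨u, hu⟩ := hcase
    have hnu : Zsqrtd.norm u = 1 := by
      have : Zsqrtd.norm (star w₁) = Zsqrtd.norm w₂ * Zsqrtd.norm u := by
        rw [hu, Zsqrtd.norm_mul]
      rw [Zsqrtd.norm_conj, hn1, hn2] at this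
      have hppos : (0:ℤ) < p := by exact_mod_cast hp.pos
      exact mul_left_cancel₀ (ne_of_gt hppos) (by linarith)
    rw [Zsqrtd.norm_def] at hnu
    have hnu' : u.re * u.re + u.im * u.im = 1 := by linarith
    have hre : A = a * u.re - 2 * b * u.im := by
      have := congrArg Zsqrtd.re hu
      simpa [hw₁, hw₂, Zsqrtd.re_mul, sub_eq_add_neg] using this
    rcases int_sq_add_sq_eq_one hnu' with ⟨hy, hx | hx⟩ | ⟨hx, hy | hy⟩ <;>
      rw [hx, hy] at hre <;> omega


lemma exists_pow_two_iff (z : ZMod p) : (∃ y : ZMod p, y ^ 2 = z) ↔ IsSquare z := by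
  constructor
  · rintro ⟨y, rfl⟩; exact ⟨y, pow_two y⟩
  · rintro ⟨r, rfl⟩; exact ⟨r, pow_two r⟩


end Helpers

open Helpers

theorem stmt_14 (p : ℕ) [Fact p.Prime] (hp8 : p % 8 = 1)
    (a b : ℤ) (ha4 : a % 4 = 3) (hb : 0 < b) (hab : (p : ℤ) = a ^ 2 + 4 * b ^ 2)
    (m : ℕ) (hm1 : 1 ≤ m) (hmp : m ≤ p - 1) :
    ∑ x ∈ Am p m, chi4 p ((x : ℤ) ^ 2 + m * x) = (-1 + a * leg p (m : ℤ)) / 2 := by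
  classical
  have hp2 : 2 ≤ p := (Fact.out : p.Prime).two_le
  have hp5 : 5 ≤ p := by
    rcases Nat.lt_or_ge p 5 with h | h
    · interval_cases p <;> omega
    · exact h
  -- the quartic character
  have hdvd4 : 4 ∣ Fintype.card (ZMod p) - 1 := by
    rw [ZMod.card]; omega
  obtain ⟨χ, hord⟩ := MulChar.exists_mulChar_orderOf (ZMod p) hdvd4 isPrimitiveRoot_II
  have hχne : χ ≠ 1 := by
    intro hcon; rw [hcon, orderOf_one] at hord; omega
  -- m is nonzero mod p
  set mF : ZMod p := (m : ZMod p) with hmF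
  have hmne : mF ≠ 0 := by
    rw [hmF]
    intro hcon
    have := (ZMod.natCast_eq_zero_iff m p).mp hcon
    have := Nat.le_of_dvd (by omega) this
    omega
  -- bridge for leg
  have leg_zero : ∀ x : ℤ, (x : ZMod p) = 0 → leg p x = 0 := by
    intro x hx; unfold leg; rw [if_pos hx]
  have leg_one_iff : ∀ x : ℤ, (x : ZMod p) ≠ 0 → (leg p x = 1 ↔ IsSquare ((x : ZMod p))) := by
    intro x hx
    unfold leg
    rw [if_neg hx]
    by_cases h : IsSquare ((x : ZMod p))
    · rw [if_pos ((exists_pow_two_iff _).mpr h)]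
      simp [h]
    · rw [if_neg (fun hc => h ((exists_pow_two_iff _).mp hc))]
      constructor
      · intro h1; norm_num at h1
      · intro h1; exact absurd h1 h
  -- epsilon
  set ε : ℤ := leg p (m : ℤ) with hε
  have hmcast : (((m : ℕ) : ℤ) : ZMod p) = mF := by push_cast; rfl
  have hεval : ε = 1 ∨ ε = -1 := by
    rw [hε]; unfold leg
    rw [if_neg (by rw [hmcast]; exact hmne)]
    split_ifs <;> simp
  have hεχ : ((ε : ℤ) : GaussianInt) = (χ mF) ^ 2 := by
    by_cases h : IsSquare mF
    · have h1 : ε = 1 := by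
        rw [hε]; rw [leg_one_iff _ (by rw [hmcast]; exact hmne), hmcast]; exact h
      rw [h1, (sq_eq_one_iff_isSquare hord hmne).mpr h]; simp
    · have h1 : ε = -1 := by
        rcases hεval with h1 | h1
        · exfalso
          apply h
          rw [← hmcast]
          exact (leg_one_iff _ (by rw [hmcast]; exact hmne)).mp (hε ▸ h1)
        · exact h1
      have h2 : (χ mF) ^ 2 = -1 := by
        have h4 := val_pow_four hord hmne
        have : ((χ mF) ^ 2) * ((χ mF) ^ 2) = 1 := by rw [← pow_add]; exact h4
        rcases mul_self_eq_one_iff.mp this with hh | hh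
        · exact absurd ((sq_eq_one_iff_isSquare hord hmne).mp hh) h
        · exact hh
      rw [h1, h2]; simp
  -- the sum function over ZMod p
  set G : ZMod p → ℤ := fun u =>
    if (IsSquare u ∧ u ≠ 0 ∧ IsSquare (u + mF) ∧ u + mF ≠ 0)
    then (if ∃ t : ZMod p, t ^ 4 = u * (u + mF) then 1 else -1) else 0 with hG
  -- step A : N = sum over ZMod p of G
  set N : ℤ := ∑ x ∈ Am p m, chi4 p ((x : ℤ) ^ 2 + m * x) with hN
  have hstepA : N = ∑ u : ZMod p, G u := by
    rw [hN, Am, Finset.sum_filter]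
    have hG0 : G 0 = 0 := by rw [hG]; simp
    rw [← Finset.sum_erase Finset.univ hG0]
    apply Finset.sum_nbij' (i := fun x : ℕ => ((x : ℕ) : ZMod p)) (j := fun u : ZMod p => u.val)
    · intro x hx
      simp only [Finset.mem_Icc] at hx
      simp only [Finset.mem_erase, Finset.mem_univ, and_true]
      intro hcon
      have := (ZMod.natCast_eq_zero_iff x p).mp hcon
      have := Nat.le_of_dvd (by omega) this
      omega
    · intro u hu
      simp only [Finset.mem_erase, Finset.mem_univ, and_true] at hu
      simp only [Finset.mem_Icc]
      constructor
      · have := (ZMod.val_eq_zero u).not.mpr hu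
        omega
      · have := ZMod.val_lt u
        omega
    · intro x hx
      simp only [Finset.mem_Icc] at hx
      exact ZMod.val_cast_of_lt (by omega)
    · intro u _
      exact ZMod.natCast_rightInverse u
    · intro x hx
      simp only [Finset.mem_Icc] at hx
      set u : ZMod p := ((x : ℕ) : ZMod p) with hu
      have hune : u ≠ 0 := by
        rw [hu]
        intro hcon
        have := (ZMod.natCast_eq_zero_iff x p).mp hcon
        have := Nat.le_of_dvd (by omega) this
        omega
      have hcx : (((x : ℤ) : ℤ) : ZMod p) = u := by push_cast; rfl
      have hcxm : ((((x : ℤ) + (m : ℤ)) : ℤ) : ZMod p) = u + mF := by push_cast; rfl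
      have hcarg : ((((x : ℤ) ^ 2 + (m : ℤ) * (x : ℤ)) : ℤ) : ZMod p) = u * (u + mF) := by
        push_cast; ring
      by_cases hum : u + mF = 0
      · have hlegm : leg p ((x : ℤ) + m) = 0 := leg_zero _ (by rw [hcxm, hum])
        rw [hG]
        rw [if_neg (fun hcon : leg p (x:ℤ) = 1 ∧ leg p ((x:ℤ) + (m:ℤ)) = 1 => by
              rw [hlegm] at hcon; exact absurd hcon.2 (by norm_num))]
        exact (if_neg (fun hcon : IsSquare u ∧ u ≠ 0 ∧ IsSquare (u + mF) ∧ u + mF ≠ 0 =>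
          hcon.2.2.2 hum)).symm
      · -- u ≠ 0, u + mF ≠ 0
        have hleg1 : leg p (x : ℤ) = 1 ↔ IsSquare u := by
          rw [leg_one_iff _ (by rw [hcx]; exact hune), hcx]
        have hleg2 : leg p ((x : ℤ) + m) = 1 ↔ IsSquare (u + mF) := by
          rw [leg_one_iff _ (by rw [hcxm]; exact hum), hcxm]
        rw [hG]
        by_cases hc : IsSquare u ∧ IsSquare (u + mF)
        · rw [if_pos ⟨hleg1.mpr hc.1, hleg2.mpr hc.2⟩]
          have hchi : chi4 p ((x : ℤ) ^ 2 + (m:ℤ) * (x:ℤ))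
              = if ∃ t : ZMod p, t ^ 4 = u * (u + mF) then 1 else -1 := by
            unfold chi4
            rw [hcarg]
            rw [if_neg (mul_ne_zero hune hum)]
            congr 1
          rw [hchi]
          exact (if_pos ⟨hc.1, hune, hc.2, hum⟩).symm
        · rw [if_neg (fun hcon => hc ⟨hleg1.mp hcon.1, hleg2.mp hcon.2⟩)]
          exact (if_neg (fun hcon : IsSquare u ∧ u ≠ 0 ∧ IsSquare (u + mF) ∧ u + mF ≠ 0 =>
            hc ⟨hcon.1, hcon.2.2.1⟩)).symm
  -- Step B: pointwise 4*G = expanded character sum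
  have hpt : ∀ u : ZMod p, (4 : GaussianInt) * ((G u : ℤ) : GaussianInt)
      = χ u * χ (u + mF) + (χ u)^3 * χ (u + mF) + χ u * (χ (u + mF))^3
        + (χ u)^3 * (χ (u + mF))^3 := by
    intro u
    by_cases hu0 : u = 0
    · have hG0 : G u = 0 := by rw [hG, hu0]; simp
      rw [hG0, hu0, MulChar.map_zero]; push_cast; ring
    · by_cases hum0 : u + mF = 0
      · have hG0 : G u = 0 := by
          rw [hG]; exact if_neg (fun hc => hc.2.2.2 hum0)
        rw [hG0, hum0, MulChar.map_zero]; push_cast; ring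
      · have hα4 : (χ u)^4 = 1 := val_pow_four hord hu0
        have hβ4 : (χ (u + mF))^4 = 1 := val_pow_four hord hum0
        by_cases hsu : IsSquare u
        · by_cases hsm : IsSquare (u + mF)
          · have hα2 : (χ u)^2 = 1 := (sq_eq_one_iff_isSquare hord hu0).mpr hsu
            have hβ2 : (χ (u + mF))^2 = 1 := (sq_eq_one_iff_isSquare hord hum0).mpr hsm
            have hGv : G u = if ∃ t : ZMod p, t^4 = u * (u + mF) then 1 else -1 := by
              rw [hG]; exact if_pos ⟨hsu, hu0, hsm, hum0⟩
            have hprod_ne : u * (u + mF) ≠ 0 := mul_ne_zero hu0 hum0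
            have hcast : ((G u : ℤ) : GaussianInt) = χ u * χ (u + mF) := by
              rw [hGv]
              by_cases h4 : ∃ t : ZMod p, t^4 = u * (u + mF)
              · rw [if_pos h4]
                have hμ : χ u * χ (u + mF) = 1 := by
                  rw [← map_mul]
                  exact (eq_one_iff_fourth_power hord hprod_ne).mpr h4
                rw [hμ]; simp
              · rw [if_neg h4]
                have hμ2 : (χ u * χ (u + mF)) * (χ u * χ (u + mF)) = 1 := by
                  have : (χ u * χ (u + mF)) * (χ u * χ (u + mF))
                      = (χ u)^2 * (χ (u + mF))^2 := by ring
                  rw [this, hα2, hβ2, one_mul]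
                have hμne : χ u * χ (u + mF) ≠ 1 := by
                  rw [← map_mul]
                  intro hcon
                  exact h4 ((eq_one_iff_fourth_power hord hprod_ne).mp hcon)
                rcases mul_self_eq_one_iff.mp hμ2 with h | h
                · exact absurd h hμne
                · rw [h]; simp
            rw [hcast]
            linear_combination (-(χ u * χ (u + mF)) - χ u * (χ (u + mF))^3) * hα2
              + (-(2:GaussianInt) * (χ u * χ (u + mF))) * hβ2
          · have hG0 : G u = 0 := by
              rw [hG]; exact if_neg (fun hc => hsm hc.2.2.1)
            have hβ2 : (χ (u + mF))^2 = -1 := by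
              have h1 : ((χ (u+mF))^2) * ((χ (u+mF))^2) = 1 := by rw [← pow_add]; exact hβ4
              rcases mul_self_eq_one_iff.mp h1 with h | h
              · exact absurd ((sq_eq_one_iff_isSquare hord hum0).mp h) hsm
              · exact h
            rw [hG0]; push_cast
            linear_combination (-(χ u * χ (u + mF)) - (χ u)^3 * χ (u + mF)) * hβ2
        · have hG0 : G u = 0 := by
            rw [hG]; exact if_neg (fun hc => hsu hc.1)
          have hα2 : (χ u)^2 = -1 := by
            have h1 : ((χ u)^2) * ((χ u)^2) = 1 := by rw [← pow_add]; exact hα4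
            rcases mul_self_eq_one_iff.mp h1 with h | h
            · exact absurd ((sq_eq_one_iff_isSquare hord hu0).mp h) hsu
            · exact h
          rw [hG0]; push_cast
          linear_combination (-(χ u * χ (u + mF)) - χ u * (χ (u + mF))^3) * hα2
  -- the four sums
  set J : GaussianInt := jacobiSum χ χ with hJ
  have hT1 : ∑ u : ZMod p, χ u * χ (u + mF) = (χ mF)^2 * J := by
    calc ∑ u : ZMod p, χ u * χ (u + mF) = ∑ u : ZMod p, χ (u * (u + mF)) := by
          exact Finset.sum_congr rfl (fun u _ => (map_mul χ u (u + mF)).symm)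
      _ = χ (-1) * (χ mF)^2 * jacobiSum χ χ := sum_quad χ hmne
      _ = (χ mF)^2 * J := by rw [chi_neg_one hp8 hord, one_mul, hJ]
  have hT2 : ∑ u : ZMod p, (χ u)^3 * χ (u + mF) = -1 :=
    sum_cube_mix χ hχne (fun {x} hx => val_pow_four hord hx) hmne
  have hT3 : ∑ u : ZMod p, χ u * (χ (u + mF))^3 = -1 :=
    sum_mix_cube χ hχne (fun {x} hx => val_pow_four hord hx) hmne
  have hT4 : ∑ u : ZMod p, (χ u)^3 * (χ (u + mF))^3 = (χ mF)^2 * star J := by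
    have hξa : ∀ y : ZMod p, (χ^3) y = (χ y)^3 :=
      fun y => MulChar.pow_apply' χ (by norm_num) y
    have hstep : ∑ u : ZMod p, (χ u)^3 * (χ (u + mF))^3
        = (χ^3) (-1) * ((χ^3) mF)^2 * jacobiSum (χ^3) (χ^3) := by
      rw [← sum_quad (χ^3) hmne]
      exact Finset.sum_congr rfl (fun u _ => by rw [map_mul, hξa, hξa])
    rw [hstep, hξa, hξa, chi_neg_one hp8 hord, one_pow, one_mul]
    have h1 : ((χ mF)^3)^2 = (χ mF)^2 := by
      have h4 := val_pow_four hord hmne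
      calc ((χ mF)^3)^2 = ((χ mF)^4) * (χ mF)^2 := by ring
        _ = (χ mF)^2 := by rw [h4, one_mul]
    rw [h1]
    congr 1
    rw [← star_char_eq_cube hord]
    have : star χ = χ.ringHomComp (starRingEnd GaussianInt) := rfl
    rw [this, jacobiSum_ringHomComp, hJ]
    rfl
  -- combine
  have hsum4 : (4 : GaussianInt) * ((N : ℤ) : GaussianInt) = (χ mF)^2 * (J + star J) - 2 := by
    have hNc : ((N : ℤ) : GaussianInt) = ∑ u : ZMod p, ((G u : ℤ) : GaussianInt) := by
      rw [hstepA]; push_cast; rfl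
    calc (4 : GaussianInt) * ((N : ℤ) : GaussianInt)
        = ∑ u : ZMod p, (4 : GaussianInt) * ((G u : ℤ) : GaussianInt) := by
          rw [hNc, Finset.mul_sum]
      _ = ∑ u : ZMod p, (χ u * χ (u + mF) + (χ u)^3 * χ (u + mF) + χ u * (χ (u + mF))^3
            + (χ u)^3 * (χ (u + mF))^3) := Finset.sum_congr rfl (fun u _ => hpt u)
      _ = (∑ u : ZMod p, χ u * χ (u + mF)) + (∑ u : ZMod p, (χ u)^3 * χ (u + mF))
            + (∑ u : ZMod p, χ u * (χ (u + mF))^3)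
            + (∑ u : ZMod p, (χ u)^3 * (χ (u + mF))^3) := by
          rw [← Finset.sum_add_distrib, ← Finset.sum_add_distrib, ← Finset.sum_add_distrib]
      _ = (χ mF)^2 * (J + star J) - 2 := by
          rw [hT1, hT2, hT3, hT4]; ring
  set A : ℤ := J.re with hA
  set B : ℤ := J.im with hB
  have hJstar : J + star J = ((2 * A : ℤ) : GaussianInt) := by
    ext <;> simp [hA] <;> ring
  have h2N : 2 * N = A * ε - 1 := by
    have hc : ((4 * N : ℤ) : GaussianInt) = ((2 * (A * ε) - 2 : ℤ) : GaussianInt) := by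
      push_cast
      rw [show ((4:GaussianInt) * (N : GaussianInt)) = (4 : GaussianInt) * ((N : ℤ) : GaussianInt) by push_cast; ring]
      rw [hsum4, hJstar, ← hεχ]
      push_cast
      ring
    have := Int.cast_injective (α := GaussianInt) hc
    omega
  -- properties of A
  have hnorm : A * A + B * B = (p : ℤ) := by
    have h := jacobi_norm (χ := χ) hord
    rw [Zsqrtd.norm_def] at h
    rw [hA, hB]
    linarith
  obtain ⟨w, hw⟩ := jacobi_decomp (χ := χ) hp8 hord
  have hre : A = (p : ℤ) - 2 + (2 * w.re - 2 * w.im) := by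
    have h := congrArg Zsqrtd.re hw
    simp [Zsqrtd.re_mul] at h
    rw [hA, h]; ring
  have him : B = 2 * w.re + 2 * w.im := by
    have h := congrArg Zsqrtd.im hw
    simp [Zsqrtd.im_mul] at h
    rw [hB, h]; ring
  obtain ⟨k, hk⟩ : ∃ k : ℤ, (p : ℤ) = 8 * k + 1 := ⟨((p : ℤ) - 1) / 8, by omega⟩
  obtain ⟨t, ht⟩ : ∃ t : ℤ, A = 2 * t + 1 := ⟨(A - 1) / 2, by omega⟩
  obtain ⟨v, hv⟩ : ∃ v : ℤ, t * (t + 1) = v + v := Int.even_mul_succ_self t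
  have hAA : A * A = 8 * v + 1 := by
    calc A * A = 4 * (t * (t + 1)) + 1 := by rw [ht]; ring
      _ = 8 * v + 1 := by rw [hv]; ring
  set c : ℤ := w.re + w.im with hcdef
  have hB2 : B = 2 * c := by rw [him, hcdef]; ring
  have h4c : 4 * (c * c) = 8 * (k - v) := by
    linear_combination hnorm - (B + 2 * c) * hB2 - hAA + hk
  have hcc2 : c * c = 2 * (k - v) := by linarith
  have hceven : Even c := by
    have : Even (c * c) := ⟨k - v, by linarith⟩
    rcases Int.even_mul.mp this with h | h <;> exact h
  obtain ⟨d, hd⟩ := hceven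
  have hA4 : A % 4 = 3 := by omega
  have hAa : A = a := two_sq_unique Fact.out hnorm hab hA4 ha4
  -- finish
  rw [hAa] at h2N
  have hfin : -1 + a * ε = 2 * N := by linarith
  rw [hfin, Int.mul_ediv_cancel_left N two_ne_zero]
end

section
/- Let p ≡ 1 (mod 8) be a prime. Then A_p² ≡ (−1)^{(p+7)/8} (mod p) and B_p² ≡ (−1)^{(p−1)/8} (mod p). -/
open Finset
open scoped Classical

/-- `A_p = ∏_{t ∈ Ω_1} t` where `Ω_1 = {0 < x < p/2 : x^{(p-1)/4} ≡ 1 (mod p)}`. -/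
noncomputable def Ap (p : ℕ) : ZMod p :=
  ∏ t ∈ (Finset.Ioo 0 p).filter
      (fun x => 2 * x < p ∧ (x : ZMod p) ^ ((p - 1) / 4) = 1), (t : ZMod p)

/-- `B_p = ∏_{t ∈ Ω_{-1}} t` where `Ω_{-1} = {0 < x < p/2 : x^{(p-1)/4} ≡ -1 (mod p)}`. -/
noncomputable def Bp (p : ℕ) : ZMod p :=
  ∏ t ∈ (Finset.Ioo 0 p).filter
      (fun x => 2 * x < p ∧ (x : ZMod p) ^ ((p - 1) / 4) = -1), (t : ZMod p)

section Aux

variable {p : ℕ} [hp : Fact p.Prime]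

private lemma exists_primRoot (n : ℕ) (hn : 0 < n) (hd : n ∣ p - 1) :
    ∃ ζ : ZMod p, IsPrimitiveRoot ζ n := by
  obtain ⟨u, hu⟩ := IsCyclic.exists_generator (α := (ZMod p)ˣ)
  have hord : orderOf u = p - 1 := by
    rw [orderOf_eq_card_of_forall_mem_zpowers hu, Nat.card_eq_fintype_card, ZMod.card_units]
  have hcard : 0 < p - 1 := Nat.sub_pos_of_lt hp.out.one_lt
  have h1 : orderOf (((u ^ ((p - 1) / n) : (ZMod p)ˣ)) : ZMod p) = n := by
    rw [orderOf_units, orderOf_pow, hord,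
      Nat.gcd_eq_right (Nat.div_dvd_of_dvd hd), Nat.div_div_self hd hcard.ne']
  exact ⟨_, h1 ▸ IsPrimitiveRoot.orderOf _⟩

private lemma card_pow_eq_one (n : ℕ) (hn : 0 < n) (hd : n ∣ p - 1) :
    (univ.filter fun y : ZMod p => y ^ n = 1).card = n := by
  obtain ⟨ζ, hζ⟩ := exists_primRoot n hn hd
  have h : (univ.filter fun y : ZMod p => y ^ n = 1)
      = Polynomial.nthRootsFinset n (1 : ZMod p) := by
    ext y; simp [Polynomial.mem_nthRootsFinset hn]
  rw [h, hζ.card_nthRootsFinset]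

private lemma card_pow_eq_neg_one (hp8 : p % 8 = 1) :
    (univ.filter fun y : ZMod p => y ^ ((p - 1) / 4) = -1).card = (p - 1) / 4 := by
  have hp2 := hp.out.two_le
  set n := (p - 1) / 4 with hn
  haveI : Fact (2 < p) := ⟨by omega⟩
  have hne : (-1 : ZMod p) ≠ 1 := ZMod.neg_one_ne_one
  have hd1 : n ∣ p - 1 := ⟨4, by omega⟩
  have hd2 : 2 * n ∣ p - 1 := ⟨2, by omega⟩
  have hsplit : (univ.filter fun y : ZMod p => y ^ (2 * n) = 1)
      = (univ.filter fun y : ZMod p => y ^ n = 1)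
        ∪ (univ.filter fun y : ZMod p => y ^ n = -1) := by
    ext y
    simp only [mem_filter, mem_union, mem_univ, true_and]
    rw [mul_comm, pow_mul]
    exact sq_eq_one_iff
  have hdisj : Disjoint (univ.filter fun y : ZMod p => y ^ n = 1)
      (univ.filter fun y : ZMod p => y ^ n = -1) := by
    rw [Finset.disjoint_left]
    intro a ha hb
    simp only [mem_filter, mem_univ, true_and] at ha hb
    exact hne (hb ▸ ha)
  have h1 := card_pow_eq_one (p := p) n (by omega) hd1
  have h2 := card_pow_eq_one (p := p) (2 * n) (by omega) hd2
  rw [hsplit, Finset.card_union_of_disjoint hdisj, h1] at h2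
  omega

private lemma zmod_pow_ne_zero {e : ℕ} (he0 : 0 < e) {a c : ZMod p} (hc : c ≠ 0)
    (ha : a ^ e = c) : a ≠ 0 := by
  rintro rfl
  exact hc (by rw [← ha, zero_pow he0.ne'])

private lemma prod_pow_one (hp8 : p % 8 = 1) :
    ∏ y ∈ univ.filter (fun y : ZMod p => y ^ ((p - 1) / 4) = 1), y = -1 := by
  have hp2 := hp.out.two_le
  set e := (p - 1) / 4 with he
  haveI : Fact (2 < p) := ⟨by omega⟩
  have hne : (-1 : ZMod p) ≠ 1 := ZMod.neg_one_ne_one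
  have hee : Even e := by rw [Nat.even_iff]; omega
  have he0 : 0 < e := by omega
  have hm : (-1 : ZMod p) ∈ univ.filter (fun y : ZMod p => y ^ e = 1) := by
    simp [hee.neg_pow]
  rw [← Finset.mul_prod_erase _ _ hm]
  have h1 : ∏ y ∈ (univ.filter (fun y : ZMod p => y ^ e = 1)).erase (-1), y = 1 := by
    refine Finset.prod_involution (fun a _ => a⁻¹) ?_ ?_ ?_ ?_
    · intro a ha
      have := Finset.mem_of_mem_erase ha
      simp only [mem_filter, mem_univ, true_and] at this
      exact mul_inv_cancel₀ (zmod_pow_ne_zero he0 one_ne_zero this)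
    · intro a ha h1a hinv
      have hmem := ha
      simp only [Finset.mem_erase, mem_filter, mem_univ, true_and] at hmem
      have ha0 : a ≠ 0 := zmod_pow_ne_zero he0 one_ne_zero hmem.2
      have : a ^ 2 = 1 := by
        rw [sq]; nth_rw 2 [← hinv]; exact mul_inv_cancel₀ ha0
      rcases sq_eq_one_iff.mp this with h | h
      · exact h1a h
      · exact hmem.1 h
    · intro a ha
      have hmem := ha
      simp only [Finset.mem_erase, mem_filter, mem_univ, true_and] at hmem ⊢
      refine ⟨fun h => hmem.1 ?_, by rw [inv_pow, hmem.2, inv_one]⟩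
      rw [← inv_inv a, h, inv_neg, inv_one]
    · intro a _; exact inv_inv a
  rw [h1, mul_one]

private lemma prod_pow_neg_one (hp8 : p % 8 = 1) :
    ∏ y ∈ univ.filter (fun y : ZMod p => y ^ ((p - 1) / 4) = -1), y = 1 := by
  have hp2 := hp.out.two_le
  set e := (p - 1) / 4 with he
  haveI : Fact (2 < p) := ⟨by omega⟩
  have hne : (-1 : ZMod p) ≠ 1 := ZMod.neg_one_ne_one
  have hee : Even e := by rw [Nat.even_iff]; omega
  have he0 : 0 < e := by omega
  have hc : (-1 : ZMod p) ≠ 0 := by simp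
  refine Finset.prod_involution (fun a _ => a⁻¹) ?_ ?_ ?_ ?_
  · intro a ha
    simp only [mem_filter, mem_univ, true_and] at ha
    exact mul_inv_cancel₀ (zmod_pow_ne_zero he0 hc ha)
  · intro a ha _ hinv
    simp only [mem_filter, mem_univ, true_and] at ha
    have ha0 : a ≠ 0 := zmod_pow_ne_zero he0 hc ha
    have h2 : a ^ 2 = 1 := by
      rw [sq]; nth_rw 2 [← hinv]; exact mul_inv_cancel₀ ha0
    rcases sq_eq_one_iff.mp h2 with h | h <;> subst h
    · rw [one_pow] at ha; exact hne ha.symm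
    · rw [hee.neg_pow, one_pow] at ha; exact hne ha.symm
  · intro a ha
    simp only [mem_filter, mem_univ, true_and] at ha ⊢
    rw [inv_pow, ha, inv_neg, inv_one]
  · intro a _; exact inv_inv a

private lemma half (hpodd : p % 2 = 1) {e : ℕ} (hee : Even e) (he0 : 0 < e)
    (c : ZMod p) (hc : c ≠ 0) :
    (∏ t ∈ (Finset.Ioo 0 p).filter
        (fun x => 2 * x < p ∧ (x : ZMod p) ^ e = c), (t : ZMod p)) ^ 2
      * (-1) ^ ((Finset.Ioo 0 p).filter
        (fun x => 2 * x < p ∧ (x : ZMod p) ^ e = c)).card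
      = ∏ y ∈ univ.filter (fun y : ZMod p => y ^ e = c), y
    ∧ 2 * ((Finset.Ioo 0 p).filter
        (fun x => 2 * x < p ∧ (x : ZMod p) ^ e = c)).card
      = (univ.filter (fun y : ZMod p => y ^ e = c)).card := by
  haveI : NeZero p := ⟨hp.out.pos.ne'⟩
  set Ω := (Finset.Ioo 0 p).filter (fun x => 2 * x < p ∧ (x : ZMod p) ^ e = c) with hΩ
  set S : Finset ℕ := (Finset.Ioo 0 p).filter (fun x : ℕ => (x : ZMod p) ^ e = c) with hS
  set F := univ.filter (fun y : ZMod p => y ^ e = c) with hF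
  have hcast : ∀ x, x < p → ((p - x : ℕ) : ZMod p) = -(x : ZMod p) := by
    intro x hx
    rw [Nat.cast_sub hx.le, ZMod.natCast_self, zero_sub]
  have himg : S = Ω ∪ Ω.image (fun t => p - t) := by
    ext x
    simp only [hS, hΩ, mem_filter, mem_union, Finset.mem_image, Finset.mem_Ioo]
    constructor
    · rintro ⟨⟨hx0, hxp⟩, hxe⟩
      by_cases h2x : 2 * x < p
      · exact Or.inl ⟨⟨hx0, hxp⟩, h2x, hxe⟩
      · refine Or.inr ⟨p - x, ⟨⟨⟨by omega, by omega⟩, by omega, ?_⟩, by omega⟩⟩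
        rw [hcast x hxp, hee.neg_pow, hxe]
    · rintro (⟨hx, h2x, hxe⟩ | ⟨t, ⟨⟨⟨ht0, htp⟩, h2t, hte⟩, rfl⟩⟩)
      · exact ⟨hx, hxe⟩
      · refine ⟨⟨by omega, by omega⟩, ?_⟩
        rw [hcast t htp, hee.neg_pow, hte]
  have hdisj : Disjoint Ω (Ω.image (fun t => p - t)) := by
    rw [Finset.disjoint_left]
    rintro x hx hmem
    simp only [Finset.mem_image, hΩ, mem_filter, Finset.mem_Ioo] at hx hmem
    obtain ⟨t, ⟨⟨⟨ht0, htp⟩, h2t, _⟩, rfl⟩⟩ := hmem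
    omega
  have hinjΩ : ∀ x ∈ Ω, ∀ y ∈ Ω, p - x = p - y → x = y := by
    intro x hx y hy hxy
    simp only [hΩ, mem_filter, Finset.mem_Ioo] at hx hy
    omega
  have hprodimg : ∏ x ∈ Ω.image (fun t => p - t), (x : ZMod p)
      = (-1) ^ Ω.card * ∏ t ∈ Ω, (t : ZMod p) := by
    rw [Finset.prod_image hinjΩ]
    have : ∀ t ∈ Ω, ((p - t : ℕ) : ZMod p) = -1 * (t : ZMod p) := by
      intro t ht
      simp only [hΩ, mem_filter, Finset.mem_Ioo] at ht
      rw [hcast t ht.1.2, neg_one_mul]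
    rw [Finset.prod_congr rfl this, Finset.prod_mul_distrib, Finset.prod_const]
  have hprodS : ∏ x ∈ S, (x : ZMod p)
      = (∏ t ∈ Ω, (t : ZMod p)) ^ 2 * (-1) ^ Ω.card := by
    rw [himg, Finset.prod_union hdisj, hprodimg]; ring
  have hcardS : S.card = 2 * Ω.card := by
    rw [himg, Finset.card_union_of_disjoint hdisj, Finset.card_image_of_injOn]
    · omega
    · intro x hx y hy hxy
      exact hinjΩ x hx y hy hxy
  -- transfer S to F via the cast bijection
  have hmaps : ∀ x ∈ S, (x : ZMod p) ∈ F := by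
    intro x hx
    simp only [hS, mem_filter, Finset.mem_Ioo] at hx
    simp only [hF, mem_filter, mem_univ, true_and]
    exact hx.2
  have hinj : Set.InjOn (fun x : ℕ => (x : ZMod p)) S := by
    intro x hx y hy hxy
    simp only [hS, Finset.coe_filter, Set.mem_setOf_eq, Finset.mem_Ioo] at hx hy
    have := congrArg ZMod.val hxy
    rwa [ZMod.val_cast_of_lt hx.1.2, ZMod.val_cast_of_lt hy.1.2] at this
  have hsurj : Set.SurjOn (fun x : ℕ => (x : ZMod p)) S F := by
    intro y hy
    simp only [hF, Finset.coe_filter, Set.mem_setOf_eq, mem_univ, true_and] at hy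
    have hy0 : y ≠ 0 := zmod_pow_ne_zero he0 hc hy
    have hval : ((y.val : ℕ) : ZMod p) = y := ZMod.natCast_rightInverse y
    refine ⟨y.val, ?_, hval⟩
    simp only [hS, Finset.coe_filter, Set.mem_setOf_eq, Finset.mem_Ioo]
    refine ⟨⟨?_, ZMod.val_lt y⟩, by rw [hval]; exact hy⟩
    exact Nat.pos_of_ne_zero fun h => hy0 (by rwa [ZMod.val_eq_zero] at h)
  have hSF_prod : ∏ x ∈ S, (x : ZMod p) = ∏ y ∈ F, y :=
    Finset.prod_nbij (fun x : ℕ => (x : ZMod p)) hmaps hinj hsurj (fun _ _ => rfl)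
  have hSF_card : S.card = F.card :=
    Finset.card_nbij (fun x : ℕ => (x : ZMod p)) hmaps hinj hsurj
  constructor
  · rw [← hSF_prod, hprodS]
  · rw [← hSF_card, hcardS]

end Aux

theorem stmt_17 (p : ℕ) [Fact p.Prime] (hp8 : p % 8 = 1) :
    Ap p ^ 2 = (-1 : ZMod p) ^ ((p + 7) / 8) ∧
    Bp p ^ 2 = (-1 : ZMod p) ^ ((p - 1) / 8) := by
  have hp2 := (Fact.out : p.Prime).two_le
  have hpodd : p % 2 = 1 := by omega
  set e := (p - 1) / 4 with he
  have hee : Even e := by rw [Nat.even_iff]; omega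
  have he0 : 0 < e := by omega
  have hc1 : (1 : ZMod p) ≠ 0 := one_ne_zero
  have hcneg : (-1 : ZMod p) ≠ 0 := by simp
  obtain ⟨hA, hAcard⟩ := half (p := p) hpodd hee he0 1 hc1
  obtain ⟨hB, hBcard⟩ := half (p := p) hpodd hee he0 (-1) hcneg
  rw [prod_pow_one hp8] at hA
  rw [prod_pow_neg_one hp8] at hB
  rw [card_pow_eq_one (p := p) e he0 ⟨4, by omega⟩] at hAcard
  rw [card_pow_eq_neg_one hp8] at hBcard
  set kA := ((Finset.Ioo 0 p).filter
      (fun x => 2 * x < p ∧ (x : ZMod p) ^ e = 1)).card with hkA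
  set kB := ((Finset.Ioo 0 p).filter
      (fun x => 2 * x < p ∧ (x : ZMod p) ^ e = (-1))).card with hkB
  have hApow : Ap p ^ 2 * (-1 : ZMod p) ^ kA = -1 := hA
  have hBpow : Bp p ^ 2 * (-1 : ZMod p) ^ kB = 1 := hB
  have hsq : ∀ k : ℕ, ((-1 : ZMod p) ^ k) * ((-1 : ZMod p) ^ k) = 1 := by
    intro k; rw [← pow_add, ← two_mul, pow_mul]; simp
  have hApow2 : Ap p ^ 2 = -1 * (-1 : ZMod p) ^ kA := by
    calc Ap p ^ 2 = Ap p ^ 2 * ((-1 : ZMod p) ^ kA * (-1 : ZMod p) ^ kA) := by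
          rw [hsq, mul_one]
      _ = (Ap p ^ 2 * (-1 : ZMod p) ^ kA) * (-1 : ZMod p) ^ kA := by ring
      _ = -1 * (-1 : ZMod p) ^ kA := by rw [hApow]
  have hBpow2 : Bp p ^ 2 = (-1 : ZMod p) ^ kB := by
    calc Bp p ^ 2 = Bp p ^ 2 * ((-1 : ZMod p) ^ kB * (-1 : ZMod p) ^ kB) := by
          rw [hsq, mul_one]
      _ = (Bp p ^ 2 * (-1 : ZMod p) ^ kB) * (-1 : ZMod p) ^ kB := by ring
      _ = (-1 : ZMod p) ^ kB := by rw [hBpow, one_mul]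
  have hkAval : kA = (p - 1) / 8 := by omega
  have hkBval : kB = (p - 1) / 8 := by omega
  have hexp : (p + 7) / 8 = (p - 1) / 8 + 1 := by omega
  constructor
  · rw [hApow2, hkAval, hexp, pow_succ]; ring
  · rw [hBpow2, hkBval]
end
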